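/- arXiv:2412.06518 — 7 statements merged into one kernel-verified Lean document; each statement's English description precedes it below -/
import Mathlib

section
/- Let (G, c, 𝒫) be a Steiner Forest instance whose demand graph has exactly one connected component with at least two vertices, and let R be the vertex set of this component. Fix r₀ ∈ R. Then the infimum of c(x) over feasible solutions (x,z) to Forest-BCR supported on G equals the infimum of c(x̃) over feasible solutions x̃ to Tree-BCR for the Steiner Tree instance (G, c, R) with root r₀. -/
open Finset

noncomputable section

variable {V : Type*}

/-- The set of terminals: vertices occurring in some pair of `P`. -/
def terminals [Fintype V] [DecidableEq V] (P : Finset (Finset V)) : Finset V :=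
  Finset.univ.filter fun v => ∃ p ∈ P, v ∈ p

/-- Feasibility for the Forest-BCR linear program: `x r u v` is the value of the
variable `x^r_{(u,v)}` and `z r p` is the value of `z^r_P`. -/
def ForestBCRFeasible [Fintype V] [DecidableEq V] (P : Finset (Finset V))
    (x : V → V → V → ℝ) (z : V → Finset V → ℝ) : Prop :=
  (∀ r u v : V, u ≠ v → 0 ≤ x r u v) ∧
  (∀ r : V, ∀ p ∈ P, 0 ≤ z r p) ∧
  (∀ p ∈ P, ∑ r : V, z r p = 1) ∧
  (∀ r : V, ∀ p ∈ P, ∀ U : Finset V, r ∉ U → (p ∩ U).Nonempty →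
    z r p ≤ ∑ u ∈ U, ∑ v ∈ Uᶜ, x r u v)

/-- The cost `c(x)` of a Forest-BCR solution. -/
def bcrCost [Fintype V] [DecidableEq V] (c : V → V → ℝ) (x : V → V → V → ℝ) : ℝ :=
  ∑ r : V, ∑ u : V, ∑ v ∈ Finset.univ.erase u, c u v * x r u v

/-- Half-integrality of a Forest-BCR solution. -/
def HalfIntegralSol [Fintype V] [DecidableEq V] (P : Finset (Finset V))
    (x : V → V → V → ℝ) (z : V → Finset V → ℝ) : Prop :=
  (∀ r u v : V, u ≠ v → ∃ n : ℤ, x r u v = n / 2) ∧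
  (∀ r : V, ∀ p ∈ P, ∃ n : ℤ, z r p = n / 2)

/-- The solution `x` is supported on the graph `G`. -/
def SupportedOn (G : SimpleGraph V) (x : V → V → V → ℝ) : Prop :=
  ∀ r u v : V, u ≠ v → ¬ G.Adj u v → x r u v = 0

/-- The demand graph of a collection of pairs: `u` and `v` are adjacent iff `{u,v} ∈ P`. -/
def demandGraph [DecidableEq V] (P : Finset (Finset V)) : SimpleGraph V where
  Adj u v := u ≠ v ∧ ({u, v} : Finset V) ∈ P
  symm := by
    constructor
    intro u v h
    exact ⟨h.1.symm, by rw [Finset.pair_comm]; exact h.2⟩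
  loopless := ⟨fun u h => h.1 rfl⟩

namespace SFaux

variable {V : Type*} [Fintype V] [DecidableEq V]

def cutv (y : V → V → ℝ) (U : Finset V) : ℝ := ∑ u ∈ U, ∑ v ∈ Uᶜ, y u v

def excess (f : V → V → ℝ) (w : V) : ℝ := (∑ v, f v w) - (∑ v, f w v)

/-- residual relation -/
def Rel (y f : V → V → ℝ) (a b : V) : Prop := a ≠ b ∧ (f a b < y a b ∨ 0 < f b a)

/-- indicator of a single arc -/
def ind (p q : V) : V → V → ℝ := fun u v => if u = p ∧ v = q then 1 else 0

set_option linter.unusedSectionVars false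

lemma cutv_nonneg {y : V → V → ℝ} (hy : ∀ u v, u ≠ v → 0 ≤ y u v) (U : Finset V) :
    0 ≤ cutv y U := by
  refine Finset.sum_nonneg fun u hu => Finset.sum_nonneg fun v hv => ?_
  exact hy u v (by rintro rfl; simp at hv; exact hv hu)

lemma cutv_add (y f : V → V → ℝ) (U : Finset V) :
    cutv (fun u v => y u v + f u v) U = cutv y U + cutv f U := by
  simp [cutv, Finset.sum_add_distrib]

lemma cutv_sub (y f : V → V → ℝ) (U : Finset V) :
    cutv (fun u v => y u v - f u v) U = cutv y U - cutv f U := by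
  simp [cutv, Finset.sum_sub_distrib]

lemma cutv_rev (f : V → V → ℝ) (U : Finset V) :
    cutv (fun u v => f v u) U = cutv f Uᶜ := by
  rw [cutv, cutv, Finset.sum_comm, compl_compl]

lemma sum_excess (f : V → V → ℝ) (U : Finset V) :
    ∑ w ∈ U, excess f w = cutv f Uᶜ - cutv f U := by
  have h1 : ∀ w, (∑ v, f v w) = ∑ v ∈ U, f v w + ∑ v ∈ Uᶜ, f v w := by
    intro w; rw [Finset.sum_add_sum_compl]
  have h2 : ∀ w, (∑ v, f w v) = ∑ v ∈ U, f w v + ∑ v ∈ Uᶜ, f w v := by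
    intro w; rw [Finset.sum_add_sum_compl]
  have hin : ∑ w ∈ U, ∑ v ∈ Uᶜ, f v w = cutv f Uᶜ := by
    rw [cutv, Finset.sum_comm, compl_compl]
  have hint : ∑ w ∈ U, ∑ v ∈ U, f v w = ∑ w ∈ U, ∑ v ∈ U, f w v := Finset.sum_comm
  calc ∑ w ∈ U, excess f w
      = ∑ w ∈ U, ((∑ v ∈ U, f v w + ∑ v ∈ Uᶜ, f v w) - (∑ v ∈ U, f w v + ∑ v ∈ Uᶜ, f w v)) := by
        simp only [excess]
        exact Finset.sum_congr rfl fun w _ => by rw [h1 w, h2 w]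
    _ = (∑ w ∈ U, ∑ v ∈ U, f v w) + (∑ w ∈ U, ∑ v ∈ Uᶜ, f v w)
        - ((∑ w ∈ U, ∑ v ∈ U, f w v) + (∑ w ∈ U, ∑ v ∈ Uᶜ, f w v)) := by
        rw [← Finset.sum_add_distrib, ← Finset.sum_add_distrib, ← Finset.sum_sub_distrib]
    _ = cutv f Uᶜ - cutv f U := by rw [hin, hint]; simp only [cutv]; ring

lemma excess_total (f : V → V → ℝ) : ∑ w : V, excess f w = 0 := by
  have := sum_excess f (Finset.univ : Finset V)
  simpa [cutv] using this



lemma excess_combine (f g : V → V → ℝ) (t : ℝ) (w : V) :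
    excess (fun u w => f u w + t * (g u w - f u w)) w
      = excess f w + t * (excess g w - excess f w) := by
  simp only [excess, mul_sub, Finset.sum_add_distrib, Finset.mul_sum, Finset.sum_sub_distrib]
  ring

lemma excess_add (f g : V → V → ℝ) (w : V) :
    excess (fun u v => f u v + g u v) w = excess f w + excess g w := by
  simp only [excess, Finset.sum_add_distrib]; ring

lemma excess_smul (t : ℝ) (f : V → V → ℝ) (w : V) :
    excess (fun u v => t * f u v) w = t * excess f w := by
  simp only [excess, ← Finset.mul_sum]; ring

lemma excess_ind (p q w : V) :
    excess (ind p q) w = (if w = q then 1 else 0) - (if w = p then 1 else 0) := by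
  have h1 : (∑ v, ind p q v w) = if w = q then (1:ℝ) else 0 := by
    by_cases hw : w = q <;> simp [ind, hw, Finset.sum_ite_eq']
  have h2 : (∑ v, ind p q w v) = if w = p then (1:ℝ) else 0 := by
    by_cases hw : w = p <;> simp [ind, hw, Finset.sum_ite_eq]
  rw [excess, h1, h2]

set_option linter.unusedSectionVars false

lemma aug_step (y f : V → V → ℝ) (hy : ∀ u w, 0 ≤ y u w)
    (hf0 : ∀ u w, 0 ≤ f u w) (hfy : ∀ u w, f u w ≤ y u w)
    (p q : V) (h : Rel y f p q) :
    ∃ ε : ℝ, 0 < ε ∧ ∃ g : V → V → ℝ,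
      (∀ u w, 0 ≤ g u w) ∧ (∀ u w, g u w ≤ y u w) ∧
      (∀ u w, g u w ≠ f u w → (u = p ∧ w = q) ∨ (u = q ∧ w = p)) ∧
      (∀ w, excess g w = excess f w
        + ε * ((if w = q then 1 else 0) - (if w = p then 1 else 0))) := by
  rcases h with ⟨hpq, hcase | hcase⟩
  · refine ⟨y p q - f p q, by linarith, fun u v => f u v + (y p q - f p q) * ind p q u v,
      ?_, ?_, ?_, ?_⟩
    · intro u w
      dsimp only
      have h2 : (0:ℝ) ≤ (y p q - f p q) * ind p q u w :=
        mul_nonneg (by linarith) (by unfold ind; split_ifs <;> norm_num)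
      have h3 := hf0 u w; linarith
    · intro u w
      dsimp only
      by_cases huw : u = p ∧ w = q
      · obtain ⟨rfl, rfl⟩ := huw
        simp only [ind]
        norm_num
      · simp only [ind, if_neg huw, mul_zero, add_zero]
        exact hfy u w
    · intro u w hne
      by_cases huw : u = p ∧ w = q
      · exact Or.inl huw
      · exfalso; apply hne; dsimp only; simp [ind, if_neg huw]
    · intro w
      rw [show (fun u v => f u v + (y p q - f p q) * ind p q u v)
            = (fun u v => f u v + ((y p q - f p q) * ind p q u v)) from rfl]
      rw [excess_add f (fun u v => (y p q - f p q) * ind p q u v) w,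
        excess_smul (y p q - f p q) (ind p q) w, excess_ind p q w]
  · refine ⟨f q p, hcase, fun u v => f u v + (-(f q p)) * ind q p u v, ?_, ?_, ?_, ?_⟩
    · intro u w
      dsimp only
      by_cases huw : u = q ∧ w = p
      · obtain ⟨rfl, rfl⟩ := huw
        simp only [ind]
        norm_num
      · simp only [ind, if_neg huw, mul_zero, add_zero]
        exact hf0 u w
    · intro u w
      dsimp only
      have h1 : (-(f q p)) * ind q p u w ≤ 0 :=
        mul_nonpos_of_nonpos_of_nonneg (by linarith) (by unfold ind; split_ifs <;> norm_num)
      have h2 := hfy u w; linarith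
    · intro u w hne
      by_cases huw : u = q ∧ w = p
      · exact Or.inr huw
      · exfalso; apply hne; dsimp only; simp [ind, if_neg huw]
    · intro w
      rw [excess_add f (fun u v => (-(f q p)) * ind q p u v) w,
        excess_smul (-(f q p)) (ind q p) w, excess_ind q p w]
      ring

/-- rescaling an augmentation to a smaller ε -/
lemma aug_rescale (Q : V → V → Prop) (y f : V → V → ℝ)
    (hf0 : ∀ u w, 0 ≤ f u w) (hfy : ∀ u w, f u w ≤ y u w)
    {a b : V} {ε ε' : ℝ} (hε : 0 < ε) (hε' : 0 < ε') (hle : ε' ≤ ε)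
    (g : V → V → ℝ)
    (hg0 : ∀ u w, 0 ≤ g u w) (hgy : ∀ u w, g u w ≤ y u w)
    (hmod : ∀ u w, g u w ≠ f u w → Q u w)
    (hex : ∀ w, excess g w = excess f w
        + ε * ((if w = b then 1 else 0) - (if w = a then 1 else 0))) :
    ∃ g' : V → V → ℝ,
      (∀ u w, 0 ≤ g' u w) ∧ (∀ u w, g' u w ≤ y u w) ∧
      (∀ u w, g' u w ≠ f u w → Q u w) ∧
      (∀ w, excess g' w = excess f w
        + ε' * ((if w = b then 1 else 0) - (if w = a then 1 else 0))) := by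
  set t : ℝ := ε' / ε with ht
  have ht0 : 0 < t := div_pos hε' hε
  have ht1 : t ≤ 1 := (div_le_one hε).2 hle
  have htε : t * ε = ε' := by rw [ht]; field_simp
  refine ⟨fun u w => f u w + t * (g u w - f u w), ?_, ?_, ?_, ?_⟩
  · intro u w
    dsimp only
    nlinarith [hf0 u w, hg0 u w]
  · intro u w
    dsimp only
    nlinarith [hfy u w, hgy u w]
  · intro u w hne
    apply hmod u w
    intro heq
    apply hne
    dsimp only
    rw [heq]; ring
  · intro w
    rw [excess_combine f g t w, hex w]
    rw [← htε]; ring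


lemma excess_sub (f g : V → V → ℝ) (w : V) :
    excess (fun u v => f u v - g u v) w = excess f w - excess g w := by
  simp only [excess, Finset.sum_sub_distrib]; ring

/-- augmentation along a nodup residual path -/
lemma aug (y f : V → V → ℝ) (hy : ∀ u w, 0 ≤ y u w)
    (hf0 : ∀ u w, 0 ≤ f u w) (hfy : ∀ u w, f u w ≤ y u w) :
    ∀ (l : List V) (c b : V), List.Chain (Rel y f) c (l ++ [b]) →
      (c :: (l ++ [b])).Nodup →
      ∃ ε : ℝ, 0 < ε ∧ ∃ g : V → V → ℝ,
        (∀ u w, 0 ≤ g u w) ∧ (∀ u w, g u w ≤ y u w) ∧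
        (∀ u w, g u w ≠ f u w → u ∈ (c :: (l ++ [b])) ∧ w ∈ (c :: (l ++ [b]))) ∧
        (∀ w, excess g w = excess f w
          + ε * ((if w = b then 1 else 0) - (if w = c then 1 else 0))) := by
  intro l
  induction l with
  | nil =>
    intro c b hc hnd
    rw [List.nil_append] at hc
    have hrel : Rel y f c b := (List.chain_cons.mp hc).1
    obtain ⟨ε, hε, g, hg0, hgy, hmod, hex⟩ := aug_step y f hy hf0 hfy c b hrel
    refine ⟨ε, hε, g, hg0, hgy, ?_, hex⟩
    intro u w hne
    rcases hmod u w hne with ⟨rfl, rfl⟩ | ⟨rfl, rfl⟩ <;> simp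
  | cons c' t ih =>
    intro c b hc hnd
    rw [List.cons_append] at hc
    obtain ⟨hrel, hchain⟩ := List.chain_cons.mp hc
    rw [List.cons_append, List.nodup_cons] at hnd
    obtain ⟨hcnot, hnd2⟩ := hnd
    obtain ⟨ε₂, hε₂, g₂, hg₂0, hg₂y, hmod₂, hex₂⟩ := ih c' b hchain hnd2
    obtain ⟨ε₁, hε₁, g₁, hg₁0, hg₁y, hmod₁, hex₁⟩ := aug_step y f hy hf0 hfy c c' hrel
    set ε : ℝ := min ε₁ ε₂ with hεdef
    have hε : 0 < ε := lt_min hε₁ hε₂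
    obtain ⟨G₁, hG₁0, hG₁y, hGmod₁, hGex₁⟩ :=
      aug_rescale (fun u w => (u = c ∧ w = c') ∨ (u = c' ∧ w = c)) y f hf0 hfy
        hε₁ hε (min_le_left _ _) g₁ hg₁0 hg₁y hmod₁ hex₁
    obtain ⟨G₂, hG₂0, hG₂y, hGmod₂, hGex₂⟩ :=
      aug_rescale (fun u w => u ∈ (c' :: (t ++ [b])) ∧ w ∈ (c' :: (t ++ [b]))) y f hf0 hfy
        hε₂ hε (min_le_right _ _) g₂ hg₂0 hg₂y hmod₂ hex₂
    -- the two modifications have disjoint supports since c ∉ c' :: (t ++ [b])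
    have hdisj : ∀ u w, G₁ u w ≠ f u w → G₂ u w = f u w := by
      intro u w h1
      by_contra h2
      rcases hGmod₁ u w h1 with ⟨rfl, rfl⟩ | ⟨rfl, rfl⟩
      · exact hcnot (hGmod₂ _ _ h2).1
      · exact hcnot (hGmod₂ _ _ h2).2
    refine ⟨ε, hε, fun u w => G₁ u w + (G₂ u w - f u w), ?_, ?_, ?_, ?_⟩
    · intro u w
      dsimp only
      by_cases h1 : G₁ u w = f u w
      · rw [h1]; have := hG₂0 u w; linarith
      · rw [hdisj u w h1]; have := hG₁0 u w; linarith
    · intro u w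
      dsimp only
      by_cases h1 : G₁ u w = f u w
      · rw [h1]; have := hG₂y u w; linarith
      · rw [hdisj u w h1]; have := hG₁y u w; linarith
    · intro u w hne
      dsimp only at hne
      by_cases h1 : G₁ u w = f u w
      · have h2 : G₂ u w ≠ f u w := by
          intro h2; apply hne; rw [h1, h2]; ring
        have := hGmod₂ u w h2
        constructor
        · exact List.mem_cons_of_mem _ (by rw [List.cons_append]; exact this.1)
        · exact List.mem_cons_of_mem _ (by rw [List.cons_append]; exact this.2)
      · rcases hGmod₁ u w h1 with ⟨rfl, rfl⟩ | ⟨rfl, rfl⟩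
        · exact ⟨List.mem_cons_self, by simp⟩
        · exact ⟨by simp, List.mem_cons_self⟩
    · intro w
      rw [show (fun u w => G₁ u w + (G₂ u w - f u w))
            = (fun u w => G₁ u w + ((fun a b => G₂ a b - f a b) u w)) from rfl]
      rw [excess_add, excess_sub, hGex₁ w, hGex₂ w]
      ring


/-- extract a nodup chain -/
lemma chain_dedup {α : Type*} (r : α → α → Prop) :
    ∀ (n : ℕ) (l : List α) (a b : α), l.length ≤ n → a ≠ b →
      List.Chain r a (l ++ [b]) →
      ∃ l' : List α, (∀ x ∈ l', x ∈ l) ∧ List.Chain r a (l' ++ [b]) ∧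
        (a :: (l' ++ [b])).Nodup := by
  intro n
  induction n with
  | zero =>
    intro l a b hl hab hc
    have hl0 : l = [] := List.length_eq_zero_iff.mp (Nat.le_zero.mp hl)
    subst hl0
    exact ⟨[], by simp, hc, by simp [hab]⟩
  | succ n ih =>
    intro l a b hl hab hc
    match l with
    | [] => exact ⟨[], by simp, hc, by simp [hab]⟩
    | c :: t =>
      by_cases hac : a ∈ c :: t
      · obtain ⟨s, t', hst⟩ := List.append_of_mem hac
        have hsplit : (c :: t) ++ [b] = s ++ a :: (t' ++ [b]) := by rw [hst]; simp
        rw [hsplit] at hc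
        have hc2 : List.Chain r a (t' ++ [b]) := (List.isChain_cons_split.mp hc).2
        have hlen : t'.length ≤ n := by
          have h1 := congrArg List.length hst
          simp only [List.length_cons, List.length_append] at h1 hl ⊢
          omega
        obtain ⟨l', hsub, hch, hnd⟩ := ih t' a b hlen hab hc2
        refine ⟨l', fun x hx => ?_, hch, hnd⟩
        rw [hst]
        exact List.mem_append.mpr (Or.inr (List.mem_cons_of_mem _ (hsub x hx)))
      · by_cases hcb : c = b
        · subst hcb
          rw [List.cons_append] at hc
          have h1 : r a c := (List.chain_cons.mp hc).1
          exact ⟨[], by simp, List.chain_cons.mpr ⟨h1, List.Chain.nil⟩, by simp [hab]⟩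
        · rw [List.cons_append] at hc
          obtain ⟨hrac, hct⟩ := List.chain_cons.mp hc
          have hlen : t.length ≤ n := by
            simp only [List.length_cons] at hl; omega
          obtain ⟨l', hsub, hch, hnd⟩ := ih t c b hlen hcb hct
          refine ⟨c :: l', ?_, ?_, ?_⟩
          · intro x hx
            rcases List.mem_cons.mp hx with rfl | hx
            · exact List.mem_cons_self
            · exact List.mem_cons_of_mem _ (hsub x hx)
          · rw [List.cons_append]
            exact List.chain_cons.mpr ⟨hrac, hch⟩
          · rw [show (a :: ((c :: l') ++ [b])) = a :: (c :: (l' ++ [b])) by simp,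
              List.nodup_cons]
            refine ⟨?_, hnd⟩
            intro hmem
            rcases List.mem_cons.mp hmem with rfl | hmem
            · exact hac (List.mem_cons_self)
            · rcases List.mem_append.mp hmem with hmem | hmem
              · exact hac (List.mem_cons_of_mem _ (hsub _ hmem))
              · simp only [List.mem_singleton] at hmem
                exact hab hmem

/-- Existence of a flow of given value from the cut condition (max-flow min-cut). -/
theorem exists_flow (y : V → V → ℝ) (hy : ∀ u w, 0 ≤ y u w) (β ρ : V) (hne : β ≠ ρ)
    (v : ℝ) (hv : 0 ≤ v)
    (hcut : ∀ U : Finset V, β ∈ U → ρ ∉ U → v ≤ cutv y U) :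
    ∃ f : V → V → ℝ, (∀ u w, 0 ≤ f u w) ∧ (∀ u w, f u w ≤ y u w) ∧
      (∀ w, w ≠ β → w ≠ ρ → excess f w = 0) ∧ excess f ρ = v := by
  classical
  -- the compact set of feasible flows
  set K : Set (V → V → ℝ) :=
    {f | (∀ u w, 0 ≤ f u w ∧ f u w ≤ y u w) ∧ ∀ w, w ≠ β → w ≠ ρ → excess f w = 0}
    with hK
  have h0K : (fun _ _ => (0:ℝ)) ∈ K := by
    constructor
    · intro u w; exact ⟨le_refl _, hy u w⟩
    · intro w _ _; simp [excess]
  have hKne : K.Nonempty := ⟨_, h0K⟩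
  have hKcompact : IsCompact K := by
    have hsub : K ⊆ Set.univ.pi (fun u => Set.univ.pi (fun w => Set.Icc 0 (y u w))) := by
      intro f hf
      intro u _
      intro w _
      exact ⟨(hf.1 u w).1, (hf.1 u w).2⟩
    have hcomp : IsCompact (Set.univ.pi (fun u : V => Set.univ.pi
        (fun w : V => Set.Icc (0:ℝ) (y u w)))) :=
      isCompact_univ_pi (fun u => isCompact_univ_pi (fun w => isCompact_Icc))
    apply IsCompact.of_isClosed_subset hcomp ?_ hsub
    -- K is closed
    have hc1 : ∀ (u w : V), Continuous (fun f : V → V → ℝ => f u w) :=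
      fun u w => (continuous_apply w).comp (continuous_apply u)
    have hcex : ∀ w : V, Continuous (fun f : V → V → ℝ => excess f w) := by
      intro w
      simp only [excess]
      apply Continuous.sub
      · exact continuous_finset_sum _ (fun v _ => hc1 v w)
      · exact continuous_finset_sum _ (fun v _ => hc1 w v)
    have : K = (⋂ (u : V), ⋂ (w : V), {f : V → V → ℝ | 0 ≤ f u w ∧ f u w ≤ y u w}) ∩
        (⋂ (w : V), {f : V → V → ℝ | w ≠ β → w ≠ ρ → excess f w = 0}) := by
      ext f
      simp only [hK, Set.mem_setOf_eq, Set.mem_inter_iff, Set.mem_iInter]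
    rw [this]
    apply IsClosed.inter
    · apply isClosed_iInter; intro u; apply isClosed_iInter; intro w
      exact IsClosed.inter (isClosed_le continuous_const (hc1 u w))
        (isClosed_le (hc1 u w) continuous_const)
    · apply isClosed_iInter; intro w
      by_cases hwβ : w = β
      · simp only [hwβ]
        have : {f : V → V → ℝ | β ≠ β → β ≠ ρ → excess f β = 0} = Set.univ := by
          ext f; simp
        rw [this]; exact isClosed_univ
      · by_cases hwρ : w = ρ
        · simp only [hwρ]
          have : {f : V → V → ℝ | ρ ≠ β → ρ ≠ ρ → excess f ρ = 0} = Set.univ := by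
            ext f; simp
          rw [this]; exact isClosed_univ
        · have : {f : V → V → ℝ | w ≠ β → w ≠ ρ → excess f w = 0}
              = (fun f : V → V → ℝ => excess f w) ⁻¹' {0} := by
            ext f; simp [hwβ, hwρ]
          rw [this]
          exact IsClosed.preimage (hcex w) isClosed_singleton
  have hcont : ContinuousOn (fun f : V → V → ℝ => excess f ρ) K := by
    apply Continuous.continuousOn
    simp only [excess]
    apply Continuous.sub
    · exact continuous_finset_sum _ (fun v _ =>
        (continuous_apply ρ).comp (continuous_apply v))
    · exact continuous_finset_sum _ (fun v _ =>
        (continuous_apply v).comp (continuous_apply ρ))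
  obtain ⟨f₀, hf₀K, hf₀max⟩ := hKcompact.exists_isMaxOn hKne hcont
  have hf₀0 : ∀ u w, 0 ≤ f₀ u w := fun u w => (hf₀K.1 u w).1
  have hf₀y : ∀ u w, f₀ u w ≤ y u w := fun u w => (hf₀K.1 u w).2
  have hf₀cons : ∀ w, w ≠ β → w ≠ ρ → excess f₀ w = 0 := hf₀K.2
  have hval0 : 0 ≤ excess f₀ ρ := by
    have := hf₀max h0K
    simpa [excess] using this
  -- main claim: v ≤ excess f₀ ρ
  have hmain : v ≤ excess f₀ ρ := by
    by_contra hlt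
    push_neg at hlt
    -- residual reachability set
    set A : Finset V := Finset.univ.filter
      (fun w => Relation.ReflTransGen (Rel y f₀) β w) with hA
    have hβA : β ∈ A := by
      simp [hA, Relation.ReflTransGen.refl]
    by_cases hρA : ρ ∈ A
    · -- augmenting path: contradiction with maximality
      have hreach : Relation.ReflTransGen (Rel y f₀) β ρ := by
        simpa [hA] using hρA
      obtain ⟨l, hchain, hlast⟩ := List.exists_isChain_cons_of_relationReflTransGen hreach
      have hlne : l ≠ [] := by
        intro h; subst h; simp at hlast; exact hne hlast
      rw [List.getLast_cons hlne] at hlast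
      obtain ⟨l₀, hl₀⟩ : ∃ l₀, l = l₀ ++ [ρ] := by
        refine ⟨l.dropLast, ?_⟩
        conv_lhs => rw [← List.dropLast_append_getLast hlne]
        rw [hlast]
      subst hl₀
      obtain ⟨l', _, hch', hnd'⟩ := chain_dedup (Rel y f₀) l₀.length l₀ β ρ le_rfl hne hchain
      obtain ⟨ε, hε, g, hg0, hgy, _, hgex⟩ := aug y f₀ hy hf₀0 hf₀y l' β ρ hch' hnd'
      have hgK : g ∈ K := by
        constructor
        · intro u w; exact ⟨hg0 u w, hgy u w⟩
        · intro w hwβ hwρ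
          rw [hgex w, hf₀cons w hwβ hwρ]
          simp [hwβ, hwρ]
      have hmax2 := hf₀max hgK
      simp only [Set.mem_setOf_eq] at hmax2
      have hgρ : excess g ρ = excess f₀ ρ + ε := by
        rw [hgex ρ]
        simp [hne.symm]
      rw [hgρ] at hmax2
      linarith
    · -- ρ not reachable: A is a saturated cut
      have hclosed : ∀ a ∈ A, ∀ b, b ∉ A → ¬ Rel y f₀ a b := by
        intro a ha b hb hrel
        apply hb
        simp only [hA, Finset.mem_filter, Finset.mem_univ, true_and] at ha ⊢
        exact ha.tail hrel
      have hsat : ∀ a ∈ A, ∀ b, b ∉ A → f₀ a b = y a b ∧ f₀ b a = 0 := by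
        intro a ha b hb
        have hab : a ≠ b := by rintro rfl; exact hb ha
        have := hclosed a ha b hb
        rw [Rel] at this
        push_neg at this
        obtain ⟨h1, h2⟩ := this hab
        exact ⟨le_antisymm (hf₀y a b) h1, le_antisymm h2 (hf₀0 b a)⟩
      have hcutA : cutv f₀ A = cutv y A := by
        apply Finset.sum_congr rfl
        intro u hu
        apply Finset.sum_congr rfl
        intro w hw
        exact (hsat u hu w (by simpa using hw)).1
      have hcutAc : cutv f₀ Aᶜ = 0 := by
        apply Finset.sum_eq_zero
        intro u hu
        apply Finset.sum_eq_zero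
        intro w hw
        rw [compl_compl] at hw
        exact (hsat w hw u (by simpa using hu)).2
      have hsumA : ∑ w ∈ A, excess f₀ w = excess f₀ β := by
        apply Finset.sum_eq_single_of_mem β hβA
        intro w hw hwβ
        exact hf₀cons w hwβ (by rintro rfl; exact hρA hw)
      have hβρ : excess f₀ β + excess f₀ ρ = 0 := by
        have htot := excess_total f₀
        rw [← Finset.add_sum_erase _ _ (Finset.mem_univ β)] at htot
        rw [← Finset.add_sum_erase _ _ (Finset.mem_erase.mpr ⟨hne.symm, Finset.mem_univ ρ⟩)]
          at htot
        have : ∑ w ∈ (Finset.univ.erase β).erase ρ, excess f₀ w = 0 := by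
          apply Finset.sum_eq_zero
          intro w hw
          simp only [Finset.mem_erase] at hw
          exact hf₀cons w hw.2.1 hw.1
        rw [this] at htot
        linarith
      have h1 : excess f₀ β = cutv f₀ Aᶜ - cutv f₀ A := by rw [← hsumA, sum_excess]
      rw [hcutA, hcutAc] at h1
      have h2 := hcut A hβA hρA
      linarith
  -- scale down to exactly v
  rcases eq_or_lt_of_le hval0 with heq | hpos
  · -- excess f₀ ρ = 0, so v = 0
    have hv0 : v = 0 := le_antisymm (by linarith [hmain, heq.symm]) hv
    refine ⟨fun _ _ => 0, fun _ _ => le_refl _, fun u w => hy u w, ?_, ?_⟩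
    · intro w _ _; simp [excess]
    · rw [hv0]; simp [excess]
  · set t : ℝ := v / excess f₀ ρ with htdef
    have ht0 : 0 ≤ t := div_nonneg hv (le_of_lt hpos)
    have ht1 : t ≤ 1 := (div_le_one hpos).2 hmain
    refine ⟨fun u w => t * f₀ u w, ?_, ?_, ?_, ?_⟩
    · intro u w; exact mul_nonneg ht0 (hf₀0 u w)
    · intro u w
      dsimp only
      nlinarith [hf₀0 u w, hy u w, hf₀y u w]
    · intro w hwβ hwρ
      rw [excess_smul, hf₀cons w hwβ hwρ, mul_zero]
    · rw [excess_smul, htdef]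
      field_simp


/-- The invariant tying the capacity `Y` to the list of entries `(Z j, ρ j), j < n`. -/
def Inv (P : Finset (Finset V)) (Y : V → V → ℝ) (n : ℕ)
    (Z : ℕ → Finset V → ℝ) (ρ : ℕ → V) : Prop :=
  ∀ (U : Finset V) (pk : ℕ → Finset V),
    (∀ i ∈ Finset.range n, pk i ∈ P ∧ ((pk i) ∩ U).Nonempty) →
    ∑ i ∈ Finset.range n, (if ρ i ∈ U then 0 else Z i (pk i)) ≤ cutv Y U

lemma min_ineq (a b v : ℝ) (ha : 0 ≤ a) (hb : 0 ≤ b) :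
    min a v + (b - min b v) ≤ max a b := by
  rcases le_total v b with h | h
  · have : min a v ≤ v := min_le_right _ _
    have : b ≤ max a b := le_max_right _ _
    have : min a v + (b - min b v) = min a v + b - v := by rw [min_eq_right h]; ring
    rw [this]
    have := min_le_right a v
    have := le_max_right a b
    linarith
  · rw [min_eq_left h]
    have := min_le_left a v
    have := le_max_left a b
    linarith

/-- The surgery step: moving (part of) entry `i` to a new root `β ∈ p₀`. -/
lemma surgery (P : Finset (Finset V)) (G : SimpleGraph V)
    (Y : V → V → ℝ) (n : ℕ) (Z : ℕ → Finset V → ℝ) (ρ : ℕ → V)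
    (hY0 : ∀ u w, 0 ≤ Y u w)
    (hsup : ∀ u w, u ≠ w → ¬ G.Adj u w → Y u w = 0)
    (hZ0 : ∀ j p, 0 ≤ Z j p)
    (hInv : Inv P Y n Z ρ)
    (i : ℕ) (hi : i < n) (p₀ : Finset V) (hp₀ : p₀ ∈ P) (β : V) (hβ : β ∈ p₀)
    (hβρ : β ≠ ρ i) :
    ∃ Y' : V → V → ℝ,
      (∀ u w, 0 ≤ Y' u w) ∧
      (∀ u w, u ≠ w → ¬ G.Adj u w → Y' u w = 0) ∧
      (∀ u w, Y' u w + Y' w u = Y u w + Y w u) ∧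
      Inv P Y' (n+1)
        (fun j p => if j = i then min (Z i p) (Z i p₀)
          else if j = n then Z i p - min (Z i p) (Z i p₀) else Z j p)
        (fun j => if j = i then β else if j = n then ρ i else ρ j) := by
  classical
  set v : ℝ := Z i p₀ with hv
  have hv0 : 0 ≤ v := hZ0 i p₀
  -- flow existence
  have hflow : ∀ U : Finset V, β ∈ U → ρ i ∉ U → v ≤ cutv Y U := by
    intro U hβU hρU
    have h := hInv U (fun _ => p₀) (fun j _ => ⟨hp₀, ⟨β, Finset.mem_inter.mpr ⟨hβ, hβU⟩⟩⟩)
    calc v = (if ρ i ∈ U then 0 else Z i p₀) := by rw [if_neg hρU]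
    _ ≤ ∑ j ∈ Finset.range n, (if ρ j ∈ U then 0 else Z j p₀) := by
        apply Finset.single_le_sum (f := fun j => if ρ j ∈ U then 0 else Z j p₀)
        · intro j _
          split_ifs
          · exact le_refl _
          · exact hZ0 j p₀
        · exact Finset.mem_range.mpr hi
    _ ≤ cutv Y U := h
  obtain ⟨f, hf0, hfY, hfcons, hfval⟩ := exists_flow Y hY0 β (ρ i) hβρ v hv0 hflow
  have hfβ : excess f β = -v := by
    have htot := excess_total f
    rw [← Finset.add_sum_erase _ _ (Finset.mem_univ β)] at htot
    rw [← Finset.add_sum_erase _ _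
      (Finset.mem_erase.mpr ⟨Ne.symm hβρ, Finset.mem_univ (ρ i)⟩)] at htot
    have hz : ∑ w ∈ (Finset.univ.erase β).erase (ρ i), excess f w = 0 := by
      apply Finset.sum_eq_zero
      intro w hw
      simp only [Finset.mem_erase] at hw
      exact hfcons w hw.2.1 hw.1
    rw [hz, hfval] at htot
    linarith
  -- the new capacity
  refine ⟨fun u w => Y u w - f u w + f w u, ?_, ?_, ?_, ?_⟩
  · intro u w
    dsimp only
    have h1 := hfY u w
    have h2 := hf0 w u
    linarith
  · intro u w huw hadj
    dsimp only
    have h1 : Y u w = 0 := hsup u w huw hadj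
    have h2 : Y w u = 0 := hsup w u (Ne.symm huw) (fun h => hadj h.symm)
    have h3 : f u w = 0 := le_antisymm (h1 ▸ hfY u w) (hf0 u w)
    have h4 : f w u = 0 := le_antisymm (h2 ▸ hfY w u) (hf0 w u)
    rw [h1, h3, h4]; ring
  · intro u w; dsimp only; ring
  · -- the new invariant
    intro U pk' hpk'
    -- cut of the new capacity
    have hcut' : cutv (fun u w => Y u w - f u w + f w u) U
        = cutv Y U + ((if ρ i ∈ U then v else 0) - (if β ∈ U then v else 0)) := by
      rw [show (fun u w => Y u w - f u w + f w u)
            = (fun u w => (fun a b => Y a b - f a b) u w + (fun a b => f b a) u w) from rfl]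
      rw [cutv_add (fun a b => Y a b - f a b) (fun a b => f b a) U, cutv_sub Y f U,
        cutv_rev f U]
      have hsum := sum_excess f U
      have hptw : ∀ w ∈ U, excess f w
          = (if w = ρ i then v else 0) - (if w = β then v else 0) := by
        intro w _
        by_cases hw1 : w = ρ i
        · subst hw1
          rw [if_pos rfl, if_neg (fun h => hβρ h.symm), hfval]; ring
        · by_cases hw2 : w = β
          · subst hw2
            rw [if_neg hw1, if_pos rfl, hfβ]; ring
          · rw [if_neg hw1, if_neg hw2, hfcons w hw2 hw1]; ring
      have h2 : ∑ w ∈ U, excess f w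
          = (if ρ i ∈ U then v else 0) - (if β ∈ U then v else 0) := by
        rw [Finset.sum_congr rfl hptw, Finset.sum_sub_distrib,
          Finset.sum_ite_eq' U (ρ i) (fun _ => v), Finset.sum_ite_eq' U β (fun _ => v)]
      rw [← h2, hsum]
      ring
    rw [hcut']
    -- decompose the new sum
    have hin : i ∈ Finset.range n := Finset.mem_range.mpr hi
    have hin' : i ≠ n := Nat.ne_of_lt hi
    set T' : ℕ → ℝ := fun j =>
      (if (if j = i then β else if j = n then ρ i else ρ j) ∈ U then 0
        else (if j = i then min (Z i (pk' j)) v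
          else if j = n then Z i (pk' j) - min (Z i (pk' j)) v else Z j (pk' j))) with hT'
    have hsplit : ∑ j ∈ Finset.range (n+1), T' j
        = (∑ j ∈ (Finset.range n).erase i, (if ρ j ∈ U then 0 else Z j (pk' j)))
          + (if β ∈ U then 0 else min (Z i (pk' i)) v)
          + (if ρ i ∈ U then 0 else Z i (pk' n) - min (Z i (pk' n)) v) := by
      rw [Finset.sum_range_succ, ← Finset.add_sum_erase _ _ hin]
      have e1 : T' n = (if ρ i ∈ U then 0 else Z i (pk' n) - min (Z i (pk' n)) v) := by
        have hni : n ≠ i := Ne.symm hin'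
        simp [hT', hni]
      have e2 : T' i = (if β ∈ U then 0 else min (Z i (pk' i)) v) := by
        simp [hT']
      have e3 : ∀ j ∈ (Finset.range n).erase i,
          T' j = (if ρ j ∈ U then 0 else Z j (pk' j)) := by
        intro j hj
        obtain ⟨hji, hjn⟩ := Finset.mem_erase.mp hj
        have hjn' : j ≠ n := Nat.ne_of_lt (Finset.mem_range.mp hjn)
        simp [hT', hji, hjn']
      rw [e1, e2, Finset.sum_congr rfl e3]
      ring
    -- the generic bound coming from the old invariant
    have key : ∀ q : Finset V, q ∈ P → (q ∩ U).Nonempty →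
        (∑ j ∈ (Finset.range n).erase i, (if ρ j ∈ U then 0 else Z j (pk' j)))
          + (if ρ i ∈ U then 0 else Z i q) ≤ cutv Y U := by
      intro q hq hqU
      have h := hInv U (Function.update pk' i q) ?_
      · calc _ = ∑ j ∈ Finset.range n,
            (if ρ j ∈ U then 0 else Z j (Function.update pk' i q j)) := by
              rw [← Finset.add_sum_erase _ _ hin, Function.update_self]
              have : ∀ j ∈ (Finset.range n).erase i,
                  (if ρ j ∈ U then 0 else Z j (Function.update pk' i q j))
                    = (if ρ j ∈ U then 0 else Z j (pk' j)) := by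
                intro j hj
                rw [Function.update_of_ne (Finset.mem_erase.mp hj).1]
              rw [Finset.sum_congr rfl this]
              ring
        _ ≤ cutv Y U := h
      · intro j hj
        by_cases hji : j = i
        · subst hji; rw [Function.update_self]; exact ⟨hq, hqU⟩
        · rw [Function.update_of_ne hji]
          exact hpk' j (Finset.mem_range.mpr (Nat.lt_succ_of_lt (Finset.mem_range.mp hj)))
    have hpk'i := hpk' i (Finset.mem_range.mpr (Nat.lt_succ_of_lt hi))
    have hpk'n := hpk' n (Finset.mem_range.mpr (Nat.lt_succ_self n))
    have hothers_nonneg : (0:ℝ) ≤ ∑ j ∈ (Finset.range n).erase i,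
        (if ρ j ∈ U then 0 else Z j (pk' j)) := by
      apply Finset.sum_nonneg
      intro j _
      split_ifs
      · exact le_refl _
      · exact hZ0 j _
    rw [hsplit]
    by_cases hβU : β ∈ U <;> by_cases hρU : ρ i ∈ U
    · -- both in U
      rw [if_pos hβU, if_pos hρU]
      have := key p₀ hp₀ ⟨β, Finset.mem_inter.mpr ⟨hβ, hβU⟩⟩
      rw [if_pos hρU] at this
      simp only [if_pos hβU, if_pos hρU]
      linarith
    · -- β ∈ U, ρ i ∉ U : damage case
      rw [if_pos hβU, if_neg hρU]
      rcases le_total v (Z i (pk' n)) with hc | hc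
      · have := key (pk' n) hpk'n.1 hpk'n.2
        rw [if_neg hρU] at this
        rw [min_eq_right hc]
        simp only [if_pos hβU, if_neg hρU]
        linarith
      · have := key p₀ hp₀ ⟨β, Finset.mem_inter.mpr ⟨hβ, hβU⟩⟩
        rw [if_neg hρU] at this
        rw [min_eq_left hc]
        simp only [if_pos hβU, if_neg hρU]
        linarith
    · -- β ∉ U, ρ i ∈ U : gain case
      rw [if_neg hβU, if_pos hρU]
      have := key (pk' i) hpk'i.1 hpk'i.2
      rw [if_pos hρU] at this
      have hmin : min (Z i (pk' i)) v ≤ v := min_le_right _ _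
      simp only [if_neg hβU, if_pos hρU]
      linarith
    · -- both outside U
      rw [if_neg hβU, if_neg hρU]
      have hmax := min_ineq (Z i (pk' i)) (Z i (pk' n)) v (hZ0 _ _) (hZ0 _ _)
      rcases le_total (Z i (pk' i)) (Z i (pk' n)) with hc | hc
      · have := key (pk' n) hpk'n.1 hpk'n.2
        rw [if_neg hρU] at this
        rw [max_eq_right hc] at hmax
        simp only [if_neg hβU, if_neg hρU]
        linarith
      · have := key (pk' i) hpk'i.1 hpk'i.2
        rw [if_neg hρU] at this
        rw [max_eq_left hc] at hmax
        simp only [if_neg hβU, if_neg hρU]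
        linarith


section DemandStructure

variable (P : Finset (Finset V)) (r₀ : V)

open Classical in
/-- a parent of `t`: a demand-neighbour strictly closer to `r₀`. -/
def parV : V → V := fun t =>
  if h : ∃ d, (demandGraph P).Adj d t ∧
      (demandGraph P).dist r₀ d + 1 = (demandGraph P).dist r₀ t then h.choose else r₀

lemma exists_parent (hconn : ∀ u ∈ terminals P, ∀ v ∈ terminals P,
      (demandGraph P).Reachable u v)
    (hr₀ : r₀ ∈ terminals P) (t : V) (ht : t ∈ terminals P) (htr : t ≠ r₀) :
    ∃ d, (demandGraph P).Adj d t ∧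
      (demandGraph P).dist r₀ d + 1 = (demandGraph P).dist r₀ t := by
  classical
  set DG := demandGraph P with hDG
  have hreach : DG.Reachable r₀ t := hconn r₀ hr₀ t ht
  have hpos : 0 < DG.dist r₀ t := hreach.pos_dist_of_ne (Ne.symm htr)
  obtain ⟨w, hw⟩ := hreach.exists_walk_length_eq_dist
  cases hrev : w.reverse with
  | nil =>
    exfalso
    have hlen := congrArg SimpleGraph.Walk.length hrev
    rw [SimpleGraph.Walk.length_reverse, hw] at hlen
    simp only [SimpleGraph.Walk.length_nil] at hlen
    omega
  | cons hadj q =>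
    rename_i d
    -- hadj : DG.Adj t d, q : DG.Walk d r₀
    have hlen := congrArg SimpleGraph.Walk.length hrev
    rw [SimpleGraph.Walk.length_reverse, hw] at hlen
    simp only [SimpleGraph.Walk.length_cons] at hlen
    have h1 : DG.dist r₀ d ≤ q.length := by
      have := SimpleGraph.dist_le q.reverse
      rwa [SimpleGraph.Walk.length_reverse] at this
    have h2 : DG.dist r₀ t ≤ DG.dist r₀ d + 1 := by
      have hreach2 : DG.Reachable r₀ d := ⟨q.reverse⟩
      obtain ⟨w2, hw2⟩ := hreach2.exists_walk_length_eq_dist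
      have := SimpleGraph.dist_le (w2.concat hadj.symm)
      rwa [SimpleGraph.Walk.length_concat, hw2] at this
    exact ⟨d, hadj.symm, by omega⟩

lemma parV_spec (hconn : ∀ u ∈ terminals P, ∀ v ∈ terminals P,
      (demandGraph P).Reachable u v)
    (hr₀ : r₀ ∈ terminals P) (t : V) (ht : t ∈ terminals P) (htr : t ≠ r₀) :
    (demandGraph P).Adj (parV P r₀ t) t ∧
      (demandGraph P).dist r₀ (parV P r₀ t) + 1 = (demandGraph P).dist r₀ t := by
  rw [parV, dif_pos (exists_parent P r₀ hconn hr₀ t ht htr)]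
  exact (exists_parent P r₀ hconn hr₀ t ht htr).choose_spec

/-- the demand-tree pair of `t` -/
def treePair : V → Finset V := fun t => ({t, parV P r₀ t} : Finset V)

lemma mem_terminals_of_mem_pair {p : Finset V} (hp : p ∈ P) {a : V} (ha : a ∈ p) :
    a ∈ terminals P := by
  simp only [terminals, Finset.mem_filter, Finset.mem_univ, true_and]
  exact ⟨p, hp, ha⟩

lemma treePair_mem (hconn : ∀ u ∈ terminals P, ∀ v ∈ terminals P,
      (demandGraph P).Reachable u v)
    (hr₀ : r₀ ∈ terminals P) (t : V) (ht : t ∈ terminals P) (htr : t ≠ r₀) :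
    treePair P r₀ t ∈ P := by
  have h := (parV_spec P r₀ hconn hr₀ t ht htr).1
  have h2 := And.right h
  rw [treePair, Finset.pair_comm]
  exact h2

lemma parV_mem_terminals (hconn : ∀ u ∈ terminals P, ∀ v ∈ terminals P,
      (demandGraph P).Reachable u v)
    (hr₀ : r₀ ∈ terminals P) (t : V) (ht : t ∈ terminals P) (htr : t ≠ r₀) :
    parV P r₀ t ∈ terminals P := by
  apply mem_terminals_of_mem_pair P (treePair_mem P r₀ hconn hr₀ t ht htr)
  rw [treePair]
  exact Finset.mem_insert_of_mem (Finset.mem_singleton_self _)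

lemma mem_treePair_self (t : V) : t ∈ treePair P r₀ t := Finset.mem_insert_self _ _

/-- goodness of an entry -/
def GoodE (ζ : Finset V → ℝ) (r : V) : Prop :=
  ∀ t ∈ terminals P, t ≠ r₀ → 0 < ζ (treePair P r₀ t) →
    r ∈ terminals P ∧ (demandGraph P).dist r₀ r < (demandGraph P).dist r₀ t

/-- measure of an entry: number of tree pairs in its support -/
def measEnt (ζ : Finset V → ℝ) : ℕ :=
  (((terminals P).erase r₀).filter (fun t => 0 < ζ (treePair P r₀ t))).card

end DemandStructure


open Classical in
/-- termination measure -/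
def measT (P : Finset (Finset V)) (r₀ : V) (n : ℕ)
    (Z : ℕ → Finset V → ℝ) (ρ : ℕ → V) : ℕ :=
  ∑ j ∈ Finset.range n, if GoodE P r₀ (Z j) (ρ j) then 0 else measEnt P r₀ (Z j)

/-- main processing loop: make all entries good -/
lemma process (G : SimpleGraph V) (P : Finset (Finset V)) (r₀ : V)
    (hconn : ∀ u ∈ terminals P, ∀ v ∈ terminals P, (demandGraph P).Reachable u v)
    (hr₀ : r₀ ∈ terminals P) :
    ∀ (μ : ℕ) (Y : V → V → ℝ) (n : ℕ) (Z : ℕ → Finset V → ℝ) (ρ : ℕ → V),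
    (∀ u w, 0 ≤ Y u w) → (∀ u w, u ≠ w → ¬ G.Adj u w → Y u w = 0) →
    (∀ j p, 0 ≤ Z j p) → Inv P Y n Z ρ → measT P r₀ n Z ρ ≤ μ →
    ∃ (Y' : V → V → ℝ) (n' : ℕ) (Z' : ℕ → Finset V → ℝ) (ρ' : ℕ → V),
      (∀ u w, 0 ≤ Y' u w) ∧ (∀ u w, u ≠ w → ¬ G.Adj u w → Y' u w = 0) ∧
      (∀ j p, 0 ≤ Z' j p) ∧ Inv P Y' n' Z' ρ' ∧
      (∀ p, ∑ j ∈ Finset.range n', Z' j p = ∑ j ∈ Finset.range n, Z j p) ∧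
      (∀ u w, Y' u w + Y' w u = Y u w + Y w u) ∧
      (∀ j, j < n' → GoodE P r₀ (Z' j) (ρ' j)) := by
  classical
  intro μ
  induction μ using Nat.strong_induction_on with
  | _ μ IH =>
    intro Y n Z ρ hY0 hsup hZ0 hInv hμ
    by_cases hall : ∀ j, j < n → GoodE P r₀ (Z j) (ρ j)
    · exact ⟨Y, n, Z, ρ, hY0, hsup, hZ0, hInv, fun p => rfl, fun u w => rfl, hall⟩
    · push_neg at hall
      obtain ⟨i, hi, hbad⟩ := hall
      -- the bad set of entry i
      set B : Finset V := ((terminals P).erase r₀).filter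
        (fun t => 0 < Z i (treePair P r₀ t)) with hB
      have hBne : B.Nonempty := by
        rw [GoodE] at hbad
        push_neg at hbad
        obtain ⟨t, ht, htr, h0, _⟩ := hbad
        exact ⟨t, by
          rw [hB, Finset.mem_filter]
          exact ⟨Finset.mem_erase.mpr ⟨htr, ht⟩, h0⟩⟩
      obtain ⟨t₀, ht₀B, ht₀min⟩ :=
        Finset.exists_min_image B (fun t => (demandGraph P).dist r₀ t) hBne
      have ht₀f := Finset.mem_filter.mp ht₀B
      have ht₀R : t₀ ∈ terminals P := (Finset.mem_erase.mp ht₀f.1).2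
      have ht₀r : t₀ ≠ r₀ := (Finset.mem_erase.mp ht₀f.1).1
      have hv : 0 < Z i (treePair P r₀ t₀) := ht₀f.2
      set β : V := parV P r₀ t₀ with hβdef
      have hp₀P : treePair P r₀ t₀ ∈ P := treePair_mem P r₀ hconn hr₀ t₀ ht₀R ht₀r
      have hβp : β ∈ treePair P r₀ t₀ := by
        rw [treePair]; exact Finset.mem_insert_of_mem (Finset.mem_singleton_self _)
      have hβR : β ∈ terminals P := parV_mem_terminals P r₀ hconn hr₀ t₀ ht₀R ht₀r
      have hβdist : (demandGraph P).dist r₀ β + 1 = (demandGraph P).dist r₀ t₀ :=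
        (parV_spec P r₀ hconn hr₀ t₀ ht₀R ht₀r).2
      -- goodness of the new (moved) entry
      have hGoodNew : GoodE P r₀ (fun p => min (Z i p) (Z i (treePair P r₀ t₀))) β := by
        intro t ht htr h0
        have h1 : 0 < Z i (treePair P r₀ t) := lt_of_lt_of_le h0 (min_le_left _ _)
        have htB : t ∈ B := by
          rw [hB, Finset.mem_filter]
          exact ⟨Finset.mem_erase.mpr ⟨htr, ht⟩, h1⟩
        have := ht₀min t htB
        exact ⟨hβR, by omega⟩
      have hβρ : β ≠ ρ i := by
        intro heq
        apply hbad
        intro t ht htr h0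
        have htB : t ∈ B := by
          rw [hB, Finset.mem_filter]
          exact ⟨Finset.mem_erase.mpr ⟨htr, ht⟩, h0⟩
        have := ht₀min t htB
        refine ⟨heq ▸ hβR, ?_⟩
        rw [← heq]
        omega
      obtain ⟨Y', hY'0, hsup', hmass', hInv'⟩ :=
        surgery P G Y n Z ρ hY0 hsup hZ0 hInv i hi (treePair P r₀ t₀) hp₀P β hβp hβρ
      set v : ℝ := Z i (treePair P r₀ t₀) with hvdef
      set Z' : ℕ → Finset V → ℝ := fun j p => if j = i then min (Z i p) v
          else if j = n then Z i p - min (Z i p) v else Z j p with hZ'def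
      set ρ' : ℕ → V := fun j => if j = i then β else if j = n then ρ i else ρ j with hρ'def
      have hin' : i ≠ n := Nat.ne_of_lt hi
      have hZ'0 : ∀ j p, 0 ≤ Z' j p := by
        intro j p
        rw [hZ'def]
        dsimp only
        split_ifs
        · exact le_min (hZ0 i p) (hZ0 i _)
        · have := min_le_left (Z i p) v; linarith [hZ0 i p,
            min_le_left (Z i p) v, sub_nonneg.mpr (min_le_left (Z i p) v)]
        · exact hZ0 j p
      -- sum preservation for this step
      have hsum1 : ∀ p, ∑ j ∈ Finset.range (n+1), Z' j p = ∑ j ∈ Finset.range n, Z j p := by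
        intro p
        rw [Finset.sum_range_succ]
        have hin : i ∈ Finset.range n := Finset.mem_range.mpr hi
        rw [← Finset.add_sum_erase _ _ hin, ← Finset.add_sum_erase _ (fun j => Z j p) hin]
        have e1 : Z' n p = Z i p - min (Z i p) v := by
          rw [hZ'def]; dsimp only; rw [if_neg (Ne.symm hin'), if_pos rfl]
        have e2 : Z' i p = min (Z i p) v := by
          rw [hZ'def]; dsimp only; rw [if_pos rfl]
        have e3 : ∀ j ∈ (Finset.range n).erase i, Z' j p = Z j p := by
          intro j hj
          obtain ⟨hji, hjr⟩ := Finset.mem_erase.mp hj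
          have hjn : j ≠ n := Nat.ne_of_lt (Finset.mem_range.mp hjr)
          rw [hZ'def]; dsimp only; rw [if_neg hji, if_neg hjn]
        rw [e1, e2, Finset.sum_congr rfl e3]
        ring
      -- measure decrease
      have hmeas : measT P r₀ (n+1) Z' ρ' < measT P r₀ n Z ρ := by
        rw [measT, measT, Finset.sum_range_succ]
        have hin : i ∈ Finset.range n := Finset.mem_range.mpr hi
        rw [← Finset.add_sum_erase _ _ hin, ← Finset.add_sum_erase _
          (fun j => if GoodE P r₀ (Z j) (ρ j) then 0 else measEnt P r₀ (Z j)) hin]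
        have e3 : ∀ j ∈ (Finset.range n).erase i,
            (if GoodE P r₀ (Z' j) (ρ' j) then 0 else measEnt P r₀ (Z' j))
              = (if GoodE P r₀ (Z j) (ρ j) then 0 else measEnt P r₀ (Z j)) := by
          intro j hj
          obtain ⟨hji, hjr⟩ := Finset.mem_erase.mp hj
          have hjn : j ≠ n := Nat.ne_of_lt (Finset.mem_range.mp hjr)
          have hZeq : Z' j = Z j := by
            funext p; rw [hZ'def]; dsimp only; rw [if_neg hji, if_neg hjn]
          have hρeq : ρ' j = ρ j := by
            rw [hρ'def]; dsimp only; rw [if_neg hji, if_neg hjn]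
          rw [hZeq, hρeq]
        rw [Finset.sum_congr rfl e3]
        -- the i entry became good
        have hti : (if GoodE P r₀ (Z' i) (ρ' i) then 0 else measEnt P r₀ (Z' i)) = 0 := by
          have hZi : Z' i = fun p => min (Z i p) v := by
            funext p; rw [hZ'def]; dsimp only; rw [if_pos rfl]
          have hρi : ρ' i = β := by rw [hρ'def]; dsimp only; rw [if_pos rfl]
          rw [hZi, hρi, if_pos hGoodNew]
        -- the old i entry was bad
        have hto : (if GoodE P r₀ (Z i) (ρ i) then 0 else measEnt P r₀ (Z i))
            = measEnt P r₀ (Z i) := by rw [if_neg hbad]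
        -- the rest entry measure strictly smaller
        have hZn : Z' n = fun p => Z i p - min (Z i p) v := by
          funext p; rw [hZ'def]; dsimp only; rw [if_neg (Ne.symm hin'), if_pos rfl]
        have hcard : measEnt P r₀ (Z' n) + 1 ≤ measEnt P r₀ (Z i) := by
          rw [measEnt, measEnt]
          have hv0' : (0:ℝ) ≤ v := hvdef ▸ hZ0 i _
          have hsub : (((terminals P).erase r₀).filter
              (fun t => 0 < Z' n (treePair P r₀ t))) ⊆ B.erase t₀ := by
            intro t ht
            rw [Finset.mem_filter, hZn] at ht
            dsimp only at ht
            obtain ⟨htm, htpos⟩ := ht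
            refine Finset.mem_erase.mpr ⟨?_, ?_⟩
            · rintro rfl
              rw [← hvdef, min_self] at htpos
              simp at htpos
            · rw [hB, Finset.mem_filter]
              refine ⟨htm, ?_⟩
              by_contra hc
              push_neg at hc
              have hz : Z i (treePair P r₀ t) = 0 := le_antisymm hc (hZ0 _ _)
              rw [hz, min_eq_left hv0'] at htpos
              simp at htpos
          have h1 := Finset.card_le_card hsub
          have h2 : (B.erase t₀).card + 1 = B.card :=
            Finset.card_erase_add_one ht₀B
          rw [← hB]
          omega
        have hgn : (if GoodE P r₀ (Z' n) (ρ' n) then 0 else measEnt P r₀ (Z' n))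
            ≤ measEnt P r₀ (Z' n) := by
          split_ifs
          · exact Nat.zero_le _
          · exact le_refl _
        omega
      -- recurse
      have hlt : measT P r₀ (n+1) Z' ρ' < μ := lt_of_lt_of_le hmeas hμ
      obtain ⟨Y'', n'', Z'', ρ'', hY''0, hsup'', hZ''0, hInv'', hsum'', hmass'', hgood''⟩ :=
        IH (measT P r₀ (n+1) Z' ρ') hlt Y' (n+1) Z' ρ' hY'0 hsup' hZ'0 hInv' (le_refl _)
      refine ⟨Y'', n'', Z'', ρ'', hY''0, hsup'', hZ''0, hInv'', ?_, ?_, hgood''⟩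
      · intro p
        rw [hsum'' p, hsum1 p]
      · intro u w
        rw [hmass'' u w, hmass' u w]


/-- coverage of all required cuts in a good state -/
lemma good_state_cut (P : Finset (Finset V)) (r₀ : V)
    (hconn : ∀ u ∈ terminals P, ∀ v ∈ terminals P, (demandGraph P).Reachable u v)
    (hr₀ : r₀ ∈ terminals P)
    (Y : V → V → ℝ) (n : ℕ) (Z : ℕ → Finset V → ℝ) (ρ : ℕ → V)
    (hZ0 : ∀ j p, 0 ≤ Z j p) (hInv : Inv P Y n Z ρ)
    (hsum : ∀ p ∈ P, ∑ j ∈ Finset.range n, Z j p = 1)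
    (hgood : ∀ j, j < n → GoodE P r₀ (Z j) (ρ j)) :
    ∀ U : Finset V, r₀ ∉ U → (U ∩ terminals P).Nonempty → 1 ≤ cutv Y U := by
  intro U hU hUR
  obtain ⟨t₀, ht₀, hmin⟩ :=
    Finset.exists_min_image (U ∩ terminals P) (fun t => (demandGraph P).dist r₀ t) hUR
  have ht₀U : t₀ ∈ U := (Finset.mem_inter.mp ht₀).1
  have ht₀R : t₀ ∈ terminals P := (Finset.mem_inter.mp ht₀).2
  have ht₀r : t₀ ≠ r₀ := by rintro rfl; exact hU ht₀U
  have hqP : treePair P r₀ t₀ ∈ P := treePair_mem P r₀ hconn hr₀ t₀ ht₀R ht₀r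
  have h := hInv U (fun _ => treePair P r₀ t₀) (fun j _ =>
    ⟨hqP, ⟨t₀, Finset.mem_inter.mpr ⟨mem_treePair_self P r₀ t₀, ht₀U⟩⟩⟩)
  have hterm : ∀ j ∈ Finset.range n,
      (if ρ j ∈ U then 0 else Z j (treePair P r₀ t₀)) = Z j (treePair P r₀ t₀) := by
    intro j hj
    split_ifs with hρ
    · by_contra hne0
      have hpos : 0 < Z j (treePair P r₀ t₀) :=
        lt_of_le_of_ne (hZ0 j _) (fun h => hne0 h)
      obtain ⟨hρR, hρd⟩ := hgood j (Finset.mem_range.mp hj) t₀ ht₀R ht₀r hpos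
      have hmem : ρ j ∈ U ∩ terminals P := Finset.mem_inter.mpr ⟨hρ, hρR⟩
      have := hmin _ hmem
      omega
    · rfl
  rw [Finset.sum_congr rfl hterm, hsum _ hqP] at h
  exact h

/-- equal cost for mass-equal symmetric solutions -/
lemma cost_eq_of_mass (c : V → V → ℝ) (hcs : ∀ u v, c u v = c v u)
    (A B : V → V → ℝ) (hmass : ∀ u w, A u w + A w u = B u w + B w u) :
    ∑ u : V, ∑ w ∈ Finset.univ.erase u, c u w * A u w
      = ∑ u : V, ∑ w ∈ Finset.univ.erase u, c u w * B u w := by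
  have swap : ∀ F : V → V → ℝ,
      (∑ u : V, ∑ w ∈ Finset.univ.erase u, F u w)
        = ∑ u : V, ∑ w ∈ Finset.univ.erase u, F w u := by
    intro F
    have h1 : ∀ (F : V → V → ℝ) (u : V),
        ∑ w ∈ Finset.univ.erase u, F u w = (∑ w : V, F u w) - F u u := by
      intro F u
      rw [Finset.sum_erase_eq_sub (Finset.mem_univ u)]
    have h2 : ∀ (F : V → V → ℝ) (u : V),
        ∑ w ∈ Finset.univ.erase u, F w u = (∑ w : V, F w u) - F u u := by
      intro F u
      rw [Finset.sum_erase_eq_sub (Finset.mem_univ u)]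
    rw [Finset.sum_congr rfl (fun u _ => h1 F u),
      Finset.sum_congr rfl (fun u _ => h2 F u),
      Finset.sum_sub_distrib, Finset.sum_sub_distrib, Finset.sum_comm]
  have key : ∀ X : V → V → ℝ,
      2 * (∑ u : V, ∑ w ∈ Finset.univ.erase u, c u w * X u w)
        = ∑ u : V, ∑ w ∈ Finset.univ.erase u, c u w * (X u w + X w u) := by
    intro X
    have := swap (fun u w => c u w * X u w)
    calc 2 * (∑ u : V, ∑ w ∈ Finset.univ.erase u, c u w * X u w)
        = (∑ u : V, ∑ w ∈ Finset.univ.erase u, c u w * X u w)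
          + (∑ u : V, ∑ w ∈ Finset.univ.erase u, c w u * X w u) := by
          rw [← this]; ring
      _ = (∑ u : V, ∑ w ∈ Finset.univ.erase u, c u w * X u w)
          + (∑ u : V, ∑ w ∈ Finset.univ.erase u, c u w * X w u) := by
          congr 1
          apply Finset.sum_congr rfl; intro u _
          apply Finset.sum_congr rfl; intro w _
          rw [hcs u w]
      _ = ∑ u : V, ∑ w ∈ Finset.univ.erase u, c u w * (X u w + X w u) := by
          rw [← Finset.sum_add_distrib]
          apply Finset.sum_congr rfl; intro u _
          rw [← Finset.sum_add_distrib]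
          apply Finset.sum_congr rfl; intro w _
          ring
  have hA := key A
  have hB := key B
  have hAB : ∑ u : V, ∑ w ∈ Finset.univ.erase u, c u w * (A u w + A w u)
      = ∑ u : V, ∑ w ∈ Finset.univ.erase u, c u w * (B u w + B w u) := by
    apply Finset.sum_congr rfl; intro u _
    apply Finset.sum_congr rfl; intro w _
    rw [hmass u w]
  linarith

/-- the hard direction: from a Forest-BCR solution to a Tree-BCR solution -/
lemma forest_to_tree (G : SimpleGraph V) (c : V → V → ℝ)
    (hcs : ∀ u v, c u v = c v u)
    (P : Finset (Finset V)) (r₀ : V)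
    (hconn : ∀ u ∈ terminals P, ∀ v ∈ terminals P, (demandGraph P).Reachable u v)
    (hr₀ : r₀ ∈ terminals P)
    (x : V → V → V → ℝ) (z : V → Finset V → ℝ)
    (hfeas : ForestBCRFeasible P x z) (hsupp : SupportedOn G x) :
    ∃ x' : V → V → ℝ,
      (∀ u v, u ≠ v → 0 ≤ x' u v) ∧ (∀ u v, u ≠ v → ¬ G.Adj u v → x' u v = 0) ∧
      (∀ U : Finset V, r₀ ∉ U → (U ∩ terminals P).Nonempty →
          1 ≤ ∑ u ∈ U, ∑ v ∈ Uᶜ, x' u v) ∧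
      (∑ u : V, ∑ v ∈ Finset.univ.erase u, c u v * x' u v = bcrCost c x) := by
  classical
  obtain ⟨hx0, hz0, hzsum, hcut⟩ := hfeas
  set N : ℕ := Fintype.card V with hN
  set e : Fin N ≃ V := (Fintype.equivFin V).symm with he
  set Y₀ : V → V → ℝ := fun u w => if u = w then 0 else ∑ r : V, x r u w with hY₀
  set Z₀ : ℕ → Finset V → ℝ :=
    fun j p => if h : j < N then (if p ∈ P then z (e ⟨j, h⟩) p else 0) else 0 with hZ₀
  set ρ₀ : ℕ → V := fun j => if h : j < N then e ⟨j, h⟩ else r₀ with hρ₀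
  have hY₀0 : ∀ u w, 0 ≤ Y₀ u w := by
    intro u w
    rw [hY₀]; dsimp only
    split_ifs with h
    · exact le_refl 0
    · exact Finset.sum_nonneg fun r _ => hx0 r u w h
  have hsup₀ : ∀ u w, u ≠ w → ¬ G.Adj u w → Y₀ u w = 0 := by
    intro u w huw hadj
    rw [hY₀]; dsimp only
    rw [if_neg huw]
    exact Finset.sum_eq_zero fun r _ => hsupp r u w huw hadj
  have hZ₀0 : ∀ j p, 0 ≤ Z₀ j p := by
    intro j p
    rw [hZ₀]; dsimp only
    split_ifs with h1 h2
    · exact hz0 _ p h2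
    · exact le_refl 0
    · exact le_refl 0
  have hcutY₀ : ∀ U : Finset V, cutv Y₀ U = ∑ r : V, cutv (x r) U := by
    intro U
    rw [cutv]
    have h1 : ∀ u ∈ U, ∀ w ∈ Uᶜ, Y₀ u w = ∑ r : V, x r u w := by
      intro u hu w hw
      rw [hY₀]; dsimp only
      rw [if_neg]
      rintro rfl
      rw [Finset.mem_compl] at hw
      exact hw hu
    calc ∑ u ∈ U, ∑ w ∈ Uᶜ, Y₀ u w
        = ∑ u ∈ U, ∑ w ∈ Uᶜ, ∑ r : V, x r u w := by
          apply Finset.sum_congr rfl; intro u hu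
          apply Finset.sum_congr rfl; intro w hw
          exact h1 u hu w hw
      _ = ∑ u ∈ U, ∑ r : V, ∑ w ∈ Uᶜ, x r u w := by
          apply Finset.sum_congr rfl; intro u _
          rw [Finset.sum_comm]
      _ = ∑ r : V, ∑ u ∈ U, ∑ w ∈ Uᶜ, x r u w := Finset.sum_comm
      _ = ∑ r : V, cutv (x r) U := rfl
  have hrange : ∀ (F : ℕ → ℝ), (∑ j ∈ Finset.range N, F j) = ∑ k : Fin N, F k := by
    intro F
    rw [Finset.sum_range fun i => F i]
  have hρval : ∀ (k : Fin N), ρ₀ (k : ℕ) = e k := by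
    intro k
    rw [hρ₀]; dsimp only
    rw [dif_pos k.isLt]
  have hInv₀ : Inv P Y₀ N Z₀ ρ₀ := by
    intro U pk hpk
    have hterm : ∀ j ∈ Finset.range N,
        (if ρ₀ j ∈ U then 0 else Z₀ j (pk j)) ≤ cutv (x (ρ₀ j)) U := by
      intro j hj
      have hjN : j < N := Finset.mem_range.mp hj
      split_ifs with hρ
      · exact cutv_nonneg (fun u v huv => hx0 _ u v huv) U
      · rw [hZ₀]; dsimp only
        rw [dif_pos hjN, if_pos (hpk j hj).1]
        have hρeq : ρ₀ j = e ⟨j, hjN⟩ := by rw [hρ₀]; dsimp only; rw [dif_pos hjN]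
        rw [hρeq] at hρ
        rw [hρeq]
        exact hcut (e ⟨j, hjN⟩) (pk j) (hpk j hj).1 U hρ (hpk j hj).2
    calc ∑ j ∈ Finset.range N, (if ρ₀ j ∈ U then 0 else Z₀ j (pk j))
        ≤ ∑ j ∈ Finset.range N, cutv (x (ρ₀ j)) U := Finset.sum_le_sum hterm
      _ = ∑ k : Fin N, cutv (x (ρ₀ (k:ℕ))) U := hrange _
      _ = ∑ k : Fin N, cutv (x (e k)) U := by
          apply Finset.sum_congr rfl; intro k _; rw [hρval k]
      _ = ∑ r : V, cutv (x r) U := Equiv.sum_comp e (fun r => cutv (x r) U)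
      _ = cutv Y₀ U := (hcutY₀ U).symm
  have hsum₀ : ∀ p ∈ P, ∑ j ∈ Finset.range N, Z₀ j p = 1 := by
    intro p hp
    have hval : ∀ k : Fin N, Z₀ (k:ℕ) p = z (e k) p := by
      intro k; rw [hZ₀]; dsimp only; rw [dif_pos k.isLt, if_pos hp]
    rw [hrange, Finset.sum_congr rfl (fun k _ => hval k),
      Equiv.sum_comp e (fun r => z r p), hzsum p hp]
  obtain ⟨Y', n', Z', ρ', hY'0, hsup', hZ'0, hInv', hsum', hmass', hgood'⟩ :=
    process G P r₀ hconn hr₀ (measT P r₀ N Z₀ ρ₀) Y₀ N Z₀ ρ₀ hY₀0 hsup₀ hZ₀0 hInv₀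
      (le_refl _)
  refine ⟨Y', fun u v _ => hY'0 u v, hsup', ?_, ?_⟩
  · intro U hU hUR
    exact good_state_cut P r₀ hconn hr₀ Y' n' Z' ρ' hZ'0 hInv'
      (fun p hp => by rw [hsum' p, hsum₀ p hp]) hgood' U hU hUR
  · have h1 := cost_eq_of_mass c hcs Y' Y₀ hmass'
    rw [h1, bcrCost]
    calc ∑ u : V, ∑ w ∈ Finset.univ.erase u, c u w * Y₀ u w
        = ∑ u : V, ∑ w ∈ Finset.univ.erase u, ∑ r : V, c u w * x r u w := by
          apply Finset.sum_congr rfl; intro u _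
          apply Finset.sum_congr rfl; intro w hw
          have hwu : w ≠ u := (Finset.mem_erase.mp hw).1
          rw [hY₀]; dsimp only
          rw [if_neg (fun h => hwu h.symm), Finset.mul_sum]
      _ = ∑ u : V, ∑ r : V, ∑ w ∈ Finset.univ.erase u, c u w * x r u w := by
          apply Finset.sum_congr rfl; intro u _
          rw [Finset.sum_comm]
      _ = ∑ r : V, ∑ u : V, ∑ w ∈ Finset.univ.erase u, c u w * x r u w :=
          Finset.sum_comm


/-- the easy direction: a Tree-BCR solution gives a Forest-BCR solution -/
lemma tree_to_forest (G : SimpleGraph V) (c : V → V → ℝ)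
    (P : Finset (Finset V)) (r₀ : V)
    (x' : V → V → ℝ)
    (h0 : ∀ u v, u ≠ v → 0 ≤ x' u v)
    (hsup : ∀ u v, u ≠ v → ¬ G.Adj u v → x' u v = 0)
    (hcut : ∀ U : Finset V, r₀ ∉ U → (U ∩ terminals P).Nonempty →
        1 ≤ ∑ u ∈ U, ∑ v ∈ Uᶜ, x' u v) :
    ∃ x z, ForestBCRFeasible P x z ∧ SupportedOn G x ∧
      bcrCost c x = ∑ u : V, ∑ v ∈ Finset.univ.erase u, c u v * x' u v := by
  classical
  refine ⟨fun r u v => if r = r₀ then x' u v else 0,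
    fun r p => if r = r₀ then 1 else 0, ⟨?_, ?_, ?_, ?_⟩, ?_, ?_⟩
  · intro r u v huv; dsimp only; split_ifs
    · exact h0 u v huv
    · exact le_refl 0
  · intro r p _; dsimp only; split_ifs
    · norm_num
    · exact le_refl 0
  · intro p hp
    simp
  · intro r p hp U hU hpU
    dsimp only
    split_ifs with hr
    · subst hr
      have h2 : (U ∩ terminals P).Nonempty := by
        obtain ⟨a, ha⟩ := hpU
        rw [Finset.mem_inter] at ha
        exact ⟨a, Finset.mem_inter.mpr ⟨ha.2, mem_terminals_of_mem_pair P hp ha.1⟩⟩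
      exact hcut U hU h2
    · refine le_of_eq ?_
      symm
      apply Finset.sum_eq_zero; intro u _
      apply Finset.sum_eq_zero; intro v _
      rfl
  · intro r u v huv hadj; dsimp only; split_ifs with hr
    · exact hsup u v huv hadj
    · rfl
  · rw [bcrCost]
    calc ∑ r : V, ∑ u : V, ∑ w ∈ Finset.univ.erase u, c u w
          * (if r = r₀ then x' u w else 0)
        = ∑ r : V, (if r = r₀
            then ∑ u : V, ∑ w ∈ Finset.univ.erase u, c u w * x' u w else 0) := by
          apply Finset.sum_congr rfl; intro r _
          split_ifs with hr
          · rfl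
          · simp
      _ = _ := by simp

end SFaux

/-- For a Steiner Forest instance whose demand graph has exactly one
nontrivial connected component (with vertex set `R`, all terminals lying in it), the
optimum value of Forest-BCR equals the optimum value of Tree-BCR for the Steiner Tree
instance `(G, c, R)` with any root `r₀ ∈ R`. -/
theorem forestBCR_eq_treeBCR_on_steiner_tree_instances [Fintype V] [DecidableEq V]
    (G : SimpleGraph V) (c : V → V → ℝ)
    (hc0 : ∀ u v : V, 0 ≤ c u v) (hcs : ∀ u v : V, c u v = c v u)
    (P : Finset (Finset V)) (hP : ∀ p ∈ P, p.card = 2)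
    (R : Finset V) (hR : R = terminals P)
    (hconn : ∀ u ∈ R, ∀ v ∈ R, (demandGraph P).Reachable u v)
    (r₀ : V) (hr₀ : r₀ ∈ R) :
    sInf {t : ℝ | ∃ x z, ForestBCRFeasible P x z ∧ SupportedOn G x ∧ bcrCost c x = t} =
      sInf {t : ℝ | ∃ x' : V → V → ℝ,
        (∀ u v : V, u ≠ v → 0 ≤ x' u v) ∧
        (∀ u v : V, u ≠ v → ¬ G.Adj u v → x' u v = 0) ∧
        (∀ U : Finset V, r₀ ∉ U → (U ∩ R).Nonempty →
          1 ≤ ∑ u ∈ U, ∑ v ∈ Uᶜ, x' u v) ∧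
        ∑ u : V, ∑ v ∈ Finset.univ.erase u, c u v * x' u v = t} := by
  subst hR
  congr 1
  ext t
  simp only [Set.mem_setOf_eq]
  constructor
  · rintro ⟨x, z, hfeas, hsupp, hcost⟩
    obtain ⟨x', h0, hsup, hcut, hc⟩ :=
      SFaux.forest_to_tree G c hcs P r₀ hconn hr₀ x z hfeas hsupp
    exact ⟨x', h0, hsup, hcut, by rw [hc, hcost]⟩
  · rintro ⟨x', h0, hsup, hcut, hcost⟩
    obtain ⟨x, z, hfeas, hsupp, hc⟩ := SFaux.tree_to_forest G c P r₀ x' h0 hsup hcut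
    exact ⟨x, z, hfeas, hsupp, by rw [hc, hcost]⟩
end
end

section
/- Let (x,z) be a feasible solution to Forest-BCR with cost function c. Then there exists a feasible solution (x̃, z̃) to Forest-BCR with c(x̃) ≤ c(x) such that z̃^r_P = 0 for every non-terminal r ∈ V∖R and every P ∈ 𝒫. Moreover, if (x,z) is half-integral, then (x̃, z̃) can be chosen half-integral. -/
open Finset

noncomputable section

variable {V : Type*}

namespace RerouteAux

variable {V : Type*} [Fintype V] [DecidableEq V]

def cutF (f : V → V → ℝ) (U : Finset V) : ℝ := ∑ u ∈ U, ∑ v ∈ Uᶜ, f u v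

def excessF (f : V → V → ℝ) (v : V) : ℝ := (∑ u, f u v) - ∑ u, f v u

lemma cutF_nonneg {f : V → V → ℝ} (hf : ∀ u v, u ≠ v → 0 ≤ f u v) (U : Finset V) :
    0 ≤ cutF f U := by
  refine Finset.sum_nonneg fun u hu => Finset.sum_nonneg fun v hv => hf u v ?_
  rintro rfl; exact (Finset.mem_compl.mp hv) hu

lemma sum_excess (f : V → V → ℝ) (U : Finset V) :
    ∑ v ∈ U, excessF f v = cutF f Uᶜ - cutF f U := by
  unfold excessF cutF
  rw [Finset.sum_sub_distrib]
  have h1 : ∀ g : V → V → ℝ, ∑ v ∈ U, ∑ u, g u v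
      = (∑ v ∈ U, ∑ u ∈ U, g u v) + ∑ v ∈ U, ∑ u ∈ Uᶜ, g u v := by
    intro g
    rw [← Finset.sum_add_distrib]
    exact Finset.sum_congr rfl fun v _ => (Finset.sum_add_sum_compl U _).symm
  rw [h1 (fun u v => f u v), h1 (fun u v => f v u)]
  have h2 : ∑ v ∈ U, ∑ u ∈ U, f u v = ∑ v ∈ U, ∑ u ∈ U, f v u := Finset.sum_comm
  have h3 : ∑ u ∈ Uᶜ, ∑ v ∈ Uᶜᶜ, f u v = ∑ v ∈ U, ∑ u ∈ Uᶜ, f u v := by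
    rw [compl_compl]; exact Finset.sum_comm
  rw [h3, h2]; ring

lemma excess_total (f : V → V → ℝ) : ∑ v, excessF f v = 0 := by
  have := sum_excess f (Finset.univ : Finset V)
  simpa [cutF] using this


lemma excess_bump (f : V → V → ℝ) (p q : V) (ε : ℝ) (x : V) :
    excessF (fun a b => f a b + if a = p ∧ b = q then ε else 0) x
      = excessF f x + (if x = q then ε else 0) - (if x = p then ε else 0) := by
  unfold excessF
  have h1 : ∑ u, (f u x + if u = p ∧ x = q then ε else 0)
      = (∑ u, f u x) + (if x = q then ε else 0) := by
    rw [Finset.sum_add_distrib]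
    congr 1
    by_cases hx : x = q
    · simp [hx]
    · simp [hx]
  have h2 : ∑ u, (f x u + if x = p ∧ u = q then ε else 0)
      = (∑ u, f x u) + (if x = p then ε else 0) := by
    rw [Finset.sum_add_distrib]
    congr 1
    by_cases hx : x = p
    · simp [hx]
    · simp [hx]
  simp only [h1, h2]
  ring

/-- residual relation -/
def Res (w f : V → V → ℝ) (u v : V) : Prop := u ≠ v ∧ (0 < f v u ∨ f u v < w u v)

lemma int_pos {a : ℝ} (h : ∃ n : ℤ, a = n) (h0 : 0 < a) : 1 ≤ a := by
  obtain ⟨n, rfl⟩ := h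
  exact_mod_cast h0

lemma int_lt {a b : ℝ} (ha : ∃ n : ℤ, a = n) (hb : ∃ n : ℤ, b = n) (h : a < b) : a + 1 ≤ b := by
  obtain ⟨n, rfl⟩ := ha; obtain ⟨m, rfl⟩ := hb
  have h1 : n < m := by exact_mod_cast h
  have h2 : n + 1 ≤ m := h1
  exact_mod_cast h2

/-- augment one unit along an edge of the residual graph -/
lemma augment_edge (w f : V → V → ℝ) (hf0 : ∀ a b, 0 ≤ f a b) (hfw : ∀ a b, f a b ≤ w a b)
    (hfi : ∀ a b, ∃ n : ℤ, f a b = n) (hwi : ∀ a b, ∃ n : ℤ, w a b = n)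
    {u v : V} (h : Res w f u v) :
    ∃ f' : V → V → ℝ, (∀ a b, 0 ≤ f' a b) ∧ (∀ a b, f' a b ≤ w a b) ∧
      (∀ a b, ∃ n : ℤ, f' a b = n) ∧
      (∀ a b, ¬(a = u ∧ b = v) → ¬(a = v ∧ b = u) → f' a b = f a b) ∧
      (∀ x, excessF f' x = excessF f x + (if x = v then 1 else 0) - (if x = u then 1 else 0)) := by
  rcases h with ⟨huv, hcase⟩
  by_cases hpos : 0 < f v u
  · refine ⟨fun a b => f a b + if a = v ∧ b = u then (-1 : ℝ) else 0, ?_, ?_, ?_, ?_, ?_⟩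
    · intro a b
      by_cases hab : a = v ∧ b = u
      · obtain ⟨rfl, rfl⟩ := hab
        have h1 := int_pos (hfi a b) hpos
        have h2 : (if a = a ∧ b = b then (-1:ℝ) else 0) = -1 := by simp
        show 0 ≤ f a b + if a = a ∧ b = b then (-1:ℝ) else 0
        rw [h2]; linarith
      · simp [hab, hf0 a b]
    · intro a b
      by_cases hab : a = v ∧ b = u
      · simp only [if_pos hab]; linarith [hfw a b]
      · simp [hab, hfw a b]
    · intro a b
      obtain ⟨n, hn⟩ := hfi a b
      by_cases hab : a = v ∧ b = u
      · refine ⟨n - 1, ?_⟩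
        simp only [if_pos hab, hn]
        push_cast; ring
      · exact ⟨n, by simp [hab, hn]⟩
    · intro a b _ hab
      simp [hab]
    · intro x
      rw [excess_bump f v u (-1) x]
      rcases eq_or_ne x v with rfl | hxv
      · rcases eq_or_ne x u with rfl | hxu
        · exact absurd rfl huv
        · simp [hxu, Ne.symm hxu]; try ring
      · rcases eq_or_ne x u with rfl | hxu
        · simp [hxv, Ne.symm hxv]; try ring
        · simp [hxv, hxu]
  · have hlt : f u v < w u v := by
      rcases hcase with h | h
      · exact absurd h hpos
      · exact h
    refine ⟨fun a b => f a b + if a = u ∧ b = v then (1 : ℝ) else 0, ?_, ?_, ?_, ?_, ?_⟩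
    · intro a b
      by_cases hab : a = u ∧ b = v
      · simp only [if_pos hab]; linarith [hf0 a b]
      · simp [hab, hf0 a b]
    · intro a b
      by_cases hab : a = u ∧ b = v
      · obtain ⟨rfl, rfl⟩ := hab
        have h1 := int_lt (hfi a b) (hwi a b) hlt
        have h2 : (if a = a ∧ b = b then (1:ℝ) else 0) = 1 := by simp
        show f a b + (if a = a ∧ b = b then (1:ℝ) else 0) ≤ w a b
        rw [h2]; linarith
      · simp [hab, hfw a b]
    · intro a b
      obtain ⟨n, hn⟩ := hfi a b
      by_cases hab : a = u ∧ b = v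
      · refine ⟨n + 1, ?_⟩
        simp only [if_pos hab, hn]
        push_cast; ring
      · exact ⟨n, by simp [hab, hn]⟩
    · intro a b hab _
      simp [hab]
    · intro x
      rw [excess_bump f u v 1 x]

lemma getLast_eq_of_eq {α : Type*} {l l' : List α} (h : l = l') (h1 : l ≠ []) :
    l.getLast h1 = l'.getLast (h ▸ h1) := by subst h; rfl

lemma chain_transfer {α : Type*} {r r' : α → α → Prop} {p : α → Prop}
    (h : ∀ x y, p x → p y → r x y → r' x y) :
    ∀ (l : List α) (u : α), List.Chain r u l → (∀ x ∈ u :: l, p x) → List.Chain r' u l := by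
  intro l
  induction l with
  | nil => intro u _ _; exact List.Chain.nil
  | cons v l ih =>
      intro u hc hp
      simp only [List.Chain, List.isChain_cons_cons] at hc ⊢
      refine ⟨h u v (hp u (by simp)) (hp v (by simp)) hc.1, ih v hc.2 fun x hx => ?_⟩
      exact hp x (by simp only [List.mem_cons] at hx ⊢; tauto)

lemma exists_dup_split {α : Type*} :
    ∀ L : List α, ¬ L.Nodup → ∃ (x : α) (l1 l2 l3 : List α), L = l1 ++ x :: (l2 ++ x :: l3) := by
  intro L
  induction L with
  | nil => intro h; exact absurd List.nodup_nil h
  | cons y ys ih =>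
      intro h
      by_cases hy : y ∈ ys
      · obtain ⟨s, t, rfl⟩ := List.append_of_mem hy
        exact ⟨y, [], s, t, by simp⟩
      · have : ¬ ys.Nodup := by
          intro hnd
          exact h (List.nodup_cons.mpr ⟨hy, hnd⟩)
        obtain ⟨x, l1, l2, l3, rfl⟩ := ih this
        exact ⟨x, y :: l1, l2, l3, by simp⟩

lemma chain_dedup {α : Type*} {r : α → α → Prop} :
    ∀ (n : ℕ) (l : List α) (a : α), l.length ≤ n → List.Chain r a l →
      ∃ l', List.Chain r a l' ∧
        (a :: l').getLast (List.cons_ne_nil _ _) = (a :: l).getLast (List.cons_ne_nil _ _) ∧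
        (a :: l').Nodup := by
  intro n
  induction n with
  | zero =>
      intro l a hl _
      rw [Nat.le_zero, List.length_eq_zero_iff] at hl
      subst hl
      exact ⟨[], List.Chain.nil, rfl, List.nodup_singleton a⟩
  | succ n ih =>
      intro l a hl hc
      by_cases hnd : (a :: l).Nodup
      · exact ⟨l, hc, rfl, hnd⟩
      obtain ⟨x, l1, l2, l3, heq⟩ := exists_dup_split (a :: l) hnd
      cases l1 with
      | nil =>
          simp only [List.nil_append] at heq
          obtain ⟨rfl, rfl⟩ : a = x ∧ l = l2 ++ x :: l3 := by
            constructor <;> [exact (List.cons.injEq _ _ _ _ ▸ heq).1; exact (List.cons.injEq _ _ _ _ ▸ heq).2]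
          have hc3 : List.Chain r a l3 := (List.isChain_cons_split.mp hc).2
          have hlen : l3.length ≤ n := by
            have := hl; simp only [List.length_append, List.length_cons] at this; omega
          obtain ⟨l', h1, h2, h3⟩ := ih l3 a hlen hc3
          refine ⟨l', h1, ?_, h3⟩
          rw [h2]
          have : a :: (l2 ++ a :: l3) = (a :: l2) ++ (a :: l3) := by simp
          rw [getLast_eq_of_eq this, List.getLast_append_of_ne_nil _ (List.cons_ne_nil _ _)]
      | cons b l1' =>
          have hab : a = b ∧ l = l1' ++ x :: (l2 ++ x :: l3) := by
            rw [List.cons_append] at heq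
            exact ⟨(List.cons.injEq _ _ _ _ ▸ heq).1, (List.cons.injEq _ _ _ _ ▸ heq).2⟩
          obtain ⟨rfl, rfl⟩ := hab
          have hsp := List.isChain_cons_split.mp hc
          have hsp2 := List.isChain_cons_split.mp hsp.2
          have hc' : List.Chain r a (l1' ++ x :: l3) := List.isChain_cons_split.mpr ⟨hsp.1, hsp2.2⟩
          have hlen : (l1' ++ x :: l3).length ≤ n := by
            have := hl; simp only [List.length_append, List.length_cons] at this ⊢; omega
          obtain ⟨l', h1, h2, h3⟩ := ih (l1' ++ x :: l3) a hlen hc'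
          refine ⟨l', h1, ?_, h3⟩
          rw [h2]
          have e1 : a :: (l1' ++ x :: l3) = (a :: l1') ++ (x :: l3) := by simp
          have e2 : a :: (l1' ++ x :: (l2 ++ x :: l3)) = ((a :: l1') ++ (x :: l2)) ++ (x :: l3) := by
            simp
          rw [getLast_eq_of_eq e1, getLast_eq_of_eq e2,
            List.getLast_append_of_ne_nil _ (List.cons_ne_nil _ _),
            List.getLast_append_of_ne_nil _ (List.cons_ne_nil _ _)]

lemma augment_chain (w : V → V → ℝ) (hwi : ∀ a b, ∃ n : ℤ, w a b = n) :
    ∀ (l : List V) (u : V) (f : V → V → ℝ), (∀ a b, 0 ≤ f a b) → (∀ a b, f a b ≤ w a b) →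
      (∀ a b, ∃ n : ℤ, f a b = n) → List.Chain (Res w f) u l → (u :: l).Nodup →
      ∃ f' : V → V → ℝ, (∀ a b, 0 ≤ f' a b) ∧ (∀ a b, f' a b ≤ w a b) ∧
        (∀ a b, ∃ n : ℤ, f' a b = n) ∧
        ∀ x, excessF f' x = excessF f x
          + (if x = (u :: l).getLast (List.cons_ne_nil _ _) then 1 else 0)
          - (if x = u then 1 else 0) := by
  intro l
  induction l with
  | nil =>
      intro u f hf0 hfw hfi _ _
      refine ⟨f, hf0, hfw, hfi, fun x => ?_⟩
      simp
      split_ifs <;> simp_all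
  | cons v l ih =>
      intro u f hf0 hfw hfi hc hnd
      simp only [List.Chain, List.isChain_cons_cons] at hc
      obtain ⟨f1, h10, h1w, h1i, h1agree, h1exc⟩ := augment_edge w f hf0 hfw hfi hwi hc.1
      have hu_notmem : u ∉ v :: l := (List.nodup_cons.mp hnd).1
      have hchain1 : List.Chain (Res w f1) v l := by
        refine chain_transfer (p := fun x => x ≠ u) ?_ l v hc.2 ?_
        · rintro a b ha hb ⟨hab, hres⟩
          have e1 : f1 a b = f a b := h1agree a b (fun h => ha h.1) (fun h => hb h.2)
          have e2 : f1 b a = f b a := h1agree b a (fun h => hb h.1) (fun h => ha h.2)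
          exact ⟨hab, by rw [e1, e2]; exact hres⟩
        · intro x hx
          exact fun hxu => hu_notmem (hxu ▸ hx)
      obtain ⟨f2, h20, h2w, h2i, h2exc⟩ :=
        ih v f1 h10 h1w h1i hchain1 (List.nodup_cons.mp hnd).2
      refine ⟨f2, h20, h2w, h2i, fun x => ?_⟩
      rw [h2exc x, h1exc x, List.getLast_cons_cons]
      ring

lemma intMFMC (w : V → V → ℝ) (hw : ∀ u v, 0 ≤ w u v) (hwi : ∀ u v, ∃ n : ℤ, w u v = n)
    (s t : V) (hst : s ≠ t) (M : ℕ)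
    (hcut : ∀ U : Finset V, s ∈ U → t ∉ U → (M : ℝ) ≤ cutF w U) :
    ∃ f : V → V → ℝ, (∀ u v, 0 ≤ f u v) ∧ (∀ u v, f u v ≤ w u v) ∧
      (∀ u v, ∃ n : ℤ, f u v = n) ∧ (∀ v, v ≠ s → v ≠ t → excessF f v = 0) ∧
      excessF f t = M := by
  induction M with
  | zero =>
      exact ⟨0, fun _ _ => le_rfl, fun u v => hw u v, fun u v => ⟨0, by simp⟩,
        fun v _ _ => by simp [excessF], by simp [excessF]⟩
  | succ M ih =>
      obtain ⟨f, hf0, hfw, hfi, hfcons, hft⟩ := ih (fun U hs ht => by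
        refine le_trans ?_ (hcut U hs ht); push_cast; linarith)
      have hreach : Relation.ReflTransGen (Res w f) s t := by
        by_contra hnr
        classical
        set S : Finset V := Finset.univ.filter (fun v => Relation.ReflTransGen (Res w f) s v)
          with hS
        have hsS : s ∈ S := by simp only [hS, Finset.mem_filter, Finset.mem_univ, true_and]; exact Relation.ReflTransGen.refl
        have htS : t ∉ S := by simp [hS, hnr]
        have key : ∀ u ∈ S, ∀ v, v ∉ S → f v u = 0 ∧ f u v = w u v := by
          intro u hu v hv
          have hru : Relation.ReflTransGen (Res w f) s u := by
            simpa [hS] using hu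
          have hne : u ≠ v := by rintro rfl; exact hv hu
          have hnres : ¬ Res w f u v := by
            intro hres
            exact hv (by simp [hS]; exact hru.tail hres)
          rw [Res] at hnres
          push_neg at hnres
          have h2 := hnres hne
          constructor
          · exact le_antisymm h2.1 (hf0 v u)
          · exact le_antisymm (hfw u v) h2.2
        have e1 : cutF f S = cutF w S := by
          refine Finset.sum_congr rfl fun u hu => Finset.sum_congr rfl fun v hv => ?_
          exact (key u hu v (Finset.mem_compl.mp hv)).2
        have e2 : cutF f Sᶜ = 0 := by
          rw [cutF]
          refine Finset.sum_eq_zero fun u hu => Finset.sum_eq_zero fun v hv => ?_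
          rw [compl_compl] at hv
          exact (key v hv u (Finset.mem_compl.mp hu)).1
        have e3 : ∑ v ∈ Sᶜ, excessF f v = excessF f t := by
          refine Finset.sum_eq_single t (fun v hv hvt => ?_) (fun h => ?_)
          · exact hfcons v (by rintro rfl; exact (Finset.mem_compl.mp hv) hsS) hvt
          · exact absurd (Finset.mem_compl.mpr htS) h
        have e4 := sum_excess f Sᶜ
        rw [compl_compl, e3, hft, e2, e1] at e4
        have e5 := hcut S hsS htS
        push_cast at e5
        linarith
      obtain ⟨l, hch, hlast⟩ := List.exists_isChain_cons_of_relationReflTransGen hreach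
      obtain ⟨l', hch', hlast', hnd'⟩ := chain_dedup l.length l s le_rfl hch
      obtain ⟨f', h0, hw', hi, hexc⟩ :=
        augment_chain w hwi l' s f hf0 hfw hfi hch' hnd'
      have hlast'' : (s :: l').getLast (List.cons_ne_nil _ _) = t := by rw [hlast', hlast]
      refine ⟨f', h0, hw', hi, fun v hvs hvt => ?_, ?_⟩
      · rw [hexc v, hlast'', hfcons v hvs hvt, if_neg hvt, if_neg hvs]; ring
      · rw [hexc t, hlast'', hft, if_pos rfl, if_neg hst.symm]; push_cast; ring

lemma rat_scale (q : ℚ) (N : ℕ) (h : q.den ∣ N) : ∃ k : ℤ, ((N : ℚ) * q) = (k : ℚ) := by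
  obtain ⟨c, hc⟩ := h
  refine ⟨(c : ℤ) * q.num, ?_⟩
  have hd : (q.den : ℚ) ≠ 0 := by exact_mod_cast q.den_nz
  have hden : ((q.den : ℚ)) * q = (q.num : ℚ) := by
    nth_rewrite 2 [← Rat.num_div_den q]
    rw [mul_comm, div_mul_cancel₀ _ hd]
  rw [hc]
  push_cast
  rw [mul_comm (q.den : ℚ) (c : ℚ), mul_assoc, hden]

lemma excessF_smul (c : ℝ) (f : V → V → ℝ) (v : V) :
    excessF (fun a b => c * f a b) v = c * excessF f v := by
  unfold excessF
  rw [← Finset.mul_sum, ← Finset.mul_sum]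
  ring

lemma cutF_smul (c : ℝ) (f : V → V → ℝ) (U : Finset V) :
    cutF (fun a b => c * f a b) U = c * cutF f U := by
  unfold cutF
  rw [Finset.mul_sum]
  exact Finset.sum_congr rfl fun u _ => by rw [Finset.mul_sum]

lemma cutF_mono {f g : V → V → ℝ} (h : ∀ u v, f u v ≤ g u v) (U : Finset V) :
    cutF f U ≤ cutF g U :=
  Finset.sum_le_sum fun u _ => Finset.sum_le_sum fun v _ => h u v

lemma approx_flow (w : V → V → ℝ) (hw : ∀ u v, 0 ≤ w u v) (s t : V) (hst : s ≠ t)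
    (M : ℝ) (hM : 0 ≤ M) (hcut : ∀ U : Finset V, s ∈ U → t ∉ U → M ≤ cutF w U) (n : ℕ) :
    ∃ (f : V → V → ℝ) (μ : ℝ), (∀ u v, 0 ≤ f u v) ∧ (∀ u v, f u v ≤ w u v + 1/(n+1)) ∧
      (∀ v, v ≠ s → v ≠ t → excessF f v = 0) ∧ excessF f t = μ ∧
      M - 1/(n+1) ≤ μ ∧ μ ≤ M := by
  have hε : (0:ℝ) < 1/((n:ℝ)+1) := by positivity
  have h1 := fun u v : V => exists_rat_btwn (show w u v < w u v + 1/((n:ℝ)+1) by linarith)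
  choose qw hq1 hq2 using h1
  obtain ⟨qM, hqM1, hqM2⟩ := exists_rat_btwn (show M - 1/((n:ℝ)+1) < M by linarith)
  set qM' : ℚ := max qM 0 with hqM'
  have hqM'le : (qM' : ℝ) ≤ M := by
    rw [hqM', Rat.cast_max]; exact max_le (le_of_lt hqM2) (by exact_mod_cast hM)
  have hqM'ge : M - 1/((n:ℝ)+1) ≤ (qM' : ℝ) := by
    rw [hqM', Rat.cast_max]; exact le_trans (le_of_lt hqM1) (le_max_left _ _)
  have hqM'0 : (0:ℚ) ≤ qM' := le_max_right _ _
  set N : ℕ := qM'.den * ∏ u : V, ∏ v : V, (qw u v).den with hN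
  have hNpos : 0 < N := by
    rw [hN]
    exact Nat.mul_pos qM'.den_pos (Finset.prod_pos fun u _ =>
      Finset.prod_pos fun v _ => (qw u v).den_pos)
  have hNR : (0:ℝ) < (N:ℝ) := by exact_mod_cast hNpos
  have hdvd : ∀ u v : V, (qw u v).den ∣ N := by
    intro u v
    rw [hN]
    refine Dvd.dvd.mul_left ?_ _
    exact dvd_trans (Finset.dvd_prod_of_mem (fun v => (qw u v).den) (Finset.mem_univ v))
      (Finset.dvd_prod_of_mem (fun u => ∏ v : V, (qw u v).den) (Finset.mem_univ u))
  have hMdvd : qM'.den ∣ N := by rw [hN]; exact Dvd.intro _ rfl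
  obtain ⟨K, hK⟩ := rat_scale qM' N hMdvd
  have hK0 : 0 ≤ K := by
    have : (0:ℚ) ≤ (K:ℚ) := by rw [← hK]; positivity
    exact_mod_cast this
  set M' : ℕ := K.toNat with hM'
  have hM'R : (M' : ℝ) = (N:ℝ) * (qM' : ℝ) := by
    have h2 : (N:ℝ) * ((qM' : ℚ) : ℝ) = (K : ℝ) := by exact_mod_cast hK
    have h3 : ((K.toNat : ℤ)) = K := Int.toNat_of_nonneg hK0
    rw [h2, hM']
    show ((K.toNat : ℕ) : ℝ) = (K : ℝ)
    exact_mod_cast h3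
  set w' : V → V → ℝ := fun u v => (N:ℝ) * ((qw u v : ℚ) : ℝ) with hw'
  have hw'0 : ∀ u v, 0 ≤ w' u v := fun u v =>
    mul_nonneg (le_of_lt hNR) (le_trans (hw u v) (le_of_lt (hq1 u v)))
  have hw'i : ∀ u v, ∃ k : ℤ, w' u v = k := by
    intro u v
    obtain ⟨k, hk⟩ := rat_scale (qw u v) N (hdvd u v)
    have hkR : (N:ℝ) * ((qw u v : ℚ) : ℝ) = (k : ℝ) := by exact_mod_cast hk
    exact ⟨k, hkR⟩
  have hcut' : ∀ U : Finset V, s ∈ U → t ∉ U → (M' : ℝ) ≤ cutF w' U := by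
    intro U hs ht
    have e1 : cutF w' U = (N:ℝ) * cutF (fun u v => ((qw u v : ℚ) : ℝ)) U := cutF_smul _ _ _
    have e2 : cutF w U ≤ cutF (fun u v => ((qw u v : ℚ) : ℝ)) U :=
      cutF_mono (fun u v => le_of_lt (hq1 u v)) U
    have e3 := hcut U hs ht
    rw [hM'R, e1]
    have : (qM' : ℝ) ≤ cutF (fun u v => ((qw u v : ℚ) : ℝ)) U := by linarith
    exact mul_le_mul_of_nonneg_left this (le_of_lt hNR)
  obtain ⟨g, hg0, hgw, _, hgcons, hgt⟩ := intMFMC w' hw'0 hw'i s t hst M' hcut'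
  refine ⟨fun u v => (N:ℝ)⁻¹ * g u v, (qM' : ℝ), ?_, ?_, ?_, ?_, hqM'ge, hqM'le⟩
  · intro u v
    exact mul_nonneg (by positivity) (hg0 u v)
  · intro u v
    have h2 : (N:ℝ)⁻¹ * g u v ≤ (N:ℝ)⁻¹ * w' u v :=
      mul_le_mul_of_nonneg_left (hgw u v) (by positivity)
    have h3 : (N:ℝ)⁻¹ * w' u v = ((qw u v : ℚ) : ℝ) := by
      rw [hw', ← mul_assoc, inv_mul_cancel₀ (ne_of_gt hNR), one_mul]
    calc (N:ℝ)⁻¹ * g u v ≤ (N:ℝ)⁻¹ * w' u v := h2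
      _ = ((qw u v : ℚ) : ℝ) := h3
      _ ≤ w u v + 1/((n:ℝ)+1) := le_of_lt (hq2 u v)
  · intro v hvs hvt
    rw [excessF_smul, hgcons v hvs hvt, mul_zero]
  · rw [excessF_smul, hgt, hM'R, ← mul_assoc, inv_mul_cancel₀ (ne_of_gt hNR), one_mul]

lemma realMFMC (w : V → V → ℝ) (hw : ∀ u v, 0 ≤ w u v) (s t : V) (hst : s ≠ t)
    (M : ℝ) (hM : 0 ≤ M) (hcut : ∀ U : Finset V, s ∈ U → t ∉ U → M ≤ cutF w U) :
    ∃ f : V → V → ℝ, (∀ u v, 0 ≤ f u v) ∧ (∀ u v, f u v ≤ w u v) ∧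
      (∀ v, v ≠ s → v ≠ t → excessF f v = 0) ∧ excessF f t = M := by
  have happ := fun n : ℕ => approx_flow w hw s t hst M hM hcut n
  choose F μ hF0 hFw hFcons hFt hμ1 hμ2 using happ
  set K : Set (V → V → ℝ) :=
    Set.univ.pi fun u => Set.univ.pi fun v => Set.Icc 0 (w u v + 1) with hKdef
  have hKcomp : IsCompact K :=
    isCompact_univ_pi fun u => isCompact_univ_pi fun v => isCompact_Icc
  have hmemK : ∀ n, F n ∈ K := by
    intro n
    rw [hKdef]
    rw [Set.mem_univ_pi]
    intro u
    rw [Set.mem_univ_pi]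
    intro v
    refine ⟨hF0 n u v, le_trans (hFw n u v) ?_⟩
    have : 1/((n:ℝ)+1) ≤ 1 := by
      rw [div_le_one (by positivity)]
      linarith [Nat.cast_nonneg (α := ℝ) n]
    linarith
  obtain ⟨f, hfK, φ, hφ, hconv⟩ := hKcomp.tendsto_subseq hmemK
  have heval : ∀ u v, Filter.Tendsto (fun n => F (φ n) u v) Filter.atTop (nhds (f u v)) := by
    intro u v
    have h1 := tendsto_pi_nhds.mp hconv u
    exact tendsto_pi_nhds.mp h1 v
  have hφn : ∀ n : ℕ, (n:ℝ) ≤ (φ n : ℝ) := fun n => by exact_mod_cast hφ.le_apply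
  have hεlim : Filter.Tendsto (fun n : ℕ => 1/((φ n : ℝ)+1)) Filter.atTop (nhds 0) := by
    have hub : ∀ n : ℕ, 1/((φ n : ℝ)+1) ≤ 1/((n:ℝ)+1) := by
      intro n
      apply one_div_le_one_div_of_le (by positivity)
      linarith [hφn n]
    have hlb : ∀ n : ℕ, (0:ℝ) ≤ 1/((φ n : ℝ)+1) := fun n => by positivity
    exact tendsto_of_tendsto_of_tendsto_of_le_of_le tendsto_const_nhds
      tendsto_one_div_add_atTop_nhds_zero_nat hlb hub
  refine ⟨f, ?_, ?_, ?_, ?_⟩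
  · intro u v
    have := hfK
    rw [hKdef, Set.mem_univ_pi] at this
    have h2 := this u
    rw [Set.mem_univ_pi] at h2
    exact (h2 v).1
  · intro u v
    have hle : ∀ n, F (φ n) u v ≤ w u v + 1/((φ n : ℝ)+1) := fun n => hFw (φ n) u v
    have hlim2 : Filter.Tendsto (fun n : ℕ => w u v + 1/((φ n : ℝ)+1)) Filter.atTop
        (nhds (w u v)) := by
      have := Filter.Tendsto.add (tendsto_const_nhds (x := w u v) (f := Filter.atTop)) hεlim
      simpa using this
    exact le_of_tendsto_of_tendsto' (heval u v) hlim2 hle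
  · intro v hvs hvt
    have hex : Filter.Tendsto (fun n => excessF (F (φ n)) v) Filter.atTop
        (nhds (excessF f v)) := by
      unfold excessF
      exact Filter.Tendsto.sub
        (tendsto_finset_sum _ fun u _ => heval u v)
        (tendsto_finset_sum _ fun u _ => heval v u)
    have hz : ∀ n, excessF (F (φ n)) v = 0 := fun n => hFcons (φ n) v hvs hvt
    have : Filter.Tendsto (fun _ : ℕ => (0:ℝ)) Filter.atTop (nhds (excessF f v)) := by
      simpa [hz] using hex
    exact tendsto_nhds_unique this tendsto_const_nhds
  · have hex : Filter.Tendsto (fun n => excessF (F (φ n)) t) Filter.atTop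
        (nhds (excessF f t)) := by
      unfold excessF
      exact Filter.Tendsto.sub
        (tendsto_finset_sum _ fun u _ => heval u t)
        (tendsto_finset_sum _ fun u _ => heval t u)
    have hμlim : Filter.Tendsto (fun n => μ (φ n)) Filter.atTop (nhds M) := by
      have hlb : ∀ n : ℕ, M - 1/((φ n : ℝ)+1) ≤ μ (φ n) := fun n => hμ1 (φ n)
      have hub : ∀ n : ℕ, μ (φ n) ≤ M := fun n => hμ2 (φ n)
      have hlow : Filter.Tendsto (fun n : ℕ => M - 1/((φ n : ℝ)+1)) Filter.atTop (nhds M) := by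
        have := Filter.Tendsto.sub (tendsto_const_nhds (x := M) (f := Filter.atTop)) hεlim
        simpa using this
      exact tendsto_of_tendsto_of_tendsto_of_le_of_le hlow tendsto_const_nhds hlb hub
    have hex2 : Filter.Tendsto (fun n => μ (φ n)) Filter.atTop (nhds (excessF f t)) := by
      have heq : ∀ n, excessF (F (φ n)) t = μ (φ n) := fun n => hFt (φ n)
      simpa [heq] using hex
    exact tendsto_nhds_unique hex2 hμlim

lemma halfMFMC (w : V → V → ℝ) (hw : ∀ u v, 0 ≤ w u v) (hwh : ∀ u v, ∃ n : ℤ, w u v = n/2)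
    (s t : V) (hst : s ≠ t) (M : ℝ) (hM : 0 ≤ M) (hMh : ∃ n : ℤ, M = n/2)
    (hcut : ∀ U : Finset V, s ∈ U → t ∉ U → M ≤ cutF w U) :
    ∃ f : V → V → ℝ, (∀ u v, 0 ≤ f u v) ∧ (∀ u v, f u v ≤ w u v) ∧
      (∀ u v, ∃ n : ℤ, f u v = n/2) ∧
      (∀ v, v ≠ s → v ≠ t → excessF f v = 0) ∧ excessF f t = M := by
  obtain ⟨m, hm⟩ := hMh
  have hm0 : 0 ≤ m := by
    have : (0:ℝ) ≤ (m:ℝ)/2 := hm ▸ hM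
    have : (0:ℝ) ≤ (m:ℝ) := by linarith
    exact_mod_cast this
  set w2 : V → V → ℝ := fun u v => 2 * w u v with hw2
  have hw20 : ∀ u v, 0 ≤ w2 u v := fun u v => by
    show (0:ℝ) ≤ 2 * w u v; linarith [hw u v]
  have hw2i : ∀ u v, ∃ n : ℤ, w2 u v = n := by
    intro u v
    obtain ⟨n, hn⟩ := hwh u v
    exact ⟨n, by rw [hw2]; simp only []; rw [hn]; ring⟩
  have hMnat : ((m.toNat : ℕ) : ℝ) = 2 * M := by
    have h3 : ((m.toNat : ℤ)) = m := Int.toNat_of_nonneg hm0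
    have : ((m.toNat : ℕ) : ℝ) = (m : ℝ) := by exact_mod_cast h3
    rw [this, hm]; ring
  have hcut2 : ∀ U : Finset V, s ∈ U → t ∉ U → ((m.toNat : ℕ) : ℝ) ≤ cutF w2 U := by
    intro U hs ht
    have h1 := hcut U hs ht
    have h2 : cutF w2 U = 2 * cutF w U := cutF_smul 2 w U
    rw [hMnat, h2]
    linarith
  obtain ⟨g, hg0, hgw, hgi, hgcons, hgt⟩ := intMFMC w2 hw20 hw2i s t hst m.toNat hcut2
  refine ⟨fun u v => 2⁻¹ * g u v, fun u v => by
    have := hg0 u v; show (0:ℝ) ≤ 2⁻¹ * g u v; linarith, ?_, ?_, ?_, ?_⟩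
  · intro u v
    have h1 : g u v ≤ 2 * w u v := hgw u v
    show 2⁻¹ * g u v ≤ w u v
    linarith
  · intro u v
    obtain ⟨n, hn⟩ := hgi u v
    refine ⟨n, ?_⟩
    show 2⁻¹ * g u v = n / 2
    rw [hn]; ring
  · intro v hvs hvt
    rw [excessF_smul, hgcons v hvs hvt, mul_zero]
  · rw [excessF_smul, hgt, hMnat]
    rw [hm]; ring

def innerCost (c : V → V → ℝ) (y : V → V → ℝ) : ℝ :=
  ∑ u : V, ∑ v ∈ Finset.univ.erase u, c u v * y u v

lemma bcr_split (c : V → V → ℝ) (x : V → V → V → ℝ) :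
    bcrCost c x = ∑ s : V, innerCost c (x s) := rfl

lemma innerCost_add (c : V → V → ℝ) (y y' : V → V → ℝ) :
    innerCost c (fun u v => y u v + y' u v) = innerCost c y + innerCost c y' := by
  unfold innerCost
  rw [← Finset.sum_add_distrib]
  refine Finset.sum_congr rfl fun u _ => ?_
  rw [← Finset.sum_add_distrib]
  refine Finset.sum_congr rfl fun v _ => ?_
  ring

lemma innerCost_sub (c : V → V → ℝ) (y y' : V → V → ℝ) :
    innerCost c (fun u v => y u v - y' u v) = innerCost c y - innerCost c y' := by
  unfold innerCost
  rw [← Finset.sum_sub_distrib]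
  refine Finset.sum_congr rfl fun u _ => ?_
  rw [← Finset.sum_sub_distrib]
  refine Finset.sum_congr rfl fun v _ => ?_
  ring

lemma innerCost_rev (c : V → V → ℝ) (hcs : ∀ u v : V, c u v = c v u) (f : V → V → ℝ) :
    innerCost c (fun u v => f v u) = innerCost c f := by
  unfold innerCost
  rw [Finset.sum_comm' (s' := fun v => Finset.univ.erase v) (t' := Finset.univ) (by
    intro u v
    simp only [Finset.mem_univ, Finset.mem_erase, true_and, and_true]
    exact ⟨fun h => Ne.symm h, fun h => Ne.symm h⟩)]
  refine Finset.sum_congr rfl fun u _ => Finset.sum_congr rfl fun v _ => ?_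
  rw [hcs v u]

lemma cutRev (f : V → V → ℝ) (U : Finset V) :
    ∑ u ∈ U, ∑ v ∈ Uᶜ, f v u = cutF f Uᶜ := by
  unfold cutF
  rw [compl_compl]
  exact Finset.sum_comm

lemma reroute_step (P : Finset (Finset V)) (hP : ∀ p ∈ P, p.card = 2)
    (c : V → V → ℝ) (hcs : ∀ u v : V, c u v = c v u)
    (x : V → V → V → ℝ) (z : V → Finset V → ℝ) (hfeas : ForestBCRFeasible P x z)
    (r : V) (hr : r ∉ terminals P) (hrne : ∃ p ∈ P, z r p ≠ 0) :
    ∃ (x₁ : V → V → V → ℝ) (z₁ : V → Finset V → ℝ),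
      ForestBCRFeasible P x₁ z₁ ∧
      bcrCost c x₁ = bcrCost c x ∧
      (∀ p ∈ P, z₁ r p = 0) ∧
      (∀ s, s ≠ r → s ∉ terminals P → ∀ p, z₁ s p = z s p) ∧
      (HalfIntegralSol P x z → HalfIntegralSol P x₁ z₁) := by
  obtain ⟨hx0, hz0, hzsum, hcuts⟩ := hfeas
  obtain ⟨p₀, hp₀P, _⟩ := hrne
  obtain ⟨pm, hpmP, hpmmax⟩ := Finset.exists_max_image P (fun p => z r p) ⟨p₀, hp₀P⟩
  have hpm_ne : pm.Nonempty := Finset.card_pos.mp (by rw [hP pm hpmP]; norm_num)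
  obtain ⟨a, ha⟩ := hpm_ne
  have ha_term : a ∈ terminals P := by
    rw [terminals, Finset.mem_filter]
    exact ⟨Finset.mem_univ a, pm, hpmP, ha⟩
  have har : a ≠ r := by rintro rfl; exact hr ha_term
  have hra : r ≠ a := Ne.symm har
  set M : ℝ := z r pm with hMdef
  have hM0 : 0 ≤ M := hz0 r pm hpmP
  set w : V → V → ℝ := fun u v => if u = v then 0 else x r u v with hwdef
  have hw0 : ∀ u v, 0 ≤ w u v := by
    intro u v
    show (0:ℝ) ≤ if u = v then 0 else x r u v
    by_cases h : u = v
    · simp [h]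
    · simp only [if_neg h]; exact hx0 r u v h
  have hwx : ∀ U : Finset V, cutF w U = ∑ u ∈ U, ∑ v ∈ Uᶜ, x r u v := by
    intro U
    refine Finset.sum_congr rfl fun u hu => Finset.sum_congr rfl fun v hv => ?_
    have huv : u ≠ v := by rintro rfl; exact (Finset.mem_compl.mp hv) hu
    show (if u = v then 0 else x r u v) = x r u v
    rw [if_neg huv]
  have hwxe : ∀ u v, u ≠ v → w u v = x r u v := by
    intro u v huv
    show (if u = v then 0 else x r u v) = x r u v
    rw [if_neg huv]
  have hcutw : ∀ U : Finset V, a ∈ U → r ∉ U → M ≤ cutF w U := by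
    intro U haU hrU
    rw [hwx U]
    exact hcuts r pm hpmP U hrU ⟨a, Finset.mem_inter.mpr ⟨ha, haU⟩⟩
  obtain ⟨f, hf0, hfw, hfcons, hft, hfhalf⟩ :
      ∃ f : V → V → ℝ, (∀ u v, 0 ≤ f u v) ∧ (∀ u v, f u v ≤ w u v) ∧
        (∀ v, v ≠ a → v ≠ r → excessF f v = 0) ∧ excessF f r = M ∧
        (HalfIntegralSol P x z → ∀ u v, ∃ n : ℤ, f u v = n / 2) := by
    by_cases hhalf : HalfIntegralSol P x z
    · have hwh : ∀ u v, ∃ n : ℤ, w u v = n / 2 := by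
        intro u v
        by_cases h : u = v
        · refine ⟨0, ?_⟩
          show (if u = v then 0 else x r u v) = (0:ℤ) / 2
          rw [if_pos h]; norm_num
        · obtain ⟨n, hn⟩ := hhalf.1 r u v h
          exact ⟨n, by rw [hwxe u v h]; exact hn⟩
      obtain ⟨f, h1, h2, h3, h4, h5⟩ :=
        halfMFMC w hw0 hwh a r har M hM0 (hhalf.2 r pm hpmP) hcutw
      exact ⟨f, h1, h2, h4, h5, fun _ => h3⟩
    · obtain ⟨f, h1, h2, h3, h4⟩ := realMFMC w hw0 a r har M hM0 hcutw
      exact ⟨f, h1, h2, h3, h4, fun h => absurd h hhalf⟩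
  set D : V → V → ℝ := fun u v => w u v - f u v + f v u with hDdef
  set x₁ : V → V → V → ℝ :=
    fun s u v => x s u v + (if s = a then D u v else 0) - (if s = r then x r u v else 0)
    with hx₁
  set z₁ : V → Finset V → ℝ :=
    fun s p => z s p + (if s = a then z r p else 0) - (if s = r then z r p else 0) with hz₁
  have hx₁r : ∀ u v, x₁ r u v = 0 := by
    intro u v
    show x r u v + (if r = a then D u v else 0) - (if r = r then x r u v else 0) = 0
    rw [if_neg hra, if_pos rfl]; ring
  have hx₁a : ∀ u v, x₁ a u v = x a u v + D u v := by
    intro u v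
    show x a u v + (if a = a then D u v else 0) - (if a = r then x r u v else 0)
      = x a u v + D u v
    rw [if_pos rfl, if_neg har]; ring
  have hx₁s : ∀ s, s ≠ a → s ≠ r → ∀ u v, x₁ s u v = x s u v := by
    intro s hsa hsr u v
    show x s u v + (if s = a then D u v else 0) - (if s = r then x r u v else 0) = x s u v
    rw [if_neg hsa, if_neg hsr]; ring
  have hz₁r : ∀ p, z₁ r p = 0 := by
    intro p
    show z r p + (if r = a then z r p else 0) - (if r = r then z r p else 0) = 0
    rw [if_neg hra, if_pos rfl]; ring
  have hz₁a : ∀ p, z₁ a p = z a p + z r p := by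
    intro p
    show z a p + (if a = a then z r p else 0) - (if a = r then z r p else 0) = z a p + z r p
    rw [if_pos rfl, if_neg har]; ring
  have hz₁s : ∀ s, s ≠ a → s ≠ r → ∀ p, z₁ s p = z s p := by
    intro s hsa hsr p
    show z s p + (if s = a then z r p else 0) - (if s = r then z r p else 0) = z s p
    rw [if_neg hsa, if_neg hsr]; ring
  have hx₁0 : ∀ s u v, u ≠ v → 0 ≤ x₁ s u v := by
    intro s u v huv
    by_cases hsr : s = r
    · rw [hsr, hx₁r]
    · by_cases hsa : s = a
      · rw [hsa, hx₁a]
        have h1 := hx0 a u v huv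
        have h2 := hfw u v
        have h3 := hf0 v u
        show 0 ≤ x a u v + (w u v - f u v + f v u)
        linarith
      · rw [hx₁s s hsa hsr]; exact hx0 s u v huv
  have hDcut : ∀ U : Finset V, ∑ u ∈ U, ∑ v ∈ Uᶜ, D u v
      = cutF w U - cutF f U + cutF f Uᶜ := by
    intro U
    rw [← cutRev f U]
    unfold cutF
    rw [← Finset.sum_sub_distrib, ← Finset.sum_add_distrib]
    refine Finset.sum_congr rfl fun u _ => ?_
    rw [← Finset.sum_sub_distrib, ← Finset.sum_add_distrib]
  -- feasibility
  have hfeas₁ : ForestBCRFeasible P x₁ z₁ := by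
    refine ⟨hx₁0, ?_, ?_, ?_⟩
    · intro s p hp
      by_cases hsr : s = r
      · rw [hsr, hz₁r]
      · by_cases hsa : s = a
        · rw [hsa, hz₁a]
          have := hz0 a p hp
          have := hz0 r p hp
          linarith
        · rw [hz₁s s hsa hsr]; exact hz0 s p hp
    · intro p hp
      have hsplit : ∀ s : V, z₁ s p = z s p + (if s = a then z r p else 0)
          - (if s = r then z r p else 0) := fun s => rfl
      calc ∑ s : V, z₁ s p
          = (∑ s : V, z s p) + (∑ s : V, if s = a then z r p else 0)
            - ∑ s : V, if s = r then z r p else 0 := by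
            rw [← Finset.sum_add_distrib, ← Finset.sum_sub_distrib]
        _ = 1 := by
            rw [hzsum p hp, Finset.sum_ite_eq' Finset.univ a (fun _ => z r p),
              Finset.sum_ite_eq' Finset.univ r (fun _ => z r p)]
            simp
    · intro s p hp U hsU hpU
      by_cases hsr : s = r
      · rw [hsr, hz₁r]
        exact Finset.sum_nonneg fun u hu => Finset.sum_nonneg fun v hv =>
          hx₁0 r u v (by rintro rfl; exact (Finset.mem_compl.mp hv) hu)
      · by_cases hsa : s = a
        · rw [hsa] at hsU ⊢
          rw [hz₁a]
          have hRHS : ∑ u ∈ U, ∑ v ∈ Uᶜ, x₁ a u v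
              = (∑ u ∈ U, ∑ v ∈ Uᶜ, x a u v) + (cutF w U - cutF f U + cutF f Uᶜ) := by
            rw [← hDcut U, ← Finset.sum_add_distrib]
            refine Finset.sum_congr rfl fun u _ => ?_
            rw [← Finset.sum_add_distrib]
            exact Finset.sum_congr rfl fun v _ => hx₁a u v
          rw [hRHS]
          have hxa := hcuts a p hp U hsU hpU
          have hwnn : 0 ≤ cutF w U := cutF_nonneg (fun u v _ => hw0 u v) U
          have hexc := sum_excess f U
          by_cases hrU : r ∈ U
          · have hsum : ∑ v ∈ U, excessF f v = M := by
              rw [Finset.sum_eq_single_of_mem r hrU fun v hv hvr =>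
                hfcons v (by rintro rfl; exact hsU hv) hvr]
              exact hft
            have hzr : z r p ≤ M := hpmmax p hp
            rw [hsum] at hexc
            linarith
          · have hsum : ∑ v ∈ U, excessF f v = 0 :=
              Finset.sum_eq_zero fun v hv =>
                hfcons v (by rintro rfl; exact hsU hv) (by rintro rfl; exact hrU hv)
            have hzr : z r p ≤ cutF w U := by
              rw [hwx U]
              exact hcuts r p hp U hrU hpU
            rw [hsum] at hexc
            linarith
        · rw [hz₁s s hsa hsr]
          have : ∑ u ∈ U, ∑ v ∈ Uᶜ, x₁ s u v = ∑ u ∈ U, ∑ v ∈ Uᶜ, x s u v :=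
            Finset.sum_congr rfl fun u _ => Finset.sum_congr rfl fun v _ => hx₁s s hsa hsr u v
          rw [this]
          exact hcuts s p hp U hsU hpU
  -- cost
  have hcost : bcrCost c x₁ = bcrCost c x := by
    have hpoint : ∀ s : V, innerCost c (x₁ s) = innerCost c (x s)
        + (if s = a then innerCost c D else 0) - (if s = r then innerCost c (x r) else 0) := by
      intro s
      by_cases hsr : s = r
      · rw [hsr]
        have h1 : innerCost c (x₁ r) = 0 := by
          unfold innerCost
          refine Finset.sum_eq_zero fun u _ => Finset.sum_eq_zero fun v _ => ?_
          rw [hx₁r u v, mul_zero]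
        rw [h1, if_neg hra, if_pos rfl]; ring
      · by_cases hsa : s = a
        · rw [hsa]
          have h1 : innerCost c (x₁ a) = innerCost c (x a) + innerCost c D := by
            rw [← innerCost_add c (x a) D]
            congr 1
            funext u v
            exact hx₁a u v
          rw [h1, if_pos rfl, if_neg har]; ring
        · have h1 : innerCost c (x₁ s) = innerCost c (x s) := by
            congr 1
            funext u v
            exact hx₁s s hsa hsr u v
          rw [h1, if_neg hsa, if_neg hsr]; ring
    have hDinner : innerCost c D = innerCost c (x r) := by
      have h1 : innerCost c D = innerCost c (fun u v => w u v - f u v) + innerCost c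
          (fun u v => f v u) := by
        rw [← innerCost_add]
      have h2 : innerCost c (fun u v => w u v - f u v)
          = innerCost c w - innerCost c f := innerCost_sub c w f
      have h3 : innerCost c (fun u v => f v u) = innerCost c f := innerCost_rev c hcs f
      have h4 : innerCost c w = innerCost c (x r) := by
        unfold innerCost
        refine Finset.sum_congr rfl fun u _ => Finset.sum_congr rfl fun v hv => ?_
        rw [hwxe u v (Ne.symm (Finset.mem_erase.mp hv).1)]
      rw [h1, h2, h3, h4]; ring
    rw [bcr_split, bcr_split]
    calc ∑ s : V, innerCost c (x₁ s)
        = (∑ s : V, innerCost c (x s)) + (∑ s : V, if s = a then innerCost c D else 0)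
          - ∑ s : V, if s = r then innerCost c (x r) else 0 := by
          rw [← Finset.sum_add_distrib, ← Finset.sum_sub_distrib]
          exact Finset.sum_congr rfl fun s _ => hpoint s
      _ = ∑ s : V, innerCost c (x s) := by
          rw [Finset.sum_ite_eq' Finset.univ a (fun _ => innerCost c D),
            Finset.sum_ite_eq' Finset.univ r (fun _ => innerCost c (x r))]
          simp [hDinner]
  refine ⟨x₁, z₁, hfeas₁, hcost, fun p _ => hz₁r p, ?_, ?_⟩
  · intro s hsr hsterm p
    have hsa : s ≠ a := by rintro rfl; exact hsterm ha_term
    exact hz₁s s hsa hsr p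
  · intro hh
    constructor
    · intro s u v huv
      by_cases hsr : s = r
      · refine ⟨0, ?_⟩
        rw [hsr, hx₁r u v]; norm_num
      · by_cases hsa : s = a
        · rw [hsa]
          obtain ⟨n1, hn1⟩ := hh.1 a u v huv
          obtain ⟨n2, hn2⟩ := hh.1 r u v huv
          obtain ⟨n3, hn3⟩ := hfhalf hh u v
          obtain ⟨n4, hn4⟩ := hfhalf hh v u
          refine ⟨n1 + n2 - n3 + n4, ?_⟩
          rw [hx₁a u v]
          show x a u v + (w u v - f u v + f v u) = ((n1 + n2 - n3 + n4 : ℤ) : ℝ) / 2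
          rw [hn1, hwxe u v huv, hn2, hn3, hn4]
          push_cast
          ring
        · obtain ⟨n, hn⟩ := hh.1 s u v huv
          exact ⟨n, by rw [hx₁s s hsa hsr u v]; exact hn⟩
    · intro s p hp
      by_cases hsr : s = r
      · refine ⟨0, ?_⟩
        rw [hsr, hz₁r p]; norm_num
      · by_cases hsa : s = a
        · rw [hsa]
          obtain ⟨n1, hn1⟩ := hh.2 a p hp
          obtain ⟨n2, hn2⟩ := hh.2 r p hp
          refine ⟨n1 + n2, ?_⟩
          rw [hz₁a p, hn1, hn2]
          push_cast
          ring
        · obtain ⟨n, hn⟩ := hh.2 s p hp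
          exact ⟨n, by rw [hz₁s s hsa hsr p]; exact hn⟩

end RerouteAux

/-- Every feasible Forest-BCR solution can be rerouted, without
increasing the cost, into a feasible solution in which `z^r_P = 0` for every
non-terminal root `r`; moreover half-integrality can be preserved. -/
theorem reroute_to_terminal_roots [Fintype V] [DecidableEq V]
    (P : Finset (Finset V)) (hP : ∀ p ∈ P, p.card = 2)
    (c : V → V → ℝ) (hc0 : ∀ u v : V, 0 ≤ c u v) (hcs : ∀ u v : V, c u v = c v u)
    (x : V → V → V → ℝ) (z : V → Finset V → ℝ)
    (hfeas : ForestBCRFeasible P x z) :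
    ∃ (x' : V → V → V → ℝ) (z' : V → Finset V → ℝ),
      ForestBCRFeasible P x' z' ∧
      bcrCost c x' ≤ bcrCost c x ∧
      (∀ r : V, r ∉ terminals P → ∀ p ∈ P, z' r p = 0) ∧
      (HalfIntegralSol P x z → HalfIntegralSol P x' z') := by
  classical
  suffices h : ∀ (n : ℕ) (x : V → V → V → ℝ) (z : V → Finset V → ℝ),
      ForestBCRFeasible P x z →
      ({s : V | s ∉ terminals P ∧ ∃ p ∈ P, z s p ≠ 0}).ncard ≤ n →
      ∃ (x' : V → V → V → ℝ) (z' : V → Finset V → ℝ),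
        ForestBCRFeasible P x' z' ∧ bcrCost c x' ≤ bcrCost c x ∧
        (∀ r : V, r ∉ terminals P → ∀ p ∈ P, z' r p = 0) ∧
        (HalfIntegralSol P x z → HalfIntegralSol P x' z') by
    exact h _ x z hfeas le_rfl
  intro n
  induction n with
  | zero =>
      intro x z hf hcard
      refine ⟨x, z, hf, le_rfl, ?_, fun h => h⟩
      intro r hrterm p hp
      by_contra hne
      have hmem : r ∈ {s : V | s ∉ terminals P ∧ ∃ p ∈ P, z s p ≠ 0} := ⟨hrterm, p, hp, hne⟩
      have hempty : {s : V | s ∉ terminals P ∧ ∃ p ∈ P, z s p ≠ 0} = ∅ :=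
        (Set.ncard_eq_zero (Set.toFinite _)).mp (Nat.le_zero.mp hcard)
      rw [hempty] at hmem
      exact hmem
  | succ n ih =>
      intro x z hf hcard
      by_cases hB : {s : V | s ∉ terminals P ∧ ∃ p ∈ P, z s p ≠ 0}.Nonempty
      · obtain ⟨r, hr1, hr2⟩ := hB
        obtain ⟨x₁, z₁, hfeas₁, hcost₁, hzr₁, hzkeep₁, hhalf₁⟩ :=
          RerouteAux.reroute_step P hP c hcs x z hf r hr1 hr2
        have hsub : {s : V | s ∉ terminals P ∧ ∃ p ∈ P, z₁ s p ≠ 0}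
            ⊆ {s : V | s ∉ terminals P ∧ ∃ p ∈ P, z s p ≠ 0} \ {r} := by
          rintro s ⟨hs1, p, hp, hne⟩
          have hsr : s ≠ r := by rintro rfl; exact hne (hzr₁ p hp)
          exact ⟨⟨hs1, p, hp, by rw [← hzkeep₁ s hsr hs1 p]; exact hne⟩, hsr⟩
        have hlt : ({s : V | s ∉ terminals P ∧ ∃ p ∈ P, z₁ s p ≠ 0}).ncard ≤ n := by
          have h1 := Set.ncard_le_ncard hsub (Set.toFinite _)
          have h2 := Set.ncard_diff_singleton_lt_of_mem
            (show r ∈ {s : V | s ∉ terminals P ∧ ∃ p ∈ P, z s p ≠ 0} from ⟨hr1, hr2⟩)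
            (Set.toFinite _)
          omega
        obtain ⟨x', z', hf', hc', hz', hh'⟩ := ih x₁ z₁ hfeas₁ hlt
        refine ⟨x', z', hf', ?_, hz', fun hh => hh' (hhalf₁ hh)⟩
        rw [← hcost₁]; exact hc'
      · refine ⟨x, z, hf, le_rfl, ?_, fun h => h⟩
        intro r hrterm p hp
        by_contra hne
        exact hB ⟨r, hrterm, p, hp, hne⟩
end
end

section
/- Let V be a finite set, let x assign a nonnegative real x^r_{(u,v)} to each r ∈ V and each ordered pair (u,v) of distinct vertices, and let W ⊆ V with |W| ≥ 2 maximize density_x(W) among all subsets of V of size at least 2, with density_x(W) > 0. Let c̄ be a nonnegative symmetric cost function on pairs of distinct vertices of W. Then there exists a set T of unordered pairs of vertices of W such that (W, T) is a spanning tree of the complete graph on W and ∑_{{u,w}∈T} c̄(u,w) ≤ (∑_{(u,w): u,w ∈ W, u≠w} c̄(u,w) · ∑_{r∈V} x^r_{(u,w)}) / density_x(W). -/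
open Finset

noncomputable section

variable {V : Type*}

/-- Total `x`-value `x(E[W])` of directed edges with both endpoints in `W`. -/
def xEdges [Fintype V] [DecidableEq V] (x : V → V → V → ℝ) (W : Finset V) : ℝ :=
  ∑ r : V, ∑ u ∈ W, ∑ v ∈ W.erase u, x r u v

/-- The density of `W` with respect to `x`: `x(E[W]) / (|W| − 1)`. -/
def densityX [Fintype V] [DecidableEq V] (x : V → V → V → ℝ) (W : Finset V) : ℝ :=
  xEdges x W / ((W.card : ℝ) - 1)


set_option linter.unusedSectionVars false
set_option linter.unusedVariables false
set_option maxHeartbeats 1000000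

namespace MSTaux

variable {V : Type*} [DecidableEq V]

/-- Reachability via a finite set of unordered edges. -/
def relF (F : Finset (Sym2 V)) (u v : V) : Prop :=
  Relation.ReflTransGen (fun a b => s(a, b) ∈ F) u v

lemma relF.refl {F : Finset (Sym2 V)} {u : V} : relF F u u := Relation.ReflTransGen.refl

lemma relF.symm {F : Finset (Sym2 V)} {u v : V} (h : relF F u v) : relF F v u :=
  by haveI : Std.Symm (fun a b : V => s(a, b) ∈ F) := ⟨fun a b hab => by rwa [Sym2.eq_swap] at hab⟩; exact Std.Symm.symm (r := Relation.ReflTransGen (fun a b : V => s(a, b) ∈ F)) _ _ h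

lemma relF.trans {F : Finset (Sym2 V)} {u v w : V} (h : relF F u v) (h' : relF F v w) :
    relF F u w := Relation.ReflTransGen.trans h h'

lemma relF.single {F : Finset (Sym2 V)} {u v : V} (h : s(u, v) ∈ F) : relF F u v :=
  Relation.ReflTransGen.single h

lemma relF.mono {F F' : Finset (Sym2 V)} (hFF : F ⊆ F') {u v : V} (h : relF F u v) :
    relF F' u v := Relation.ReflTransGen.mono (fun a b hab => hFF hab) _ _ h

lemma relF_empty {u v : V} (h : relF (∅ : Finset (Sym2 V)) u v) : u = v := by
  induction h with
  | refl => rfl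
  | tail hy hz ih => exact absurd hz (Finset.notMem_empty _)

lemma relF_insert_cases {F : Finset (Sym2 V)} {a b u v : V}
    (h : relF (insert s(a, b) F) u v) :
    relF F u v ∨ ((relF F u a ∨ relF F u b) ∧ (relF F v a ∨ relF F v b)) := by
  induction h with
  | refl => exact Or.inl relF.refl
  | @tail y z hy hz ih =>
    rcases Finset.mem_insert.1 hz with h1 | h1
    · rw [Sym2.eq, Sym2.rel_iff] at h1
      right
      constructor
      · rcases ih with h2 | ⟨h2, _⟩
        · rcases h1 with ⟨hy1, _⟩ | ⟨hy1, _⟩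
          · exact Or.inl (hy1 ▸ h2)
          · exact Or.inr (hy1 ▸ h2)
        · exact h2
      · rcases h1 with ⟨_, hz1⟩ | ⟨_, hz1⟩
        · exact Or.inr (by rw [hz1]; exact relF.refl)
        · exact Or.inl (by rw [hz1]; exact relF.refl)
    · rcases ih with h2 | ⟨h2, h3⟩
      · exact Or.inl (Relation.ReflTransGen.tail h2 h1)
      · refine Or.inr ⟨h2, ?_⟩
        have hzy : relF F z y := relF.single (by rwa [Sym2.eq_swap])
        rcases h3 with h3 | h3
        · exact Or.inl (hzy.trans h3)
        · exact Or.inr (hzy.trans h3)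

lemma relF_erase_or {F : Finset (Sym2 V)} {a b u v : V} (h : relF F u v) :
    relF (F.erase s(a, b)) u v ∨ relF (F.erase s(a, b)) u a ∨ relF (F.erase s(a, b)) u b := by
  induction h with
  | refl => exact Or.inl relF.refl
  | @tail y z hy hz ih =>
    rcases ih with h1 | h1 | h1
    · by_cases he : s(y, z) = s(a, b)
      · rw [Sym2.eq, Sym2.rel_iff] at he
        rcases he with ⟨hy1, _⟩ | ⟨hy1, _⟩
        · exact Or.inr (Or.inl (hy1 ▸ h1))
        · exact Or.inr (Or.inr (hy1 ▸ h1))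
      · exact Or.inl (Relation.ReflTransGen.tail h1 (Finset.mem_erase.2 ⟨he, hz⟩))
    · exact Or.inr (Or.inl h1)
    · exact Or.inr (Or.inr h1)

lemma exists_exit {F : Finset (Sym2 V)} {A : Finset V} {u : V} (hu : u ∈ A) :
    ∀ {v : V}, relF F v u → v ∉ A →
    ∃ a b, a ∈ A ∧ b ∉ A ∧ s(b, a) ∈ F ∧ relF (F.erase s(b, a)) v b := by
  intro v h
  induction h using Relation.ReflTransGen.head_induction_on with
  | refl => exact fun hv => absurd hu hv
  | @head p q hstep htail ih =>
    intro hp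
    by_cases hq : q ∈ A
    · exact ⟨q, p, hq, hp, hstep, relF.refl⟩
    · obtain ⟨a, b, ha, hb, hmem, hrel⟩ := ih hq
      have hne : s(p, q) ≠ s(b, a) := by
        intro h
        rw [Sym2.eq, Sym2.rel_iff] at h
        rcases h with ⟨_, h2⟩ | ⟨h2, _⟩
        · exact hq (h2 ▸ ha)
        · exact hp (h2 ▸ ha)
      exact ⟨a, b, ha, hb, hmem,
        Relation.ReflTransGen.head (Finset.mem_erase.2 ⟨hne, hstep⟩) hrel⟩


open Classical in
/-- The reachability class of `u` inside `W`. -/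
noncomputable def clF (W : Finset V) (F : Finset (Sym2 V)) (u : V) : Finset V :=
  W.filter (fun w => relF F u w)

lemma mem_clF {W : Finset V} {F : Finset (Sym2 V)} {u w : V} :
    w ∈ clF W F u ↔ w ∈ W ∧ relF F u w := by
  simp [clF]

lemma mem_clF_self {W : Finset V} {F : Finset (Sym2 V)} {u : V} (hu : u ∈ W) :
    u ∈ clF W F u := mem_clF.2 ⟨hu, relF.refl⟩

lemma clF_eq_of_relF {W : Finset V} {F : Finset (Sym2 V)} {u v : V} (h : relF F u v) :
    clF W F u = clF W F v := by
  ext w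
  simp only [mem_clF]
  exact ⟨fun ⟨hw, hr⟩ => ⟨hw, (h.symm).trans hr⟩, fun ⟨hw, hr⟩ => ⟨hw, h.trans hr⟩⟩

lemma relF_of_clF_eq {W : Finset V} {F : Finset (Sym2 V)} {u v : V} (hv : v ∈ W)
    (h : clF W F u = clF W F v) : relF F u v := by
  have : v ∈ clF W F u := h ▸ mem_clF_self hv
  exact (mem_clF.1 this).2

open Classical in
/-- merge map on classes -/
noncomputable def psiF (W : Finset V) (F' : Finset (Sym2 V)) (T : Finset V) : Finset V :=
  W.filter (fun w => ∃ z ∈ T, relF F' z w)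

lemma psiF_clF {W : Finset V} {F F' : Finset (Sym2 V)} (hFF : F ⊆ F') {u : V} (hu : u ∈ W) :
    psiF W F' (clF W F u) = clF W F' u := by
  classical
  ext w
  simp only [psiF, clF, Finset.mem_filter]
  constructor
  · rintro ⟨hw, z, hz, hzw⟩
    obtain ⟨hzW, huz⟩ := hz
    exact ⟨hw, (relF.mono hFF huz).trans hzw⟩
  · rintro ⟨hw, huw⟩
    exact ⟨hw, u, ⟨hu, relF.refl⟩, huw⟩

lemma classes_insert (W : Finset V) (F : Finset (Sym2 V)) (a b : V) :
    (W.image (clF W F)).card ≤ (W.image (clF W (insert s(a, b) F))).card + 1 := by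
  classical
  set F' := insert s(a, b) F with hF'
  have hsub : F ⊆ F' := Finset.subset_insert _ _
  set X := clF W F a with hX
  have hinj : Set.InjOn (psiF W F') ↑((W.image (clF W F)).erase X) := by
    intro S hS S' hS' hpsi
    simp only [Finset.coe_erase, Set.mem_diff, Finset.mem_coe, Finset.mem_image,
      Set.mem_singleton_iff] at hS hS'
    obtain ⟨⟨u, hu, rfl⟩, hSX⟩ := hS
    obtain ⟨⟨v, hv, rfl⟩, hS'X⟩ := hS'
    rw [psiF_clF hsub hu, psiF_clF hsub hv] at hpsi
    have h1 : relF F' u v := relF_of_clF_eq hv hpsi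
    rcases relF_insert_cases h1 with h2 | ⟨h2, h3⟩
    · exact clF_eq_of_relF h2
    · rcases h2 with h2 | h2
      · exact absurd (clF_eq_of_relF h2) hSX
      · rcases h3 with h3 | h3
        · exact absurd (clF_eq_of_relF h3) hS'X
        · exact clF_eq_of_relF (h2.trans h3.symm)
  have hmaps : ∀ S ∈ (W.image (clF W F)).erase X, psiF W F' S ∈ W.image (clF W F') := by
    intro S hS
    obtain ⟨u, hu, rfl⟩ := Finset.mem_image.1 (Finset.mem_of_mem_erase hS)
    rw [psiF_clF hsub hu]
    exact Finset.mem_image_of_mem _ hu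
  have h1 : ((W.image (clF W F)).erase X).card ≤ (W.image (clF W F')).card :=
    Finset.card_le_card_of_injOn _ hmaps hinj
  have h2 : (W.image (clF W F)).card ≤ ((W.image (clF W F)).erase X).card + 1 := by
    by_cases hXmem : X ∈ W.image (clF W F)
    · rw [Finset.card_erase_of_mem hXmem]
      omega
    · rw [Finset.erase_eq_of_notMem hXmem]
      omega
  omega

lemma card_le_edges_add_classes (W : Finset V) (F : Finset (Sym2 V)) :
    W.card ≤ F.card + (W.image (clF W F)).card := by
  classical
  induction F using Finset.induction_on with
  | empty =>
    have hcard : (W.image (clF W (∅ : Finset (Sym2 V)))).card = W.card := by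
      apply Finset.card_image_of_injOn
      intro u hu v hv h
      exact relF_empty (relF_of_clF_eq (by simpa using hv) h)
    omega
  | @insert e F he ih =>
    induction e using Sym2.ind with
    | _ a b =>
      have key := classes_insert W F a b
      rw [Finset.card_insert_of_notMem he]
      omega

lemma classes_biUnion (W : Finset V) (F : Finset (Sym2 V)) :
    (W.image (clF W F)).biUnion id = W := by
  ext w
  simp only [Finset.mem_biUnion, Finset.mem_image, id]
  constructor
  · rintro ⟨S, ⟨u, hu, rfl⟩, hw⟩
    exact (mem_clF.1 hw).1
  · intro hw
    exact ⟨clF W F w, ⟨w, hw, rfl⟩, mem_clF_self hw⟩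

lemma classes_disjoint (W : Finset V) (F : Finset (Sym2 V)) :
    ∀ S ∈ W.image (clF W F), ∀ S' ∈ W.image (clF W F), S ≠ S' → Disjoint S S' := by
  intro S hS S' hS' hne
  obtain ⟨u, hu, rfl⟩ := Finset.mem_image.1 hS
  obtain ⟨v, hv, rfl⟩ := Finset.mem_image.1 hS'
  rw [Finset.disjoint_left]
  intro w hw hw'
  obtain ⟨hwW, huw⟩ := mem_clF.1 hw
  obtain ⟨_, hvw⟩ := mem_clF.1 hw'
  exact hne (clF_eq_of_relF (huw.trans hvw.symm))

lemma classes_sum_card (W : Finset V) (F : Finset (Sym2 V)) :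
    ∑ S ∈ W.image (clF W F), S.card = W.card := by
  classical
  rw [← Finset.card_biUnion (classes_disjoint W F)]
  rw [show ((W.image (clF W F)).biUnion fun S => S) = (W.image (clF W F)).biUnion id from rfl,
    classes_biUnion]


lemma layer_aux {β : Type*} [DecidableEq β] :
    ∀ (n : ℕ) (P T : Finset β) (f C : β → ℝ),
      ((P.image C).filter (fun v => 0 < v)).card ≤ n →
      T ⊆ P → (∀ e ∈ P, 0 ≤ f e) → (∀ e ∈ P, 0 ≤ C e) →
      (∀ t : ℝ, 0 < t →
        (((T.filter (fun e => t ≤ C e)).card : ℝ)) ≤ ∑ e ∈ P.filter (fun e => t ≤ C e), f e) →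
      ((T.card : ℝ) ≤ ∑ e ∈ P, f e) →
      ∑ e ∈ T, C e ≤ ∑ e ∈ P, C e * f e := by
  intro n
  induction n with
  | zero =>
    intro P T f C hn hTP hf hC hthr h0
    have hzero : ∀ e ∈ P, C e = 0 := by
      intro e he
      by_contra h
      have h1 : 0 < C e := lt_of_le_of_ne (hC e he) (Ne.symm h)
      have h2 : C e ∈ (P.image C).filter (fun v => 0 < v) :=
        Finset.mem_filter.2 ⟨Finset.mem_image_of_mem _ he, h1⟩
      have h3 := Finset.card_pos.2 ⟨_, h2⟩
      omega
    have hL : ∑ e ∈ T, C e = 0 := Finset.sum_eq_zero fun e he => hzero e (hTP he)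
    have hR : 0 ≤ ∑ e ∈ P, C e * f e :=
      Finset.sum_nonneg fun e he => by rw [hzero e he, zero_mul]
    linarith
  | succ n ih =>
    intro P T f C hn hTP hf hC hthr h0
    by_cases hemp : ((P.image C).filter (fun v => 0 < v)) = ∅
    · exact ih P T f C (by rw [hemp]; simp) hTP hf hC hthr h0
    have hne : ((P.image C).filter (fun v => 0 < v)).Nonempty :=
      Finset.nonempty_of_ne_empty hemp
    set M : ℝ := ((P.image C).filter (fun v => 0 < v)).max' hne with hM
    have hMmem := Finset.max'_mem _ hne
    have hMpos : 0 < M := (Finset.mem_filter.1 hMmem).2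
    have hMub : ∀ e ∈ P, C e ≤ M := by
      intro e he
      by_cases h : 0 < C e
      · exact Finset.le_max' _ _ (Finset.mem_filter.2 ⟨Finset.mem_image_of_mem _ he, h⟩)
      · push_neg at h; linarith
    set S' : Finset ℝ :=
      insert (0 : ℝ) (((P.image C).filter (fun v => 0 < v)).filter (fun v => v < M)) with hS'
    have hS'ne : S'.Nonempty := ⟨0, Finset.mem_insert_self _ _⟩
    set M' : ℝ := S'.max' hS'ne with hM'
    have hM'0 : 0 ≤ M' := Finset.le_max' _ 0 (Finset.mem_insert_self _ _)
    have hM'M : M' < M := by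
      have h1 : M' ∈ S' := hM' ▸ Finset.max'_mem S' hS'ne
      rw [hS'] at h1
      rcases Finset.mem_insert.1 h1 with h2 | h2
      · exact h2 ▸ hMpos
      · exact (Finset.mem_filter.1 h2).2
    have hsplit : ∀ e ∈ P, C e = M ∨ C e ≤ M' := by
      intro e he
      by_cases h : C e = M
      · exact Or.inl h
      right
      by_cases h2 : 0 < C e
      · refine Finset.le_max' _ _ ?_
        rw [hS']
        refine Finset.mem_insert_of_mem (Finset.mem_filter.2 ⟨?_, ?_⟩)
        · exact Finset.mem_filter.2 ⟨Finset.mem_image_of_mem _ he, h2⟩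
        · exact lt_of_le_of_ne (hMub e he) h
      · push_neg at h2; linarith
    set C' : β → ℝ := fun e => min (C e) M' with hC'def
    have hC'P : ∀ e ∈ P, 0 ≤ C' e := fun e he => le_min (hC e he) hM'0
    have hC'le : ∀ e, C' e ≤ M' := fun e => min_le_right _ _
    have hC'eq : ∀ e ∈ P, C e = C' e + (M - M') * (if M ≤ C e then 1 else 0) := by
      intro e he
      rcases hsplit e he with h | h
      · rw [if_pos (le_of_eq h.symm), hC'def]
        simp only []
        rw [h, min_eq_right hM'M.le]
        ring
      · rw [if_neg (by intro h2; nlinarith), hC'def]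
        simp only []
        rw [min_eq_left (by linarith)]
        ring
    have hmeas : ((P.image C').filter (fun v => 0 < v)).card ≤ n := by
      have hsub : (P.image C').filter (fun v => 0 < v) ⊆
          ((P.image C).filter (fun v => 0 < v)).erase M := by
        intro w hw
        obtain ⟨hw1, hw2⟩ := Finset.mem_filter.1 hw
        obtain ⟨e, he, rfl⟩ := Finset.mem_image.1 hw1
        refine Finset.mem_erase.2 ⟨by have := hC'le e; intro h; rw [h] at this; linarith, ?_⟩
        refine Finset.mem_filter.2 ⟨?_, hw2⟩
        by_cases h : C e ≤ M'
        · have : C' e = C e := min_eq_left h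
          rw [this]
          exact Finset.mem_image_of_mem _ he
        · push_neg at h
          have hCe : C' e = M' := min_eq_right h.le
          have hM'pos : 0 < M' := by rw [← hCe]; exact hw2
          have h1 : M' ∈ S' := hM' ▸ Finset.max'_mem S' hS'ne
          rw [hS'] at h1
          rcases Finset.mem_insert.1 h1 with h2 | h2
          · exact absurd hM'pos (by simp [h2])
          · rw [hCe]
            exact (Finset.mem_filter.1 (Finset.mem_filter.1 h2).1).1
      have h1 : (((P.image C).filter (fun v => 0 < v)).erase M).card
          = ((P.image C).filter (fun v => 0 < v)).card - 1 :=
        Finset.card_erase_of_mem hMmem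
      have h2 := Finset.card_le_card hsub
      omega
    have hthr' : ∀ t : ℝ, 0 < t →
        (((T.filter (fun e => t ≤ C' e)).card : ℝ)) ≤ ∑ e ∈ P.filter (fun e => t ≤ C' e), f e := by
      intro t ht
      by_cases htM' : t ≤ M'
      · have hiffT : T.filter (fun e => t ≤ C' e) = T.filter (fun e => t ≤ C e) := by
          apply Finset.filter_congr
          intro e he
          simp only [hC'def, le_min_iff, eq_iff_iff]
          constructor
          · exact fun h => h.1
          · exact fun h => ⟨h, htM'⟩
        have hiffP : P.filter (fun e => t ≤ C' e) = P.filter (fun e => t ≤ C e) := by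
          apply Finset.filter_congr
          intro e he
          simp only [hC'def, le_min_iff, eq_iff_iff]
          constructor
          · exact fun h => h.1
          · exact fun h => ⟨h, htM'⟩
        rw [hiffT, hiffP]
        exact hthr t ht
      · push_neg at htM'
        have hTe : T.filter (fun e => t ≤ C' e) = ∅ := by
          apply Finset.filter_false_of_mem
          intro e he
          push_neg
          exact lt_of_le_of_lt (hC'le e) htM'
        rw [hTe]
        simp only [Finset.card_empty, Nat.cast_zero]
        exact Finset.sum_nonneg fun e he => hf e (Finset.mem_of_mem_filter _ he)
    have hind : ∑ e ∈ T, C' e ≤ ∑ e ∈ P, C' e * f e :=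
      ih P T f C' hmeas hTP hf hC'P hthr' h0
    have htop : ((T.filter (fun e => M ≤ C e)).card : ℝ)
        ≤ ∑ e ∈ P.filter (fun e => M ≤ C e), f e := hthr M hMpos
    have hLdec : ∑ e ∈ T, C e
        = ∑ e ∈ T, C' e + (M - M') * ((T.filter (fun e => M ≤ C e)).card : ℝ) := by
      rw [Finset.sum_congr rfl (fun e he => hC'eq e (hTP he))]
      rw [Finset.sum_add_distrib, ← Finset.mul_sum, Finset.sum_boole]
    have hRdec : ∑ e ∈ P, C e * f e
        = ∑ e ∈ P, C' e * f e + (M - M') * ∑ e ∈ P.filter (fun e => M ≤ C e), f e := by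
      have h1 : ∀ e ∈ P, C e * f e
          = C' e * f e + (M - M') * (if M ≤ C e then f e else 0) := by
        intro e he
        by_cases h : M ≤ C e
        · rw [if_pos h]
          have h2 := hC'eq e he
          rw [if_pos h] at h2
          rw [h2]; ring
        · rw [if_neg h]
          have h2 := hC'eq e he
          rw [if_neg h] at h2
          rw [h2]; ring
      rw [Finset.sum_congr rfl h1, Finset.sum_add_distrib, ← Finset.mul_sum,
        ← Finset.sum_filter]
    rw [hLdec, hRdec]
    have hMM' : 0 ≤ M - M' := by linarith
    have h2 : (M - M') * ((T.filter (fun e => M ≤ C e)).card : ℝ)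
        ≤ (M - M') * ∑ e ∈ P.filter (fun e => M ≤ C e), f e :=
      mul_le_mul_of_nonneg_left htop hMM'
    linarith


lemma sum_offDiag_eq (S : Finset V) (g : V → V → ℝ) :
    ∑ p ∈ S.offDiag, g p.1 p.2 = ∑ u ∈ S, ∑ v ∈ S.erase u, g u v := by
  rw [show S.offDiag = (S ×ˢ S).filter (fun p : V × V => p.1 ≠ p.2) from by ext p; simp [and_assoc],
    Finset.sum_filter, Finset.sum_product]
  refine Finset.sum_congr rfl fun u hu => ?_
  rw [← Finset.filter_ne' S u, Finset.sum_filter]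
  exact Finset.sum_congr rfl fun v hv => if_congr ⟨Ne.symm, Ne.symm⟩ rfl rfl

lemma sum_offDiag_swap (S : Finset V) (g : V → V → ℝ) :
    ∑ p ∈ S.offDiag, g p.1 p.2 = ∑ p ∈ S.offDiag, g p.2 p.1 := by
  refine Finset.sum_nbij' Prod.swap Prod.swap ?_ ?_ ?_ ?_ ?_
  · intro p hp
    rw [Finset.mem_offDiag] at hp ⊢
    exact ⟨hp.2.1, hp.1, hp.2.2.symm⟩
  · intro p hp
    rw [Finset.mem_offDiag] at hp ⊢
    exact ⟨hp.2.1, hp.1, hp.2.2.symm⟩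
  · intro p _; rfl
  · intro p _; rfl
  · intro p _; rfl

lemma sum_pairs [Fintype V] (S : Finset V) (g : V → V → ℝ) (hg : ∀ a b, g a b = g b a) :
    ∑ e ∈ S.sym2.filter (fun e => ¬ e.IsDiag), Sym2.lift ⟨g, hg⟩ e
      = (∑ u ∈ S, ∑ v ∈ S.erase u, g u v) / 2 := by
  letI : LinearOrder V := LinearOrder.lift' (Fintype.equivFin V) (Equiv.injective _)
  have key := Finset.sum_sym2_filter_not_isDiag S (Sym2.lift ⟨g, hg⟩)
  rw [Finset.filter_congr_decidable] at key
  have main : ∑ p ∈ S.offDiag.filter (fun p => p.1 < p.2), Sym2.lift ⟨g, hg⟩ s(p.1, p.2)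
      = (∑ u ∈ S, ∑ v ∈ S.erase u, g u v) / 2 := by
    have h1 : ∑ p ∈ S.offDiag.filter (fun p => p.1 < p.2), Sym2.lift ⟨g, hg⟩ s(p.1, p.2)
        = ∑ p ∈ S.offDiag.filter (fun p => p.1 < p.2), g p.1 p.2 :=
      Finset.sum_congr rfl fun p _ => Sym2.lift_mk _ _ _
    rw [h1]
    have h2 : ∑ p ∈ S.offDiag, g p.1 p.2
        = ∑ p ∈ S.offDiag.filter (fun p => p.1 < p.2), g p.1 p.2
          + ∑ p ∈ S.offDiag.filter (fun p => ¬ p.1 < p.2), g p.1 p.2 :=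
      (Finset.sum_filter_add_sum_filter_not _ _ _).symm
    have h3 : ∑ p ∈ S.offDiag.filter (fun p => ¬ p.1 < p.2), g p.1 p.2
        = ∑ p ∈ S.offDiag.filter (fun p => p.1 < p.2), g p.1 p.2 := by
      refine Finset.sum_nbij' Prod.swap Prod.swap ?_ ?_ ?_ ?_ ?_
      · intro p hp
        obtain ⟨hp1, hp2⟩ := Finset.mem_filter.1 hp
        rw [Finset.mem_offDiag] at hp1
        refine Finset.mem_filter.2 ⟨Finset.mem_offDiag.2 ⟨hp1.2.1, hp1.1, hp1.2.2.symm⟩, ?_⟩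
        exact lt_of_le_of_ne (not_lt.1 hp2) hp1.2.2.symm
      · intro p hp
        obtain ⟨hp1, hp2⟩ := Finset.mem_filter.1 hp
        rw [Finset.mem_offDiag] at hp1
        exact Finset.mem_filter.2 ⟨Finset.mem_offDiag.2 ⟨hp1.2.1, hp1.1, hp1.2.2.symm⟩,
          not_lt.2 hp2.le⟩
      · intro p _; rfl
      · intro p _; rfl
      · intro p _; exact hg _ _
    rw [sum_offDiag_eq] at h2
    rw [h3] at h2
    linarith
  rw [key]
  convert main using 2


/-- Existence of a spanning tree of the complete graph on `W` with the Kruskal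
threshold property. -/
lemma exists_good_tree (W : Finset V) (hW : 2 ≤ W.card) (C : Sym2 V → ℝ) :
    ∃ T : Finset (Sym2 V), T ⊆ W.sym2.filter (fun e => ¬ e.IsDiag) ∧
      T.card = W.card - 1 ∧ (∀ u ∈ W, ∀ v ∈ W, relF T u v) ∧
      (∀ t : ℝ, ∀ u ∈ W, ∀ v ∈ W, C s(u, v) < t →
        relF (T.filter (fun e => C e < t)) u v) := by
  classical
  set pairsW : Finset (Sym2 V) := W.sym2.filter (fun e => ¬ e.IsDiag) with hpairs
  have hmem_pairs : ∀ {p q : V}, s(p, q) ∈ pairsW ↔ (p ∈ W ∧ q ∈ W ∧ p ≠ q) := by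
    intro p q
    rw [hpairs, Finset.mem_filter, Finset.mk_mem_sym2_iff, Sym2.mk_isDiag_iff]
    tauto
  set Fam : Finset (Finset (Sym2 V)) :=
    pairsW.powerset.filter
      (fun T => T.card = W.card - 1 ∧ ∀ u ∈ W, ∀ v ∈ W, relF T u v) with hFam
  have hFam_ne : Fam.Nonempty := by
    obtain ⟨w0, hw0⟩ := Finset.card_pos.1 (by omega : 0 < W.card)
    refine ⟨(W.erase w0).image (fun w => s(w0, w)), ?_⟩
    have hkey : ∀ v ∈ W, relF ((W.erase w0).image (fun w => s(w0, w))) w0 v := by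
      intro v hv
      by_cases h : v = w0
      · exact h ▸ relF.refl
      · exact relF.single (Finset.mem_image.2 ⟨v, Finset.mem_erase.2 ⟨h, hv⟩, rfl⟩)
    rw [hFam, Finset.mem_filter, Finset.mem_powerset]
    refine ⟨?_, ?_, ?_⟩
    · intro e he
      obtain ⟨w, hw, rfl⟩ := Finset.mem_image.1 he
      exact hmem_pairs.2 ⟨hw0, Finset.mem_of_mem_erase hw, (Finset.ne_of_mem_erase hw).symm⟩
    · rw [Finset.card_image_of_injOn (fun w _ w' _ h => Sym2.congr_right.1 h),
        Finset.card_erase_of_mem hw0]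
    · intro u hu v hv
      exact (hkey u hu).symm.trans (hkey v hv)
  obtain ⟨T, hTFam, hmin⟩ := Finset.exists_min_image Fam (fun T => ∑ e ∈ T, C e) hFam_ne
  rw [hFam, Finset.mem_filter, Finset.mem_powerset] at hTFam
  obtain ⟨hTsub, hTcard, hTspan⟩ := hTFam
  refine ⟨T, hTsub, hTcard, hTspan, ?_⟩
  intro t u hu v hv hCuv
  by_cases huv : u = v
  · exact huv ▸ relF.refl
  by_contra hcon
  set Tlt : Finset (Sym2 V) := T.filter (fun e => C e < t) with hTlt
  set A : Finset V := W.filter (fun w => relF Tlt u w) with hA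
  have huA : u ∈ A := Finset.mem_filter.2 ⟨hu, relF.refl⟩
  have hvA : v ∉ A := fun h => hcon (Finset.mem_filter.1 h).2
  obtain ⟨a', b', ha', hb', hmemT, hrel⟩ := exists_exit huA ((hTspan u hu v hv).symm) hvA
  set e0 : Sym2 V := s(b', a') with he0
  have ha'W : a' ∈ W := (Finset.mem_filter.1 ha').1
  have hb'W : b' ∈ W := by
    have := hTsub hmemT
    exact (hmem_pairs.1 this).1
  have hCe0 : ¬ C e0 < t := by
    intro h
    apply hb'
    refine Finset.mem_filter.2 ⟨hb'W, ?_⟩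
    have h1 : relF Tlt u a' := (Finset.mem_filter.1 ha').2
    have h2 : s(a', b') ∈ Tlt := by
      rw [hTlt, Finset.mem_filter]
      constructor
      · rwa [Sym2.eq_swap]
      · rwa [show C s(a', b') = C e0 from by rw [he0, Sym2.eq_swap]]
    exact h1.trans (relF.single h2)
  have hTlt_sub : Tlt ⊆ T.erase e0 := by
    intro e he
    obtain ⟨heT, heC⟩ := Finset.mem_filter.1 he
    exact Finset.mem_erase.2 ⟨fun h => hCe0 (h ▸ heC), heT⟩
  have huvT : s(u, v) ∉ T := by
    intro h
    exact hcon (relF.single (Finset.mem_filter.2 ⟨h, hCuv⟩))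
  set T' : Finset (Sym2 V) := insert s(u, v) (T.erase e0) with hT'
  have huvT' : s(u, v) ∉ T.erase e0 := fun h => huvT (Finset.mem_of_mem_erase h)
  have hT'card : T'.card = W.card - 1 := by
    rw [hT', Finset.card_insert_of_notMem huvT', Finset.card_erase_of_mem hmemT]
    have h1 : 1 ≤ T.card := by
      rw [hTcard]; omega
    omega
  have hT'sub : T' ⊆ pairsW := by
    rw [hT']
    refine Finset.insert_subset (hmem_pairs.2 ⟨hu, hv, huv⟩) ?_
    exact (Finset.erase_subset _ _).trans hTsub
  have hT'reach_u : ∀ w ∈ W, relF T' w u := by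
    intro w hw
    have hsub1 : T.erase e0 ⊆ T' := by rw [hT']; exact Finset.subset_insert _ _
    have hreach_a' : relF T' a' u := by
      have h1 : relF Tlt u a' := (Finset.mem_filter.1 ha').2
      exact (relF.mono (hTlt_sub.trans hsub1) h1).symm
    have hreach_b' : relF T' b' u := by
      have h1 : relF T' b' v := (relF.mono hsub1 hrel).symm
      have h2 : relF T' v u := (relF.single (Finset.mem_insert_self _ _)).symm
      exact h1.trans h2
    rcases relF_erase_or (a := b') (b := a') (hTspan w hw u hu) with h1 | h1 | h1
    · exact relF.mono hsub1 h1
    · exact (relF.mono hsub1 h1).trans hreach_b'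
    · exact (relF.mono hsub1 h1).trans hreach_a'
  have hT'Fam : T' ∈ Fam := by
    rw [hFam, Finset.mem_filter, Finset.mem_powerset]
    exact ⟨hT'sub, hT'card, fun p hp q hq => (hT'reach_u p hp).trans (hT'reach_u q hq).symm⟩
  have hcost : ∑ e ∈ T', C e < ∑ e ∈ T, C e := by
    rw [hT', Finset.sum_insert huvT']
    have h1 : ∑ e ∈ T.erase e0, C e = ∑ e ∈ T, C e - C e0 := by
      rw [← Finset.sum_erase_add T C hmemT]; ring
    rw [h1]
    have h2 : t ≤ C e0 := not_lt.1 hCe0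
    linarith
  exact absurd (hmin T' hT'Fam) (not_le.2 hcost)


end MSTaux

/-- If `W` is a densest subset (of size at least `2`) with respect to
`x` and has positive density, then the complete graph on `W` has a spanning tree `T`
(given by a set of `|W| − 1` compatibly oriented pairs) whose cost is at most
`c̄(x|_{E[W]}) / density_x(W)`. -/
theorem mst_cost_bound {V : Type*} [Fintype V] [DecidableEq V]
    (x : V → V → V → ℝ) (hx : ∀ r u v : V, u ≠ v → 0 ≤ x r u v)
    (W : Finset V) (hW : 2 ≤ W.card)
    (hmax : ∀ W' : Finset V, 2 ≤ W'.card → densityX x W' ≤ densityX x W)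
    (hpos : 0 < densityX x W)
    (cb : V → V → ℝ)
    (hcb0 : ∀ u ∈ W, ∀ v ∈ W, 0 ≤ cb u v)
    (hcbs : ∀ u ∈ W, ∀ v ∈ W, cb u v = cb v u) :
    ∃ T : Finset (V × V),
      (∀ p ∈ T, p.1 ∈ W ∧ p.2 ∈ W ∧ p.1 ≠ p.2) ∧
      T.card = W.card - 1 ∧
      (T.image fun p => Sym2.mk p.1 p.2).card = T.card ∧
      (∀ u ∈ W, ∀ v ∈ W,
        (SimpleGraph.fromEdgeSet (↑(T.image fun p => Sym2.mk p.1 p.2) : Set (Sym2 V))).Reachable u v) ∧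
      ∑ p ∈ T, cb p.1 p.2 ≤
        (∑ u ∈ W, ∑ v ∈ W.erase u, cb u v * ∑ r : V, x r u v) / densityX x W := by
  classical
  set D : ℝ := densityX x W with hD
  have hD0 : 0 < D := hpos
  set y : V → V → ℝ := fun u v => ∑ r : V, x r u v with hy
  have hy0 : ∀ u v : V, u ≠ v → 0 ≤ y u v := fun u v h =>
    Finset.sum_nonneg fun r _ => hx r u v h
  -- symmetric weight function
  set gf : V → V → ℝ := fun u v => if u ∈ W ∧ v ∈ W ∧ u ≠ v then (y u v + y v u) / D else 0
    with hgfdef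
  have hgf : ∀ a b, gf a b = gf b a := by
    intro a b
    rw [hgfdef]
    simp only []
    by_cases h : a ∈ W ∧ b ∈ W ∧ a ≠ b
    · rw [if_pos h, if_pos ⟨h.2.1, h.1, h.2.2.symm⟩]; ring
    · rw [if_neg h, if_neg (fun h' => h ⟨h'.2.1, h'.1, h'.2.2.symm⟩)]
  -- symmetric cost function
  set gc : V → V → ℝ := fun u v => if u ∈ W ∧ v ∈ W then cb u v else 0 with hgcdef
  have hgc : ∀ a b, gc a b = gc b a := by
    intro a b
    rw [hgcdef]
    simp only []
    by_cases h : a ∈ W ∧ b ∈ W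
    · rw [if_pos h, if_pos ⟨h.2, h.1⟩]
      exact hcbs a h.1 b h.2
    · rw [if_neg h, if_neg (fun h' => h ⟨h'.2, h'.1⟩)]
  set f : Sym2 V → ℝ := Sym2.lift ⟨gf, hgf⟩ with hfdef
  set C : Sym2 V → ℝ := Sym2.lift ⟨gc, hgc⟩ with hCdef
  have hfmk : ∀ a b : V, f s(a, b) = gf a b := fun a b => by
    rw [hfdef]; exact Sym2.lift_mk _ _ _
  have hCmk : ∀ a b : V, C s(a, b) = gc a b := fun a b => by
    rw [hCdef]; exact Sym2.lift_mk _ _ _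
  set pairsW : Finset (Sym2 V) := W.sym2.filter (fun e => ¬ e.IsDiag) with hpairsW
  have hmem_pairs : ∀ {p q : V}, s(p, q) ∈ pairsW ↔ (p ∈ W ∧ q ∈ W ∧ p ≠ q) := by
    intro p q
    rw [hpairsW, Finset.mem_filter, Finset.mk_mem_sym2_iff, Sym2.mk_isDiag_iff]
    tauto
  have hf0 : ∀ e : Sym2 V, 0 ≤ f e := by
    intro e
    induction e using Sym2.ind with
    | _ a b =>
      rw [hfmk, hgfdef]
      simp only []
      by_cases h : a ∈ W ∧ b ∈ W ∧ a ≠ b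
      · rw [if_pos h]
        exact div_nonneg (add_nonneg (hy0 a b h.2.2) (hy0 b a h.2.2.symm)) hD0.le
      · rw [if_neg h]
  have hC0 : ∀ e : Sym2 V, 0 ≤ C e := by
    intro e
    induction e using Sym2.ind with
    | _ a b =>
      rw [hCmk, hgcdef]
      simp only []
      by_cases h : a ∈ W ∧ b ∈ W
      · rw [if_pos h]
        exact hcb0 a h.1 b h.2
      · rw [if_neg h]
  -- basic sum identities
  have hxesum : ∀ S : Finset V, ∑ u ∈ S, ∑ v ∈ S.erase u, y u v = xEdges x S := by
    intro S
    have h1 : ∑ u ∈ S, ∑ v ∈ S.erase u, y u v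
        = ∑ u ∈ S, ∑ r : V, ∑ v ∈ S.erase u, x r u v := by
      refine Finset.sum_congr rfl fun u _ => ?_
      rw [hy]
      exact Finset.sum_comm
    rw [h1, xEdges]
    exact Finset.sum_comm
  have hswapy : ∀ S : Finset V, ∑ u ∈ S, ∑ v ∈ S.erase u, y v u
      = ∑ u ∈ S, ∑ v ∈ S.erase u, y u v := by
    intro S
    calc ∑ u ∈ S, ∑ v ∈ S.erase u, y v u
        = ∑ p ∈ S.offDiag, (fun a b => y b a) p.1 p.2 :=
          (MSTaux.sum_offDiag_eq S (fun a b => y b a)).symm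
      _ = ∑ p ∈ S.offDiag, (fun a b => y b a) p.2 p.1 :=
          MSTaux.sum_offDiag_swap S (fun a b => y b a)
      _ = ∑ u ∈ S, ∑ v ∈ S.erase u, y u v := MSTaux.sum_offDiag_eq S (fun a b => y a b)
  have hsumf : ∀ S : Finset V, S ⊆ W →
      ∑ e ∈ S.sym2.filter (fun e => ¬ e.IsDiag), f e = xEdges x S / D := by
    intro S hSW
    rw [hfdef, MSTaux.sum_pairs S gf hgf]
    have h1 : ∀ u ∈ S, ∀ v ∈ S.erase u, gf u v = (y u v + y v u) / D := by
      intro u hu v hv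
      rw [hgfdef]
      simp only []
      rw [if_pos ⟨hSW hu, hSW (Finset.mem_of_mem_erase hv), ((Finset.mem_erase.1 hv).1).symm⟩]
    have h2 : ∑ u ∈ S, ∑ v ∈ S.erase u, gf u v
        = ∑ u ∈ S, ∑ v ∈ S.erase u, (y u v + y v u) / D :=
      Finset.sum_congr rfl fun u hu => Finset.sum_congr rfl fun v hv => h1 u hu v hv
    rw [h2]
    simp only [← Finset.sum_div, Finset.sum_add_distrib]
    rw [hswapy, hxesum]
    ring
  have hsub : ∀ S : Finset V, S ⊆ W → S.Nonempty →
      ∑ e ∈ S.sym2.filter (fun e => ¬ e.IsDiag), f e ≤ (S.card : ℝ) - 1 := by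
    intro S hSW hSne
    rw [hsumf S hSW]
    by_cases h2 : 2 ≤ S.card
    · have hden := hmax S h2
      unfold densityX at hden
      have hc1 : (0 : ℝ) < (S.card : ℝ) - 1 := by
        have : (2 : ℝ) ≤ (S.card : ℝ) := by exact_mod_cast h2
        linarith
      have h3 : xEdges x S ≤ D * ((S.card : ℝ) - 1) := by
        have := (div_le_iff₀ hc1).1 hden
        linarith
      rw [div_le_iff₀ hD0]
      linarith [h3]
    · have hcard1 : S.card = 1 := by
        have := Finset.card_pos.2 hSne
        omega
      obtain ⟨a, rfl⟩ := Finset.card_eq_one.1 hcard1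
      have hxe : xEdges x {a} = 0 := by
        rw [xEdges]
        simp
      rw [hxe]
      simp
  have htopf : ∑ e ∈ pairsW, f e = (W.card : ℝ) - 1 := by
    rw [hpairsW, hsumf W subset_rfl]
    have hc1 : ((W.card : ℝ) - 1) ≠ 0 := by
      have : (2 : ℝ) ≤ (W.card : ℝ) := by exact_mod_cast hW
      intro h; rw [sub_eq_zero] at h; rw [h] at this; norm_num at this
    have hxe : xEdges x W = D * ((W.card : ℝ) - 1) := by
      rw [hD, densityX]
      field_simp
    rw [hxe, mul_comm]
    exact mul_div_cancel_right₀ _ (ne_of_gt hD0)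
  -- get the tree
  obtain ⟨T, hTsub, hTcard, hTspan, hTthr⟩ := MSTaux.exists_good_tree W hW C
  rw [← hpairsW] at hTsub
  have hTcardR : (T.card : ℝ) = (W.card : ℝ) - 1 := by
    rw [hTcard, Nat.cast_sub (by omega)]
    norm_num
  -- the threshold inequality for the layer lemma
  have hthr : ∀ t : ℝ, 0 < t →
      ((T.filter (fun e => t ≤ C e)).card : ℝ) ≤ ∑ e ∈ pairsW.filter (fun e => t ≤ C e), f e := by
    intro t ht
    set F : Finset (Sym2 V) := T.filter (fun e => C e < t) with hF
    set CL : Finset (Finset V) := W.image (MSTaux.clF W F) with hCL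
    have hCLprop : ∀ S ∈ CL, S ⊆ W ∧ S.Nonempty := by
      intro S hS
      obtain ⟨w, hw, rfl⟩ := Finset.mem_image.1 hS
      exact ⟨Finset.filter_subset _ _, ⟨w, MSTaux.mem_clF_self hw⟩⟩
    have hdisj : Set.PairwiseDisjoint (↑CL) (fun S : Finset V =>
        S.sym2.filter (fun e => ¬ e.IsDiag)) := by
      intro S hS S' hS' hne
      have hd := MSTaux.classes_disjoint W F S (by exact_mod_cast hS) S' (by exact_mod_cast hS') hne
      simp only [Function.onFun]
      rw [Finset.disjoint_left]
      intro e he he'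
      induction e using Sym2.ind with
      | _ p q =>
        have h1 : p ∈ S := (Finset.mk_mem_sym2_iff.1 (Finset.mem_of_mem_filter _ he)).1
        have h2 : p ∈ S' := (Finset.mk_mem_sym2_iff.1 (Finset.mem_of_mem_filter _ he')).1
        exact (Finset.disjoint_left.1 hd h1) h2
    have hcover : pairsW.filter (fun e => C e < t)
        ⊆ CL.biUnion (fun S => S.sym2.filter (fun e => ¬ e.IsDiag)) := by
      intro e he
      obtain ⟨he1, he2⟩ := Finset.mem_filter.1 he
      induction e using Sym2.ind with
      | _ p q =>
        obtain ⟨hp, hq, hpq⟩ := hmem_pairs.1 he1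
        have hrel : MSTaux.relF F p q := hTthr t p hp q hq he2
        refine Finset.mem_biUnion.2 ⟨MSTaux.clF W F p, Finset.mem_image_of_mem _ hp, ?_⟩
        refine Finset.mem_filter.2 ⟨?_, by rw [Sym2.mk_isDiag_iff]; exact hpq⟩
        exact Finset.mk_mem_sym2_iff.2 ⟨MSTaux.mem_clF_self hp, MSTaux.mem_clF.2 ⟨hq, hrel⟩⟩
    have hstep1 : ∑ e ∈ pairsW.filter (fun e => C e < t), f e
        ≤ ∑ S ∈ CL, ∑ e ∈ S.sym2.filter (fun e => ¬ e.IsDiag), f e := by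
      rw [← Finset.sum_biUnion hdisj]
      exact Finset.sum_le_sum_of_subset_of_nonneg hcover (fun e _ _ => hf0 e)
    have hstep2 : ∑ S ∈ CL, ∑ e ∈ S.sym2.filter (fun e => ¬ e.IsDiag), f e
        ≤ ∑ S ∈ CL, ((S.card : ℝ) - 1) :=
      Finset.sum_le_sum fun S hS => hsub S (hCLprop S hS).1 (hCLprop S hS).2
    have hstep3 : ∑ S ∈ CL, ((S.card : ℝ) - 1) = (W.card : ℝ) - (CL.card : ℝ) := by
      rw [Finset.sum_sub_distrib, Finset.sum_const, nsmul_eq_mul, mul_one]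
      congr 1
      rw [← Nat.cast_sum]
      have h := MSTaux.classes_sum_card W F
      rw [← hCL] at h
      exact_mod_cast h
    have hstep4 : (W.card : ℝ) - (CL.card : ℝ) ≤ (F.card : ℝ) := by
      have := MSTaux.card_le_edges_add_classes W F
      rw [← hCL] at this
      have h2 : (W.card : ℝ) ≤ (F.card : ℝ) + (CL.card : ℝ) := by exact_mod_cast this
      linarith
    have hA : ∑ e ∈ pairsW.filter (fun e => C e < t), f e ≤ (F.card : ℝ) := by
      calc ∑ e ∈ pairsW.filter (fun e => C e < t), f e
          ≤ ∑ S ∈ CL, ((S.card : ℝ) - 1) := hstep1.trans hstep2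
        _ = (W.card : ℝ) - (CL.card : ℝ) := hstep3
        _ ≤ (F.card : ℝ) := hstep4
    -- complement counting
    have hFeq : T.filter (fun e => ¬ t ≤ C e) = F := by
      rw [hF]
      apply Finset.filter_congr
      intro e _
      simp [not_le]
    have hnat : (T.filter (fun e => t ≤ C e)).card + F.card = T.card := by
      rw [← hFeq]
      exact Finset.card_filter_add_card_filter_not _
    have hPeq : pairsW.filter (fun e => ¬ t ≤ C e) = pairsW.filter (fun e => C e < t) := by
      apply Finset.filter_congr
      intro e _
      simp [not_le]
    have hPsplit : ∑ e ∈ pairsW.filter (fun e => t ≤ C e), f e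
        + ∑ e ∈ pairsW.filter (fun e => C e < t), f e = (W.card : ℝ) - 1 := by
      rw [← hPeq, Finset.sum_filter_add_sum_filter_not, htopf]
    have hcardeq : ((T.filter (fun e => t ≤ C e)).card : ℝ) + (F.card : ℝ) = (W.card : ℝ) - 1 := by
      rw [← hTcardR]
      exact_mod_cast congrArg (Nat.cast : ℕ → ℝ) hnat
    linarith
  -- apply the layer-cake lemma
  have hfinal : ∑ e ∈ T, C e ≤ ∑ e ∈ pairsW, C e * f e := by
    refine MSTaux.layer_aux (((pairsW.image C).filter (fun v => 0 < v)).card) pairsW T f C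
      le_rfl hTsub (fun e _ => hf0 e) (fun e _ => hC0 e) hthr ?_
    rw [hTcardR, htopf]
  -- compute the right-hand side
  have hcosteq : ∑ e ∈ pairsW, C e * f e
      = (∑ u ∈ W, ∑ v ∈ W.erase u, cb u v * y u v) / D := by
    have hsym : ∀ a b, gc a b * gf a b = gc b a * gf b a := fun a b => by
      rw [hgf a b, hgc a b]
    have hlift : ∀ e : Sym2 V, C e * f e = Sym2.lift ⟨fun u v => gc u v * gf u v, hsym⟩ e := by
      intro e
      induction e using Sym2.ind with
      | _ a b =>
        rw [hCmk, hfmk]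
        exact (Sym2.lift_mk ⟨fun u v => gc u v * gf u v, hsym⟩ a b).symm
    rw [Finset.sum_congr rfl (fun e _ => hlift e), hpairsW,
      MSTaux.sum_pairs W (fun u v => gc u v * gf u v) hsym]
    have h1 : ∀ u ∈ W, ∀ v ∈ W.erase u, gc u v * gf u v
        = (cb u v * y u v + cb u v * y v u) / D := by
      intro u hu v hv
      have hvW : v ∈ W := Finset.mem_of_mem_erase hv
      have hne : u ≠ v := ((Finset.mem_erase.1 hv).1).symm
      rw [hgcdef, hgfdef]
      simp only []
      rw [if_pos ⟨hu, hvW⟩, if_pos ⟨hu, hvW, hne⟩]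
      ring
    rw [Finset.sum_congr rfl (fun u hu => Finset.sum_congr rfl (fun v hv => h1 u hu v hv))]
    simp only [← Finset.sum_div, Finset.sum_add_distrib]
    have hswapc : ∑ u ∈ W, ∑ v ∈ W.erase u, cb u v * y v u
        = ∑ u ∈ W, ∑ v ∈ W.erase u, cb u v * y u v := by
      calc ∑ u ∈ W, ∑ v ∈ W.erase u, cb u v * y v u
          = ∑ p ∈ W.offDiag, (fun a b => cb a b * y b a) p.1 p.2 :=
            (MSTaux.sum_offDiag_eq W (fun a b => cb a b * y b a)).symm
        _ = ∑ p ∈ W.offDiag, (fun a b => cb a b * y b a) p.2 p.1 :=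
            MSTaux.sum_offDiag_swap W (fun a b => cb a b * y b a)
        _ = ∑ p ∈ W.offDiag, cb p.1 p.2 * y p.1 p.2 := by
            refine Finset.sum_congr rfl fun p hp => ?_
            obtain ⟨hp1, hp2, _⟩ := Finset.mem_offDiag.1 hp
            simp only []
            rw [hcbs p.2 hp2 p.1 hp1]
        _ = ∑ u ∈ W, ∑ v ∈ W.erase u, cb u v * y u v :=
            MSTaux.sum_offDiag_eq W (fun a b => cb a b * y a b)
    rw [hswapc]
    ring
  -- construct the oriented tree
  have hout : ∀ e : Sym2 V, Sym2.mk (Quot.out e).1 (Quot.out e).2 = e := fun e => Quot.out_eq e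
  have hinj : Function.Injective (Quot.out : Sym2 V → V × V) := fun e e' h => by
    rw [← hout e, ← hout e', h]
  refine ⟨T.image Quot.out, ?_, ?_, ?_, ?_, ?_⟩
  · intro p hp
    obtain ⟨e, he, rfl⟩ := Finset.mem_image.1 hp
    have he' : Sym2.mk (Quot.out e).1 (Quot.out e).2 ∈ pairsW := by rw [hout]; exact hTsub he
    exact hmem_pairs.1 he'
  · rw [Finset.card_image_of_injective T hinj, hTcard]
  · have himg : ((T.image Quot.out).image fun p => Sym2.mk p.1 p.2) = T := by
      rw [Finset.image_image]
      exact (Finset.image_congr (fun e _ => hout e)).trans Finset.image_id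
    rw [himg, Finset.card_image_of_injective T hinj]
  · have himg : ((T.image Quot.out).image fun p => Sym2.mk p.1 p.2) = T := by
      rw [Finset.image_image]
      exact (Finset.image_congr (fun e _ => hout e)).trans Finset.image_id
    rw [himg]
    have hreach : ∀ u v : V, MSTaux.relF T u v →
        (SimpleGraph.fromEdgeSet (↑T : Set (Sym2 V))).Reachable u v := by
      intro u v h
      induction h with
      | refl => exact ⟨SimpleGraph.Walk.nil⟩
      | @tail p q hp hq ih =>
        by_cases hpq : p = q
        · exact hpq ▸ ih
        · exact ih.trans (SimpleGraph.Adj.reachable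
            ((SimpleGraph.fromEdgeSet_adj _).2 ⟨Finset.mem_coe.2 hq, hpq⟩))
    exact fun u hu v hv => hreach u v (hTspan u hu v hv)
  · have hsum_out : ∑ p ∈ T.image Quot.out, cb p.1 p.2 = ∑ e ∈ T, C e := by
      rw [Finset.sum_image (fun e _ e' _ h => hinj h)]
      refine Finset.sum_congr rfl fun e he => ?_
      have he' : Sym2.mk (Quot.out e).1 (Quot.out e).2 ∈ pairsW := by rw [hout]; exact hTsub he
      obtain ⟨h1, h2, _⟩ := hmem_pairs.1 he'
      have h3 : C e = gc (Quot.out e).1 (Quot.out e).2 := by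
        conv_lhs => rw [← hout e]
        exact hCmk _ _
      rw [h3, hgcdef]
      simp only []
      rw [if_pos ⟨h1, h2⟩]
    show ∑ p ∈ T.image Quot.out, cb p.1 p.2
      ≤ (∑ u ∈ W, ∑ v ∈ W.erase u, cb u v * y u v) / D
    calc ∑ p ∈ T.image Quot.out, cb p.1 p.2 = ∑ e ∈ T, C e := hsum_out
      _ ≤ ∑ e ∈ pairsW, C e * f e := hfinal
      _ = (∑ u ∈ W, ∑ v ∈ W.erase u, cb u v * y u v) / D := hcosteq
end
end

section
/- Let V be a finite set, let x assign a nonnegative real x^r_{(u,v)} to each r ∈ V and each ordered pair (u,v) of distinct vertices, and let W ⊆ V with |W| ≥ 2 maximize density_x(W) among all subsets of V of size at least 2. Then for every partition π of W into nonempty parts, x(E[W]) − ∑_{U∈π} x(E[U]) ≥ density_x(W)·(|π| − 1). -/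
/-! Maximality of `W` bounds each part by `x(E[U]) ≤ density_x(W) · (|U| − 1)` (trivially for
singletons, which span no edges); summing over `π` gives
`∑ x(E[U]) ≤ density_x(W) · (|W| − |π|)`, while `x(E[W]) = density_x(W) · (|W| − 1)`. -/

open Finset

noncomputable section

variable {V : Type*}

section

variable [Fintype V] [DecidableEq V] (x : V → V → V → ℝ)

theorem xEdges_eq_zero_of_card_le_one {W : Finset V} (hW : W.card ≤ 1) : xEdges x W = 0 := by
  refine sum_eq_zero fun r _ => sum_eq_zero fun u hu => ?_
  have hWu : W.erase u = ∅ := card_eq_zero.mp (by rw [card_erase_of_mem hu]; omega)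
  rw [hWu, sum_empty]

/-- For `|W| ≤ 1` both sides vanish: `x(E[W]) = 0`, whatever the junk value of the division. -/
theorem xEdges_eq_densityX_mul (W : Finset V) :
    xEdges x W = densityX x W * ((W.card : ℝ) - 1) := by
  rcases le_or_gt W.card 1 with hW | hW
  · rw [densityX, xEdges_eq_zero_of_card_le_one x hW, zero_div, zero_mul]
  · have hpos : (0 : ℝ) < (W.card : ℝ) - 1 := sub_pos.mpr (by exact_mod_cast hW)
    rw [densityX, div_mul_cancel₀ _ hpos.ne']

theorem xEdges_le_mul_of_densityX_le {U : Finset V} (hU : U.Nonempty) {d : ℝ}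
    (hd : 2 ≤ U.card → densityX x U ≤ d) : xEdges x U ≤ d * ((U.card : ℝ) - 1) := by
  rcases Nat.lt_or_ge U.card 2 with hU1 | hU2
  · have hcard : U.card = 1 := by have := hU.card_pos; omega
    rw [xEdges_eq_zero_of_card_le_one x hcard.le, hcard, Nat.cast_one, sub_self, mul_zero]
  · have hnonneg : (0 : ℝ) ≤ (U.card : ℝ) - 1 :=
      sub_nonneg.mpr (Nat.one_le_cast.mpr hU.card_pos)
    rw [xEdges_eq_densityX_mul x U]
    exact mul_le_mul_of_nonneg_right (hd hU2) hnonneg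

end

theorem densest_subgraph_partition_inequality_general {V : Type*} [Fintype V] [DecidableEq V]
    (x : V → V → V → ℝ)
    (W : Finset V)
    (hmax : ∀ W' : Finset V, 2 ≤ W'.card → densityX x W' ≤ densityX x W)
    (π : Finset (Finset V))
    (hne : ∀ U ∈ π, U.Nonempty)
    (hdisj : ∀ A ∈ π, ∀ B ∈ π, A ≠ B → Disjoint A B)
    (hcover : π.biUnion id = W) :
    densityX x W * ((π.card : ℝ) - 1) ≤ xEdges x W - ∑ U ∈ π, xEdges x U := by
  set d := densityX x W
  have hcard : ∑ U ∈ π, (U.card : ℝ) = W.card := by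
    have hcardNat : ∑ U ∈ π, U.card = W.card := hcover ▸ (card_biUnion hdisj).symm
    exact_mod_cast hcardNat
  have hparts : ∑ U ∈ π, xEdges x U ≤ d * ((W.card : ℝ) - π.card) :=
    calc ∑ U ∈ π, xEdges x U ≤ ∑ U ∈ π, d * ((U.card : ℝ) - 1) :=
          sum_le_sum fun U hU => xEdges_le_mul_of_densityX_le x (hne U hU) (hmax U)
      _ = d * ((W.card : ℝ) - π.card) := by
          rw [← mul_sum, sum_sub_distrib, hcard, sum_const, nsmul_one]
  rw [xEdges_eq_densityX_mul x W]
  linarith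

/-- If `W` (of size at least `2`) maximizes the density with respect to
`x`, then for every partition `π` of `W` into nonempty parts,
`x(E[W]) − ∑_{U ∈ π} x(E[U]) ≥ density_x(W) · (|π| − 1)`. -/
theorem densest_subgraph_partition_inequality {V : Type*} [Fintype V] [DecidableEq V]
    (x : V → V → V → ℝ) (hx : ∀ r u v : V, u ≠ v → 0 ≤ x r u v)
    (W : Finset V) (hW : 2 ≤ W.card)
    (hmax : ∀ W' : Finset V, 2 ≤ W'.card → densityX x W' ≤ densityX x W)
    (π : Finset (Finset V))
    (hne : ∀ U ∈ π, U.Nonempty)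
    (hdisj : ∀ A ∈ π, ∀ B ∈ π, A ≠ B → Disjoint A B)
    (hcover : π.biUnion id = W) :
    densityX x W * ((π.card : ℝ) - 1) ≤ xEdges x W - ∑ U ∈ π, xEdges x U :=
  densest_subgraph_partition_inequality_general x W hmax π hne hdisj hcover
end
end

section
/- Let H be a finite simple graph in which every vertex has degree at least 2, and suppose that for every vertex v of H, the closed neighborhood of v contains a vertex of degree at least 3 (i.e., v itself or some neighbor of v has degree at least 3). Then the number of edges of H is at least (9/8) times the number of vertices of H. -/
open Finset

namespace SimpleGraph

variable {V : Type*} [Fintype V] [DecidableEq V] (H : SimpleGraph V) [DecidableRel H.Adj]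

lemma card_compl_le_sum_degree_of_dominating (A : Finset V)
    (hdom : ∀ v ∉ A, ∃ w ∈ A, H.Adj v w) : #Aᶜ ≤ ∑ w ∈ A, H.degree w := by
  have hcover : Aᶜ ⊆ A.biUnion (H.neighborFinset ·) := fun v hv ↦ by
    obtain ⟨w, hwA, hvw⟩ := hdom v (mem_compl.mp hv)
    exact mem_biUnion.mpr ⟨w, hwA, (H.mem_neighborFinset w v).mpr hvw.symm⟩
  calc #Aᶜ ≤ #(A.biUnion (H.neighborFinset ·)) := card_le_card hcover
    _ ≤ ∑ w ∈ A, #(H.neighborFinset w) := card_biUnion_le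
    _ = ∑ w ∈ A, H.degree w := by simp only [card_neighborFinset_eq_degree]

end SimpleGraph

open SimpleGraph

theorem edges_ge_nine_eighths_vertices_general {V : Type*} [Fintype V]
    (H : SimpleGraph V) [DecidableRel H.Adj]
    (hdeg2 : ∀ v : V, 2 ≤ H.degree v)
    (hdeg3 : ∀ v : V, ∃ w : V, (w = v ∨ H.Adj v w) ∧ 3 ≤ H.degree w) :
    (9 / 8 : ℝ) * (Fintype.card V : ℝ) ≤ (H.edgeFinset.card : ℝ) := by
  classical
  set A : Finset V := univ.filter fun v ↦ 3 ≤ H.degree v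
  have hdom : ∀ v ∉ A, ∃ w ∈ A, H.Adj v w := fun v hv ↦ by
    obtain ⟨w, rfl | hvw, hw⟩ := hdeg3 v
    · exact (hv (mem_filter.mpr ⟨mem_univ _, hw⟩)).elim
    · exact ⟨w, mem_filter.mpr ⟨mem_univ _, hw⟩, hvw⟩
  have hdegA : #A * 3 ≤ ∑ w ∈ A, H.degree w :=
    card_nsmul_le_sum A _ 3 fun w hw ↦ (mem_filter.mp hw).2
  have hdegAc : #Aᶜ * 2 ≤ ∑ w ∈ Aᶜ, H.degree w := card_nsmul_le_sum _ _ 2 fun w _ ↦ hdeg2 w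
  have hsum : ∑ w ∈ A, H.degree w + ∑ w ∈ Aᶜ, H.degree w = 2 * #H.edgeFinset := by
    rw [sum_add_sum_compl, sum_degrees_eq_twice_card_edges]
  have hcard : #A + #Aᶜ = Fintype.card V := card_add_card_compl A
  have hAc_le_sum := H.card_compl_le_sum_degree_of_dominating A hdom
  -- `8e = 4 Σ_A deg + 4 Σ_Aᶜ deg ≥ (3 Σ_A deg + Σ_A deg) + 8 #Aᶜ ≥ (9 #A + #Aᶜ) + 8 #Aᶜ`
  have : 9 * Fintype.card V ≤ 8 * #H.edgeFinset := by omega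
  have : (9 : ℝ) * Fintype.card V ≤ 8 * #H.edgeFinset := by exact_mod_cast this
  linarith

/-- If every vertex of a finite simple graph `H` has degree at least
`2` and every closed neighborhood contains a vertex of degree at least `3`, then `H`
has at least `(9/8)` times as many edges as vertices. -/
theorem edges_ge_nine_eighths_vertices {V : Type*} [Fintype V] [DecidableEq V]
    (H : SimpleGraph V) [DecidableRel H.Adj]
    (hdeg2 : ∀ v : V, 2 ≤ H.degree v)
    (hdeg3 : ∀ v : V, ∃ w : V, (w = v ∨ H.Adj v w) ∧ 3 ≤ H.degree w) :
    (9 / 8 : ℝ) * (Fintype.card V : ℝ) ≤ (H.edgeFinset.card : ℝ) :=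
  edges_ge_nine_eighths_vertices_general H hdeg2 hdeg3
end

section
/- Let (x,z) be a feasible solution to Forest-BCR, let v be a terminal, i.e., v ∈ P for some P ∈ 𝒫, and suppose there exist a vertex r ∈ V with r ≠ v and a directed edge (u,v) entering v with x^r_{(u,v)} > 0. Then ∑_{r'∈V} ( ∑_{e∈δ⁺({v})} x^{r'}_e + ∑_{e∈δ⁻({v})} x^{r'}_e ) > 1. -/
open Finset

noncomputable section

variable {V : Type*}

/-! For a root `r' ≠ v` the cut `{v}` bounds `z^{r'}_P` by the out-flow of `x^{r'}` at `v`; for the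
root `v` the cut `V ∖ {v}`, which meets `P` in its other vertex, bounds `z^v_P` by the in-flow of
`x^v` at `v`. Summing over all roots, the degree of `v` is at least `∑ r', z^{r'}_P = 1`, and the
in-flow `x^r_{(u,v)} > 0` at the root `r ≠ v` is not consumed by this bound. -/

def outFlow [Fintype V] [DecidableEq V] (x : V → V → V → ℝ) (r v : V) : ℝ :=
  ∑ w ∈ univ.erase v, x r v w

def inFlow [Fintype V] [DecidableEq V] (x : V → V → V → ℝ) (r v : V) : ℝ :=
  ∑ w ∈ univ.erase v, x r w v

namespace ForestBCRFeasible

variable [Fintype V] [DecidableEq V] {P : Finset (Finset V)} {x : V → V → V → ℝ}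
  {z : V → Finset V → ℝ}

theorem outFlow_nonneg (hfeas : ForestBCRFeasible P x z) (r v : V) : 0 ≤ outFlow x r v :=
  sum_nonneg fun _ hw => hfeas.1 r v _ (ne_of_mem_erase hw).symm

theorem inFlow_nonneg (hfeas : ForestBCRFeasible P x z) (r v : V) : 0 ≤ inFlow x r v :=
  sum_nonneg fun _ hw => hfeas.1 r _ v (ne_of_mem_erase hw)

theorem le_inFlow_of_ne (hfeas : ForestBCRFeasible P x z) (r : V) {u v : V} (hu : u ≠ v) :
    x r u v ≤ inFlow x r v :=
  single_le_sum (fun _ hw => hfeas.1 r _ v (ne_of_mem_erase hw)) (mem_erase.2 ⟨hu, mem_univ u⟩)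

theorem le_outFlow (hfeas : ForestBCRFeasible P x z) {p : Finset V} (hp : p ∈ P) {r v : V}
    (hr : r ≠ v) (hv : v ∈ p) : z r p ≤ outFlow x r v := by
  have hcut := hfeas.2.2.2 r p hp {v} (by simpa using hr) ⟨v, by simpa using hv⟩
  rwa [sum_singleton, compl_singleton] at hcut

theorem le_inFlow_self (hfeas : ForestBCRFeasible P x z) {p : Finset V} (hp : p ∈ P)
    {v w : V} (hw : w ∈ p) (hwv : w ≠ v) : z v p ≤ inFlow x v v := by
  have hcut := hfeas.2.2.2 v p hp (univ.erase v) (notMem_erase v univ)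
    ⟨w, mem_inter.2 ⟨hw, mem_erase.2 ⟨hwv, mem_univ w⟩⟩⟩
  have hcompl : (univ.erase v)ᶜ = {v} := by
    ext a
    simp
  simp only [hcompl, sum_singleton] at hcut
  exact hcut

theorem le_outFlow_add_inFlow (hfeas : ForestBCRFeasible P x z) {p : Finset V} (hp : p ∈ P)
    (hcard : 1 < p.card) {v : V} (hv : v ∈ p) (r : V) :
    z r p ≤ outFlow x r v + inFlow x r v := by
  by_cases hr : r = v
  · subst hr
    obtain ⟨w, hw, hwr⟩ := exists_mem_ne hcard r
    exact (hfeas.le_inFlow_self hp hw hwr).trans (le_add_of_nonneg_left (hfeas.outFlow_nonneg r r))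
  · exact (hfeas.le_outFlow hp hr hv).trans (le_add_of_nonneg_right (hfeas.inFlow_nonneg r v))

theorem add_le_outFlow_add_inFlow (hfeas : ForestBCRFeasible P x z) {p : Finset V} (hp : p ∈ P)
    {r u v : V} (hr : r ≠ v) (hu : u ≠ v) (hv : v ∈ p) :
    z r p + x r u v ≤ outFlow x r v + inFlow x r v :=
  add_le_add (hfeas.le_outFlow hp hr hv) (hfeas.le_inFlow_of_ne r hu)

end ForestBCRFeasible

/-- In a feasible Forest-BCR solution, if a terminal `v` has an
entering edge with positive `x^r`-value for some root `r ≠ v`, then the total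
`x`-value of edges incident to `v` exceeds `1`. -/
theorem terminal_with_foreign_incoming_is_high_degree [Fintype V] [DecidableEq V]
    (P : Finset (Finset V)) (hP : ∀ p ∈ P, p.card = 2)
    (x : V → V → V → ℝ) (z : V → Finset V → ℝ)
    (hfeas : ForestBCRFeasible P x z)
    (v : V) (hv : ∃ p ∈ P, v ∈ p)
    (r u : V) (hr : r ≠ v) (hu : u ≠ v) (hxpos : 0 < x r u v) :
    1 < ∑ r' : V, ((∑ w ∈ Finset.univ.erase v, x r' v w) +
      ∑ w ∈ Finset.univ.erase v, x r' w v) := by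
  obtain ⟨p, hp, hvp⟩ := hv
  have hcard : 1 < p.card := by rw [hP p hp]; norm_num
  calc (1 : ℝ) = ∑ r' : V, z r' p := (hfeas.2.2.1 p hp).symm
    _ < ∑ r' : V, (outFlow x r' v + inFlow x r' v) :=
      sum_lt_sum (fun r' _ => hfeas.le_outFlow_add_inFlow hp hcard hvp r')
        ⟨r, mem_univ r, (lt_add_of_pos_right _ hxpos).trans_le
          (hfeas.add_le_outFlow_add_inFlow hp hr hu hvp)⟩
end
end

section
/- Let (x,z) be a feasible solution to Forest-BCR and let v be a terminal, i.e., v ∈ P for some P ∈ 𝒫. Then ∑_{r∈V} ( ∑_{e∈δ⁺({v})} x^{r}_e + ∑_{e∈δ⁻({v})} x^{r}_e ) ≥ 1. -/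
open Finset

noncomputable section

variable {V : Type*}

section Cuts

variable [Fintype V] [DecidableEq V] {M : Type*} [AddCommMonoid M]

theorem sum_cut_singleton (f : V → V → M) (v : V) :
    ∑ u ∈ {v}, ∑ w ∈ {v}ᶜ, f u w = ∑ w ∈ univ.erase v, f v w := by
  rw [sum_singleton, compl_singleton]

theorem sum_cut_compl_singleton (f : V → V → M) (v : V) :
    ∑ u ∈ {v}ᶜ, ∑ w ∈ ({v}ᶜ : Finset V)ᶜ, f u w = ∑ u ∈ univ.erase v, f u v := by
  rw [compl_compl, compl_singleton]
  exact sum_congr rfl fun u _ => sum_singleton _ _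

end Cuts

namespace ForestBCRFeasible

variable [Fintype V] [DecidableEq V] {P : Finset (Finset V)}
  {x : V → V → V → ℝ} {z : V → Finset V → ℝ}

theorem z_le_outDegree (h : ForestBCRFeasible P x z) {p : Finset V} (hp : p ∈ P)
    {r v : V} (hr : r ≠ v) (hv : v ∈ p) :
    z r p ≤ ∑ w ∈ univ.erase v, x r v w := by
  have hcut := h.2.2.2 r p hp {v} (by simpa using hr)
    ⟨v, mem_inter.2 ⟨hv, mem_singleton_self v⟩⟩
  rwa [sum_cut_singleton] at hcut

theorem z_le_inDegree (h : ForestBCRFeasible P x z) {p : Finset V} (hp : p ∈ P)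
    {r w : V} (hw : w ∈ p) (hwr : w ≠ r) :
    z r p ≤ ∑ u ∈ univ.erase r, x r u r := by
  have hcut := h.2.2.2 r p hp {r}ᶜ (by simp) ⟨w, mem_inter.2 ⟨hw, by simpa using hwr⟩⟩
  rwa [sum_cut_compl_singleton] at hcut

theorem outDegree_nonneg (h : ForestBCRFeasible P x z) (r v : V) :
    0 ≤ ∑ w ∈ univ.erase v, x r v w :=
  sum_nonneg fun _ hw => h.1 r v _ (ne_of_mem_erase hw).symm

theorem inDegree_nonneg (h : ForestBCRFeasible P x z) (r v : V) :
    0 ≤ ∑ u ∈ univ.erase v, x r u v :=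
  sum_nonneg fun _ hu => h.1 r _ v (ne_of_mem_erase hu)

/-- For the root `r = v` the cut `{v}` is not admissible; the cut `V ∖ {v}` is, thanks to the
second element of the pair. -/
theorem z_le_degree (h : ForestBCRFeasible P x z) {p : Finset V} (hp : p ∈ P)
    (hcard : 1 < p.card) {v : V} (hv : v ∈ p) (r : V) :
    z r p ≤ (∑ w ∈ univ.erase v, x r v w) + ∑ w ∈ univ.erase v, x r w v := by
  by_cases hr : r = v
  · subst hr
    obtain ⟨w, hw, hwr⟩ := exists_mem_ne hcard r
    exact le_add_of_nonneg_of_le (h.outDegree_nonneg r r) (h.z_le_inDegree hp hw hwr)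
  · exact le_add_of_le_of_nonneg (h.z_le_outDegree hp hr hv) (h.inDegree_nonneg r v)

end ForestBCRFeasible

/-- In a feasible Forest-BCR solution, the total `x`-value of edges
incident to any terminal `v` is at least `1`. -/
theorem terminal_degree_at_least_one [Fintype V] [DecidableEq V]
    (P : Finset (Finset V)) (hP : ∀ p ∈ P, p.card = 2)
    (x : V → V → V → ℝ) (z : V → Finset V → ℝ)
    (hfeas : ForestBCRFeasible P x z)
    (v : V) (hv : ∃ p ∈ P, v ∈ p) :
    1 ≤ ∑ r : V, ((∑ w ∈ Finset.univ.erase v, x r v w) +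
      ∑ w ∈ Finset.univ.erase v, x r w v) := by
  obtain ⟨p, hp, hvp⟩ := hv
  calc 1 = ∑ r : V, z r p := (hfeas.2.2.1 p hp).symm
    _ ≤ _ := sum_le_sum fun r _ =>
      hfeas.z_le_degree hp (by rw [hP p hp]; norm_num) hvp r
end
end
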